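/- arXiv:0906.5458 — 7 statements merged into one kernel-verified Lean document; each statement's English description precedes it below -/
import Mathlib

section
/- Let k ≥ 1 be an integer, let a < b be real numbers, and let x be a continuously differentiable real-valued function on [a, b] with x(a) = 0 and x(b) = 0. Then ∫_a^b (x'(t))^{2k} dt ≥ (1/((b-a)^{2k} · I(k))) · ∫_a^b (x(t))^{2k} dt, where I(k) := ∫_0^1 dt/(t^{1-2k} + (1-t)^{1-2k}). -/
open MeasureTheory intervalIntegral Set

lemma jensen_pow (n : ℕ) (hn : Even n) (hn1 : 1 ≤ n) (c d : ℝ) (hcd : c < d) (f : ℝ → ℝ)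
    (hf : IntervalIntegrable f volume c d)
    (hfn : IntervalIntegrable (fun s => f s ^ n) volume c d) :
    (∫ s in c..d, f s) ^ n ≤ (d - c) ^ (n - 1) * ∫ s in c..d, f s ^ n := by
  set μ := volume.restrict (Ioc c d) with hμ
  have hμuniv : μ univ = ENNReal.ofReal (d - c) := by
    simp [hμ, Real.volume_Ioc]
  have hfin : IsFiniteMeasure μ := ⟨by simp [hμuniv]⟩
  have hne : NeZero μ := ⟨by
    intro h
    rw [h] at hμuniv
    simp at hμuniv
    linarith⟩
  have hconv : ConvexOn ℝ univ (fun y : ℝ => y ^ n) := hn.convexOn_pow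
  have hJ := hconv.map_average_le (by fun_prop) isClosed_univ
    (Filter.Eventually.of_forall fun _ => mem_univ _)
    (hf.1) (by exact hfn.1)
  have havg : ∀ g : ℝ → ℝ, (⨍ s, g s ∂μ) = (d - c)⁻¹ * ∫ s in c..d, g s := by
    intro g
    rw [average_eq, measureReal_def, hμuniv, ENNReal.toReal_ofReal (by linarith), smul_eq_mul,
      intervalIntegral.integral_of_le hcd.le]
  rw [havg, havg] at hJ
  have h1 : (0:ℝ) < d - c := by linarith
  have h2 : ((d - c)⁻¹) ^ n * (∫ s in c..d, f s) ^ n ≤ (d - c)⁻¹ * ∫ s in c..d, f s ^ n := by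
    calc ((d-c)⁻¹)^n * (∫ s in c..d, f s)^n = ((d-c)⁻¹ * ∫ s in c..d, f s)^n := (mul_pow _ _ _).symm
    _ ≤ (d - c)⁻¹ * ∫ s in c..d, f s ^ n := hJ
  have hne' : (d - c) ≠ 0 := ne_of_gt h1
  have h3 := mul_le_mul_of_nonneg_left h2 (pow_nonneg h1.le n)
  have hnn : n = (n - 1) + 1 := (Nat.succ_pred_eq_of_pos hn1).symm
  calc (∫ s in c..d, f s)^n = (d-c)^n * (((d-c)⁻¹)^n * (∫ s in c..d, f s)^n) := by
        rw [← mul_assoc, ← mul_pow, mul_inv_cancel₀ hne', one_pow, one_mul]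
  _ ≤ (d-c)^n * ((d-c)⁻¹ * ∫ s in c..d, f s ^ n) := h3
  _ = (d-c)^(n-1) * ∫ s in c..d, f s ^ n := by
        rw [hnn, pow_succ]
        field_simp
        ring_nf
        rw [Nat.add_sub_cancel_left]

/-- Brnetić–Pečarić Wirtinger-type inequality on an interval `[a, b]`. -/
theorem wirtinger_brnetic_pecaric (k : ℕ) (hk : 1 ≤ k)
    (a b : ℝ) (hab : a < b) (x x' : ℝ → ℝ)
    (hderiv : ∀ t ∈ Set.Icc a b, HasDerivWithinAt x (x' t) (Set.Icc a b) t)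
    (hcont : ContinuousOn x' (Set.Icc a b))
    (hxa : x a = 0) (hxb : x b = 0) :
    (1 / ((b - a) ^ (2 * k) *
        ∫ t in (0:ℝ)..1, 1 / (t ^ ((1:ℝ) - 2 * k) + (1 - t) ^ ((1:ℝ) - 2 * k)))) *
      ∫ t in a..b, (x t) ^ (2 * k) ≤ ∫ t in a..b, (x' t) ^ (2 * k) := by
  set e : ℝ := (1:ℝ) - 2 * k with he
  have he_neg : e ≤ 0 := by
    have : (1:ℝ) ≤ k := by exact_mod_cast hk
    simp only [he]; linarith
  have he_ne : e ≠ 0 := by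
    have : (1:ℝ) ≤ k := by exact_mod_cast hk
    simp only [he]; intro h; linarith
  have hne_cast : (((2 * k - 1 : ℕ)):ℝ) = 2 * (k:ℝ) - 1 := by
    have : 1 ≤ 2 * k := by omega
    push_cast [Nat.cast_sub this]
    ring
  have he_eq : e = -(((2 * k - 1 : ℕ)):ℝ) := by rw [hne_cast]; simp only [he]; ring
  have hn : Even (2 * k) := even_two_mul k
  have hn1 : 1 ≤ 2 * k := by omega
  have hxc : ContinuousOn x (Icc a b) := fun t ht => (hderiv t ht).continuousWithinAt
  have hder' : ∀ t ∈ Ioo a b, HasDerivWithinAt x (x' t) (Ioi t) t := by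
    intro t ht
    refine (hderiv t (Ioo_subset_Icc_self ht)).mono_of_mem_nhdsWithin ?_
    exact Filter.mem_of_superset (Ioc_mem_nhdsGT_of_mem ⟨le_refl t, ht.2⟩)
      (fun s hs => ⟨ht.1.le.trans hs.1.le, hs.2⟩)
  -- FTC on subintervals
  have ftc_left : ∀ t ∈ Icc a b, (∫ s in a..t, x' s) = x t := by
    intro t ht
    have h := integral_eq_sub_of_hasDeriv_right_of_le ht.1
      (hxc.mono (Icc_subset_Icc_right ht.2))
      (fun s hs => hder' s ⟨hs.1, hs.2.trans_le ht.2⟩)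
      ((hcont.mono (Icc_subset_Icc_right ht.2)).intervalIntegrable_of_Icc ht.1)
    rw [h, hxa, sub_zero]
  have ftc_right : ∀ t ∈ Icc a b, (∫ s in t..b, x' s) = - x t := by
    intro t ht
    have h := integral_eq_sub_of_hasDeriv_right_of_le ht.2
      (hxc.mono (Icc_subset_Icc_left ht.1))
      (fun s hs => hder' s ⟨ht.1.trans_lt hs.1, hs.2⟩)
      ((hcont.mono (Icc_subset_Icc_left ht.1)).intervalIntegrable_of_Icc ht.2)
    rw [h, hxb, zero_sub]
  have hcpow : ContinuousOn (fun s => x' s ^ (2 * k)) (Icc a b) := hcont.pow _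
  set J := ∫ t in a..b, x' t ^ (2 * k) with hJdef
  have hJ0 : 0 ≤ J := by
    apply intervalIntegral.integral_nonneg hab.le
    intro u _
    exact hn.pow_nonneg _
  -- key pointwise bound
  have key : ∀ t ∈ Ioo a b, x t ^ (2 * k) * ((t - a) ^ e + (b - t) ^ e) ≤ J := by
    intro t ht
    have hta : 0 < t - a := by linarith [ht.1]
    have hbt : 0 < b - t := by linarith [ht.2]
    have htmem : t ∈ Icc a b := Ioo_subset_Icc_self ht
    have hintA : IntervalIntegrable (fun s => x' s ^ (2*k)) volume a t :=
      (hcpow.mono (Icc_subset_Icc_right htmem.2)).intervalIntegrable_of_Icc htmem.1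
    have hintB : IntervalIntegrable (fun s => x' s ^ (2*k)) volume t b :=
      (hcpow.mono (Icc_subset_Icc_left htmem.1)).intervalIntegrable_of_Icc htmem.2
    have hA : x t ^ (2*k) ≤ (t - a) ^ (2*k - 1) * ∫ s in a..t, x' s ^ (2*k) := by
      have := jensen_pow (2*k) hn hn1 a t ht.1 x'
        ((hcont.mono (Icc_subset_Icc_right htmem.2)).intervalIntegrable_of_Icc htmem.1) hintA
      rwa [ftc_left t htmem] at this
    have hB : x t ^ (2*k) ≤ (b - t) ^ (2*k - 1) * ∫ s in t..b, x' s ^ (2*k) := by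
      have := jensen_pow (2*k) hn hn1 t b ht.2 x'
        ((hcont.mono (Icc_subset_Icc_left htmem.1)).intervalIntegrable_of_Icc htmem.2) hintB
      rwa [ftc_right t htmem, hn.neg_pow] at this
    -- convert rpow to pow inverses
    have hrpA : (t - a) ^ e = ((t - a) ^ (2*k - 1))⁻¹ := by
      rw [he_eq, Real.rpow_neg hta.le, Real.rpow_natCast]
    have hrpB : (b - t) ^ e = ((b - t) ^ (2*k - 1))⁻¹ := by
      rw [he_eq, Real.rpow_neg hbt.le, Real.rpow_natCast]
    have hpA : (0:ℝ) < (t - a) ^ (2*k - 1) := pow_pos hta _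
    have hpB : (0:ℝ) < (b - t) ^ (2*k - 1) := pow_pos hbt _
    have hA' : x t ^ (2*k) * (t - a) ^ e ≤ ∫ s in a..t, x' s ^ (2*k) := by
      rw [hrpA]
      have h := mul_le_mul_of_nonneg_right hA (inv_nonneg.mpr hpA.le)
      rwa [mul_comm ((t-a)^(2*k-1)) _, mul_assoc, mul_inv_cancel₀ (ne_of_gt hpA), mul_one] at h
    have hB' : x t ^ (2*k) * (b - t) ^ e ≤ ∫ s in t..b, x' s ^ (2*k) := by
      rw [hrpB]
      have h := mul_le_mul_of_nonneg_right hB (inv_nonneg.mpr hpB.le)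
      rwa [mul_comm ((b-t)^(2*k-1)) _, mul_assoc, mul_inv_cancel₀ (ne_of_gt hpB), mul_one] at h
    calc x t ^ (2*k) * ((t - a) ^ e + (b - t) ^ e)
        = x t ^ (2*k) * (t - a) ^ e + x t ^ (2*k) * (b - t) ^ e := mul_add _ _ _
      _ ≤ (∫ s in a..t, x' s ^ (2*k)) + ∫ s in t..b, x' s ^ (2*k) := add_le_add hA' hB'
      _ = J := integral_add_adjacent_intervals hintA hintB
  set g : ℝ → ℝ := fun t => 1 / ((t - a) ^ e + (b - t) ^ e) with hgdef
  have hg_nonneg : ∀ t ∈ Icc a b, 0 ≤ g t := fun t ht =>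
    div_nonneg zero_le_one (add_nonneg (Real.rpow_nonneg (by linarith [ht.1]) _)
      (Real.rpow_nonneg (by linarith [ht.2]) _))
  have key2 : ∀ t ∈ Icc a b, x t ^ (2 * k) ≤ J * g t := by
    intro t ht
    rcases eq_or_lt_of_le ht.1 with h | h
    · rw [← h, hxa, zero_pow (by omega : 2 * k ≠ 0)]
      exact mul_nonneg hJ0 (hg_nonneg a ⟨le_refl a, hab.le⟩)
    rcases eq_or_lt_of_le ht.2 with h2 | h2
    · rw [h2, hxb, zero_pow (by omega : 2 * k ≠ 0)]
      exact mul_nonneg hJ0 (hg_nonneg b ⟨hab.le, le_refl b⟩)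
    · have hD : 0 < (t - a) ^ e + (b - t) ^ e :=
        add_pos_of_pos_of_nonneg (Real.rpow_pos_of_pos (by linarith) _)
          (Real.rpow_nonneg (by linarith) _)
      have hkey := key t ⟨h, h2⟩
      have : x t ^ (2 * k) ≤ J / ((t - a) ^ e + (b - t) ^ e) := by
        rw [le_div_iff₀ hD]; exact hkey
      simpa [hgdef, mul_one_div, div_eq_mul_inv] using this
  -- integrability of g
  have hba : (0:ℝ) < b - a := by linarith
  have hgcont : ContinuousOn g (Ioo a b) := by
    apply ContinuousOn.div continuousOn_const
    · apply ContinuousOn.add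
      · exact (continuousOn_id.sub continuousOn_const).rpow_const
          (fun t ht => Or.inl (ne_of_gt (by show 0 < t - a; linarith [ht.1])))
      · exact (continuousOn_const.sub continuousOn_id).rpow_const
          (fun t ht => Or.inl (ne_of_gt (by show 0 < b - t; linarith [ht.2])))
    · intro t ht
      exact ne_of_gt (add_pos_of_pos_of_nonneg (Real.rpow_pos_of_pos (by linarith [ht.1]) _)
        (Real.rpow_nonneg (by linarith [ht.2]) _))
  have hgmeas : AEStronglyMeasurable g (volume.restrict (Ioo a b)) :=
    hgcont.aestronglyMeasurable measurableSet_Ioo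
  have hbound : ∀ t ∈ Ioo a b, ‖g t‖ ≤ (b - a) ^ (-e) := by
    intro t ht
    have hta : 0 < t - a := by linarith [ht.1]
    have h1 : (b - a) ^ e ≤ (t - a) ^ e :=
      Real.rpow_le_rpow_of_nonpos hta (by linarith [ht.2]) he_neg
    have h2 : (b - a) ^ e ≤ (t - a) ^ e + (b - t) ^ e :=
      le_add_of_le_of_nonneg h1 (Real.rpow_nonneg (by linarith [ht.2]) _)
    have hbae : (0:ℝ) < (b - a) ^ e := Real.rpow_pos_of_pos hba _
    have : g t ≤ ((b - a) ^ e)⁻¹ := by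
      simp only [hgdef, one_div]
      exact inv_anti₀ hbae h2
    rw [Real.norm_eq_abs, abs_of_nonneg (hg_nonneg t (Ioo_subset_Icc_self ht)),
      Real.rpow_neg hba.le]
    exact this
  have hgint_Ioo : IntegrableOn g (Ioo a b) :=
    ⟨hgmeas, HasFiniteIntegral.restrict_of_bounded (C := (b - a) ^ (-e))
      (by rw [Real.volume_Ioo]; exact ENNReal.ofReal_lt_top)
      ((ae_restrict_iff' measurableSet_Ioo).mpr (Filter.Eventually.of_forall hbound))⟩
  have hgint : IntervalIntegrable g volume a b :=
    (intervalIntegrable_iff_integrableOn_Ioc_of_le hab.le).mpr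
      (Iff.mpr integrableOn_Ioc_iff_integrableOn_Ioo hgint_Ioo)
  have hxint : IntervalIntegrable (fun t => x t ^ (2 * k)) volume a b :=
    (hxc.pow _).intervalIntegrable_of_Icc hab.le
  have hmain : (∫ t in a..b, x t ^ (2 * k)) ≤ J * ∫ t in a..b, g t := by
    have h := intervalIntegral.integral_mono_on hab.le hxint (hgint.const_mul J) key2
    rwa [intervalIntegral.integral_const_mul] at h
  -- substitution t = (b-a)*s + a
  set I := ∫ s in (0:ℝ)..1, 1 / (s ^ e + (1 - s) ^ e) with hIdef
  have hsub : (∫ t in a..b, g t) = (b - a) ^ (2 * k) * I := by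
    have h1 : (∫ s in (0:ℝ)..1, g ((b - a) * s + a))
        = (b - a)⁻¹ • ∫ t in ((b-a) * 0 + a)..((b-a) * 1 + a), g t :=
      intervalIntegral.integral_comp_mul_add g (ne_of_gt hba) a
    have h2 : ((b-a) * 0 + a) = a := by ring
    have h3 : ((b-a) * 1 + a) = b := by ring
    rw [h2, h3, smul_eq_mul] at h1
    have h4 : (∫ s in (0:ℝ)..1, g ((b - a) * s + a))
        = (b - a) ^ (-e) * I := by
      rw [hIdef, ← intervalIntegral.integral_const_mul]
      apply intervalIntegral.integral_congr
      intro s hs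
      rw [uIcc_of_le zero_le_one] at hs
      have hs0 : (0:ℝ) ≤ s := hs.1
      have hs1 : (0:ℝ) ≤ 1 - s := by linarith [hs.2]
      have e1 : (b - a) * s + a - a = (b - a) * s := by ring
      have e2 : b - ((b - a) * s + a) = (b - a) * (1 - s) := by ring
      rw [hgdef]
      simp only []
      rw [e1, e2, Real.mul_rpow hba.le hs0, Real.mul_rpow hba.le hs1, ← mul_add, one_div,
        mul_inv, ← Real.rpow_neg hba.le, ← one_div]
    have h5 : (∫ t in a..b, g t) = (b - a) * ((b - a) ^ (-e) * I) := by
      rw [← h4, h1, ← mul_assoc, mul_inv_cancel₀ (ne_of_gt hba), one_mul]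
    rw [h5, ← mul_assoc]
    congr 1
    have : -e = ((2 * k - 1 : ℕ) : ℝ) := by rw [he_eq]; ring
    rw [this, Real.rpow_natCast, ← pow_succ']
    congr 1
    omega
  -- assembly
  have hI0 : 0 ≤ I := by
    apply intervalIntegral.integral_nonneg zero_le_one
    intro u hu
    exact div_nonneg zero_le_one (add_nonneg (Real.rpow_nonneg hu.1 _)
      (Real.rpow_nonneg (by linarith [hu.2]) _))
  have hfinal : (∫ t in a..b, x t ^ (2 * k)) ≤ ((b - a) ^ (2 * k) * I) * J := by
    calc (∫ t in a..b, x t ^ (2 * k)) ≤ J * ∫ t in a..b, g t := hmain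
      _ = J * ((b - a) ^ (2 * k) * I) := by rw [hsub]
      _ = ((b - a) ^ (2 * k) * I) * J := mul_comm _ _
  rcases hI0.eq_or_lt with h | h
  · rw [← h, mul_zero, div_zero, zero_mul]
    exact hJ0
  · have hD : 0 < (b - a) ^ (2 * k) * I := mul_pos (pow_pos hba _) h
    rw [one_div, inv_mul_le_iff₀ hD]
    exact hfinal
end

section
/- Let k ≥ 1 be an integer, let a < b be real numbers, and let x be a continuously differentiable real-valued function on [a, b] with x(a) = 0 and x(b) = 0. Then ∫_a^b (x'(t))^{2k} dt ≥ (2 · (2k)! / ((b-a)^{2k} · Γ((2k+1)/2)^2)) · ∫_a^b (x(t))^{2k} dt, where Γ denotes the Gamma function. -/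
open MeasureTheory intervalIntegral Set Real

lemma jensen_aux (m : ℕ) (hm : Even m) (hm0 : m ≠ 0) (c d : ℝ) (hcd : c ≤ d)
    (f : ℝ → ℝ) (hf : ContinuousOn f (Set.Icc c d)) :
    (∫ s in c..d, f s) ^ m ≤ (d - c) ^ (m - 1) * ∫ s in c..d, (f s) ^ m := by
  rcases eq_or_lt_of_le hcd with rfl | hlt
  · simp [zero_pow hm0]
  have hdc : 0 < d - c := sub_pos.2 hlt
  set μ := volume.restrict (Set.Ioc c d) with hμ
  have hμuniv : μ Set.univ = ENNReal.ofReal (d - c) := by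
    simp [hμ, Real.volume_Ioc]
  haveI : IsFiniteMeasure μ := ⟨by rw [hμuniv]; exact ENNReal.ofReal_lt_top⟩
  haveI : NeZero μ := ⟨by
    rw [← MeasureTheory.Measure.measure_univ_ne_zero, hμuniv]
    simpa [ENNReal.ofReal_eq_zero, not_le] using hlt⟩
  have hfi : Integrable f μ := (hf.integrableOn_Icc).mono_set Set.Ioc_subset_Icc_self
  have hgi : Integrable (fun s => f s ^ m) μ :=
    ((hf.pow m).integrableOn_Icc).mono_set Set.Ioc_subset_Icc_self
  have hJ := (Even.convexOn_pow hm).map_average_le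
    (continuousOn_pow m) isClosed_univ
    (Filter.Eventually.of_forall fun _ => Set.mem_univ _) hfi hgi
  rw [MeasureTheory.average_eq, MeasureTheory.average_eq, MeasureTheory.measureReal_def, hμuniv,
    ENNReal.toReal_ofReal hdc.le] at hJ
  have h1 : ∫ s, f s ∂μ = ∫ s in c..d, f s := by
    rw [intervalIntegral.integral_of_le hcd]
  have h2 : ∫ s, f s ^ m ∂μ = ∫ s in c..d, (f s) ^ m := by
    rw [intervalIntegral.integral_of_le hcd]
  rw [h1, h2, smul_eq_mul, smul_eq_mul] at hJ
  have hpow : ((d - c)⁻¹ * ∫ s in c..d, f s) ^ m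
      = (d - c)⁻¹ ^ m * (∫ s in c..d, f s) ^ m := by ring
  rw [hpow] at hJ
  -- multiply both sides by (d-c)^m
  have := mul_le_mul_of_nonneg_left hJ (le_of_lt (pow_pos hdc m))
  calc (∫ s in c..d, f s) ^ m
      = (d - c) ^ m * ((d - c)⁻¹ ^ m * (∫ s in c..d, f s) ^ m) := by
        rw [← mul_assoc, ← mul_pow, mul_inv_cancel₀ hdc.ne', one_pow, one_mul]
    _ ≤ (d - c) ^ m * ((d - c)⁻¹ * ∫ s in c..d, (f s) ^ m) := this
    _ = (d - c) ^ (m - 1) * ∫ s in c..d, (f s) ^ m := by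
        obtain ⟨m, rfl⟩ := Nat.exists_eq_succ_of_ne_zero hm0
        rw [pow_succ]
        field_simp
        rw [Nat.succ_sub_one, mul_comm]

lemma beta_aux (k : ℕ) (hk : 1 ≤ k) :
    ∫ s in (0:ℝ)..1, s ^ ((2*(k:ℝ)+1)/2 - 1) * (1-s) ^ ((2*(k:ℝ)+1)/2 - 1)
      = Real.Gamma ((2*(k:ℝ)+1)/2) ^ 2 / (Nat.factorial (2*k)) := by
  set u : ℝ := (2*(k:ℝ)+1)/2 with hu_def
  have hu : 0 < u := by positivity
  have hre : 0 < ((u:ℂ)).re := by simpa using hu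
  have hβ := Complex.Gamma_mul_Gamma_eq_betaIntegral hre hre
  have huu : (u:ℂ) + (u:ℂ) = ((2*(k:ℝ)+1 : ℝ) : ℂ) := by
    push_cast [hu_def]; ring
  have hΓ2 : Complex.Gamma ((u:ℂ) + (u:ℂ)) = ((Nat.factorial (2*k) : ℝ) : ℂ) := by
    rw [huu, Complex.Gamma_ofReal]
    have : (2*(k:ℝ)+1 : ℝ) = ((2*k : ℕ) : ℝ) + 1 := by push_cast; ring
    rw [this, Real.Gamma_nat_eq_factorial]
  have hint : Complex.betaIntegral (u:ℂ) (u:ℂ)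
      = ((∫ s in (0:ℝ)..1, s ^ (u - 1) * (1-s) ^ (u - 1) : ℝ) : ℂ) := by
    rw [Complex.betaIntegral, ← intervalIntegral.integral_ofReal]
    refine intervalIntegral.integral_congr fun s hs => ?_
    rw [Set.uIcc_of_le (by norm_num : (0:ℝ) ≤ 1)] at hs
    push_cast
    rw [Complex.ofReal_cpow hs.1, Complex.ofReal_cpow (by linarith [hs.2] : (0:ℝ) ≤ 1 - s)]
    push_cast
    ring
  rw [hΓ2, hint, Complex.Gamma_ofReal, ← Complex.ofReal_mul, ← Complex.ofReal_mul] at hβ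
  have := Complex.ofReal_inj.mp hβ
  have hfac : (Nat.factorial (2*k) : ℝ) ≠ 0 := by positivity
  field_simp
  rw [sq]
  linarith [this]

/-- Agarwal–Pang Wirtinger-type inequality on an interval `[a, b]`. -/
theorem wirtinger_agarwal_pang (k : ℕ) (hk : 1 ≤ k)
    (a b : ℝ) (hab : a < b) (x x' : ℝ → ℝ)
    (hderiv : ∀ t ∈ Set.Icc a b, HasDerivWithinAt x (x' t) (Set.Icc a b) t)
    (hcont : ContinuousOn x' (Set.Icc a b))
    (hxa : x a = 0) (hxb : x b = 0) :
    (2 * (Nat.factorial (2 * k)) /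
        ((b - a) ^ (2 * k) * (Real.Gamma ((2 * k + 1) / 2)) ^ 2)) *
      ∫ t in a..b, (x t) ^ (2 * k) ≤ ∫ t in a..b, (x' t) ^ (2 * k) := by
  have hxcont : ContinuousOn x (Set.Icc a b) := fun t ht => (hderiv t ht).continuousWithinAt
  set n := 2 * k with hn_def
  have hn_ev : Even n := even_two_mul k
  have hn0 : n ≠ 0 := by omega
  have hba : (0:ℝ) < b - a := sub_pos.2 hab
  set r : ℝ := (2*(k:ℝ)+1)/2 - 1 with hr_def
  have hk1 : (1:ℝ) ≤ (k:ℝ) := by exact_mod_cast hk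
  have hr0 : 0 ≤ r := by rw [hr_def]; linarith
  set K : ℝ := ∫ t in a..b, (x' t) ^ n with hK_def
  -- FTC
  have hFTC : ∀ t ∈ Set.Icc a b, (∫ s in a..t, x' s) = x t ∧ (∫ s in t..b, x' s) = - x t := by
    intro t ht
    constructor
    · rw [intervalIntegral.integral_eq_sub_of_hasDeriv_right_of_le ht.1
        (hxcont.mono (Set.Icc_subset_Icc le_rfl ht.2))
        (fun s hs => ((hderiv s ⟨hs.1.le, hs.2.le.trans ht.2⟩).hasDerivAt
          (Icc_mem_nhds hs.1 (hs.2.trans_le ht.2))).hasDerivWithinAt)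
        ((hcont.mono (Set.Icc_subset_Icc le_rfl ht.2)).intervalIntegrable_of_Icc ht.1)]
      rw [hxa, sub_zero]
    · rw [intervalIntegral.integral_eq_sub_of_hasDeriv_right_of_le ht.2
        (hxcont.mono (Set.Icc_subset_Icc ht.1 le_rfl))
        (fun s hs => ((hderiv s ⟨ht.1.trans hs.1.le, hs.2.le⟩).hasDerivAt
          (Icc_mem_nhds (ht.1.trans_lt hs.1) hs.2)).hasDerivWithinAt)
        ((hcont.mono (Set.Icc_subset_Icc ht.1 le_rfl)).intervalIntegrable_of_Icc ht.2)]
      rw [hxb, zero_sub]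
  have hintn : ∀ c d : ℝ, a ≤ c → c ≤ d → d ≤ b →
      IntervalIntegrable (fun s => (x' s) ^ n) volume c d := by
    intro c d h1 h2 h3
    exact ((hcont.mono (Set.Icc_subset_Icc h1 h3)).pow n).intervalIntegrable_of_Icc h2
  -- pointwise bound
  have hpt : ∀ t ∈ Set.Icc a b,
      (x t) ^ n ≤ ((t - a) * (b - t)) ^ r * (K / 2) := by
    intro t ht
    have hta : 0 ≤ t - a := sub_nonneg.2 ht.1
    have hbt : 0 ≤ b - t := sub_nonneg.2 ht.2
    set A : ℝ := ∫ s in a..t, (x' s) ^ n with hA_def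
    set B : ℝ := ∫ s in t..b, (x' s) ^ n with hB_def
    have hAnn : 0 ≤ A := intervalIntegral.integral_nonneg ht.1
      (fun s _ => hn_ev.pow_nonneg _)
    have hBnn : 0 ≤ B := intervalIntegral.integral_nonneg ht.2
      (fun s _ => hn_ev.pow_nonneg _)
    have hAB : A + B = K := by
      rw [hA_def, hB_def, hK_def]
      exact intervalIntegral.integral_add_adjacent_intervals
        (hintn a t le_rfl ht.1 ht.2) (hintn t b ht.1 ht.2 le_rfl)
    have h1 : (x t) ^ n ≤ (t - a) ^ (n - 1) * A := by
      rw [← (hFTC t ht).1]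
      exact jensen_aux n hn_ev hn0 a t ht.1 x' (hcont.mono (Set.Icc_subset_Icc le_rfl ht.2))
    have h2 : (x t) ^ n ≤ (b - t) ^ (n - 1) * B := by
      have := jensen_aux n hn_ev hn0 t b ht.2 x' (hcont.mono (Set.Icc_subset_Icc ht.1 le_rfl))
      rwa [(hFTC t ht).2, hn_ev.neg_pow] at this
    have hP : (0:ℝ) ≤ (t - a) ^ (n - 1) := pow_nonneg hta _
    have hQ : (0:ℝ) ≤ (b - t) ^ (n - 1) := pow_nonneg hbt _
    have hxn : (0:ℝ) ≤ (x t) ^ n := hn_ev.pow_nonneg _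
    have hsq : ((x t) ^ n) ^ 2 ≤ ((t - a) ^ (n - 1) * (b - t) ^ (n - 1)) * ((A + B) / 2) ^ 2 := by
      nlinarith [mul_le_mul h1 h2 hxn (mul_nonneg hP hAnn), sq_nonneg (A - B),
        mul_nonneg hP hQ, mul_nonneg (mul_nonneg hP hQ) (sq_nonneg (A - B))]
    have h3 := Real.sqrt_le_sqrt hsq
    rw [Real.sqrt_sq hxn, Real.sqrt_mul (mul_nonneg hP hQ),
      Real.sqrt_sq (by positivity : (0:ℝ) ≤ (A + B) / 2)] at h3
    have hsqrt_eq : Real.sqrt ((t - a) ^ (n - 1) * (b - t) ^ (n - 1))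
        = ((t - a) * (b - t)) ^ r := by
      rw [← mul_pow, Real.sqrt_eq_rpow, ← Real.rpow_natCast ((t - a) * (b - t)) (n - 1),
        ← Real.rpow_mul (mul_nonneg hta hbt)]
      congr 1
      have hcast : ((n - 1 : ℕ) : ℝ) = 2 * (k:ℝ) - 1 := by
        have h1n : (1:ℕ) ≤ n := by omega
        rw [hn_def, Nat.cast_sub (by omega : 1 ≤ 2 * k)]; push_cast
        ring
      rw [hcast, hr_def]; ring
    rw [hsqrt_eq, hAB] at h3
    exact h3
  -- integrate
  have hIx : IntervalIntegrable (fun t => (x t) ^ n) volume a b :=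
    (hxcont.pow n).intervalIntegrable_of_Icc hab.le
  have hg_cont : Continuous (fun t : ℝ => ((t - a) * (b - t)) ^ r * (K / 2)) := by
    refine Continuous.mul ?_ continuous_const
    exact ((continuous_id.sub continuous_const).mul
      (continuous_const.sub continuous_id)).rpow_const (fun t => Or.inr hr0)
  have hmono := intervalIntegral.integral_mono_on hab.le hIx
    (hg_cont.intervalIntegrable a b) hpt
  rw [intervalIntegral.integral_mul_const] at hmono
  -- compute the beta-type integral
  have hbeta := beta_aux k hk
  have hI : (∫ t in a..b, ((t - a) * (b - t)) ^ r)
      = (b - a) ^ (2*k) * (Real.Gamma ((2*(k:ℝ)+1)/2) ^ 2 / (Nat.factorial (2*k))) := by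
    have hsub := intervalIntegral.integral_comp_mul_add
      (a := 0) (b := 1) (fun t => ((t - a) * (b - t)) ^ r) hba.ne' a
    simp only [mul_zero, zero_add, mul_one, sub_add_cancel, smul_eq_mul] at hsub
    have hleft : (∫ s in (0:ℝ)..1, (((b - a) * s + a - a) * (b - ((b - a) * s + a))) ^ r)
        = ((b - a) ^ 2) ^ r * ∫ s in (0:ℝ)..1, s ^ r * (1 - s) ^ r := by
      rw [← intervalIntegral.integral_const_mul]
      refine intervalIntegral.integral_congr fun s hs => ?_
      rw [Set.uIcc_of_le (by norm_num : (0:ℝ) ≤ 1)] at hs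
      have e : ((b - a) * s + a - a) * (b - ((b - a) * s + a))
          = ((b - a) ^ 2) * (s * (1 - s)) := by ring
      rw [e, Real.mul_rpow (by positivity) (mul_nonneg hs.1 (by linarith [hs.2])),
        Real.mul_rpow hs.1 (by linarith [hs.2] : (0:ℝ) ≤ 1 - s)]
    have hJ : (∫ s in (0:ℝ)..1, s ^ r * (1 - s) ^ r)
        = Real.Gamma ((2*(k:ℝ)+1)/2) ^ 2 / (Nat.factorial (2*k)) := by
      rw [hr_def]; exact hbeta
    rw [hleft, hJ] at hsub
    have e2 : (b - a) * ((b - a) ^ 2) ^ r = (b - a) ^ (2*k) := by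
      rw [← Real.rpow_natCast (b - a) 2, ← Real.rpow_mul hba.le,
        ← Real.rpow_natCast (b - a) (2*k)]
      nth_rewrite 1 [← Real.rpow_one (b - a)]
      rw [← Real.rpow_add hba]
      congr 1
      rw [hr_def]; push_cast; ring
    have : (∫ t in a..b, ((t - a) * (b - t)) ^ r)
        = (b - a) * (((b - a) ^ 2) ^ r
          * (Real.Gamma ((2*(k:ℝ)+1)/2) ^ 2 / (Nat.factorial (2*k)))) := by
      rw [hsub]; field_simp
    rw [this, ← mul_assoc, e2]
  rw [hI] at hmono
  have hΓ : 0 < Real.Gamma ((2*(k:ℝ)+1)/2) := Real.Gamma_pos_of_pos (by positivity)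
  have d1 : ((b - a) : ℝ) ^ (2*k) ≠ 0 := by positivity
  have d3 : ((Nat.factorial (2*k)) : ℝ) ≠ 0 := by positivity
  have hC : (0:ℝ) ≤ 2 * (Nat.factorial (2*k)) /
      ((b - a) ^ (2*k) * (Real.Gamma ((2*(k:ℝ)+1)/2)) ^ 2) := by positivity
  calc (2 * (Nat.factorial (2*k) : ℝ) /
        ((b - a) ^ (2*k) * (Real.Gamma ((2*(k:ℝ)+1)/2)) ^ 2)) * ∫ t in a..b, (x t) ^ n
      ≤ (2 * (Nat.factorial (2*k) : ℝ) /
        ((b - a) ^ (2*k) * (Real.Gamma ((2*(k:ℝ)+1)/2)) ^ 2)) *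
        ((b - a) ^ (2*k) * (Real.Gamma ((2*(k:ℝ)+1)/2) ^ 2 / (Nat.factorial (2*k))) * (K / 2)) :=
        mul_le_mul_of_nonneg_left hmono hC
    _ = K := by field_simp
end

section
/- Let k ≥ 1 be an integer, let L > 0, let Z be a continuously differentiable real-valued function, and let s_0 < s_1 < ... < s_N be real numbers with Z(s_i) = 0 for all 0 ≤ i ≤ N and s_{i+1} - s_i ≤ L for all 0 ≤ i < N. Then ∫_{s_0}^{s_N} (Z'(t))^{2k} dt ≥ (1/(L^{2k} · I(k))) · ∫_{s_0}^{s_N} (Z(t))^{2k} dt, where I(k) := ∫_0^1 dt/(t^{1-2k} + (1-t)^{1-2k}). -/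
open MeasureTheory intervalIntegral Set

/-- Jensen step: `(∫ f)^(2k) ≤ (c-a)^(2k-1) ∫ f^(2k)`. -/
lemma jensen_pow_integral (k : ℕ) (hk : 1 ≤ k) (f : ℝ → ℝ) (hf : Continuous f)
    (a c : ℝ) (hac : a < c) :
    (∫ x in a..c, f x) ^ (2*k) ≤ (c - a) ^ (2*k - 1) * ∫ x in a..c, f x ^ (2*k) := by
  set μ := volume.restrict (Ioc a c) with hμ
  haveI : IsFiniteMeasure μ := ⟨by
    rw [hμ, Measure.restrict_apply_univ, Real.volume_Ioc]; exact ENNReal.ofReal_lt_top⟩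
  haveI : NeZero μ := ⟨by
    rw [hμ]
    intro h
    have := congrArg (fun m : Measure ℝ => m univ) h
    simp only [Measure.restrict_apply_univ, Real.volume_Ioc, Measure.coe_zero,
      Pi.zero_apply, ENNReal.ofReal_eq_zero] at this
    linarith⟩
  have hconv : ConvexOn ℝ univ fun x : ℝ => x ^ (2*k) := (even_two_mul k).convexOn_pow
  have hJ := hconv.map_average_le (μ := μ) (f := f)
    ((continuous_pow _).continuousOn) isClosed_univ
    (Filter.Eventually.of_forall fun _ => mem_univ _)
    (hf.integrableOn_Ioc) ((hf.pow _).integrableOn_Ioc)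
  have hμuniv : (μ univ).toReal = c - a := by
    rw [hμ, Measure.restrict_apply_univ, Real.volume_Ioc, ENNReal.toReal_ofReal (by linarith)]
  rw [average_eq, average_eq, measureReal_def, hμuniv, smul_eq_mul, smul_eq_mul] at hJ
  have h1 : ∫ x, f x ∂μ = ∫ x in a..c, f x := (intervalIntegral.integral_of_le hac.le).symm
  have h2 : ∫ x, f x ^ (2*k) ∂μ = ∫ x in a..c, f x ^ (2*k) :=
    (intervalIntegral.integral_of_le hac.le).symm
  rw [h1, h2] at hJ
  set A := ∫ x in a..c, f x
  set B := ∫ x in a..c, f x ^ (2*k)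
  have hd : (0:ℝ) < c - a := by linarith
  have key : A ^ (2*k) = (c-a)^(2*k) * ((c-a)⁻¹ * A) ^ (2*k) := by
    rw [mul_pow, ← mul_pow]
    field_simp
    rw [div_pow, mul_div_cancel₀ _ (pow_ne_zero _ hd.ne')]
  rw [key]
  calc (c-a)^(2*k) * ((c-a)⁻¹ * A) ^ (2*k) ≤ (c-a)^(2*k) * ((c-a)⁻¹ * B) :=
        mul_le_mul_of_nonneg_left hJ (by positivity)
    _ = (c-a)^(2*k-1) * B := by
        rw [← mul_assoc]
        congr 1
        have h21 : (c-a)^(2*k) = (c-a)^(2*k-1)*(c-a) := by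
          rw [← pow_succ]; congr 1; omega
        rw [h21, mul_assoc, mul_inv_cancel₀ hd.ne', mul_one]

/-- One-sided pointwise bound from the left endpoint. -/
lemma left_bound (k : ℕ) (hk : 1 ≤ k) (Z Z' : ℝ → ℝ)
    (hderiv : ∀ t, HasDerivAt Z (Z' t) t) (hcont : Continuous Z')
    (a t : ℝ) (hat : a ≤ t) (hZa : Z a = 0) :
    Z t ^ (2*k) * (t - a) ^ ((1:ℝ) - 2*k) ≤ ∫ x in a..t, Z' x ^ (2*k) := by
  rcases eq_or_lt_of_le hat with h | h
  · subst h
    have h1k : (1:ℝ) ≤ (k:ℝ) := by exact_mod_cast hk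
    have hne : (1:ℝ) - 2*k ≠ 0 := by intro hc; linarith
    simp [zero_pow (by omega : 2*k ≠ 0), Real.zero_rpow hne]
  · have hftc : ∫ x in a..t, Z' x = Z t - Z a :=
      intervalIntegral.integral_eq_sub_of_hasDerivAt (fun x _ => hderiv x)
        (hcont.intervalIntegrable _ _)
    have hZt : Z t = ∫ x in a..t, Z' x := by rw [hftc, hZa, sub_zero]
    have hJ := jensen_pow_integral k hk Z' hcont a t h
    rw [← hZt] at hJ
    have hrpos : (0:ℝ) < t - a := by linarith
    have hre : (0:ℝ) ≤ (t - a) ^ ((1:ℝ) - 2*k) := Real.rpow_nonneg hrpos.le _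
    calc Z t ^ (2*k) * (t - a) ^ ((1:ℝ) - 2*k)
        ≤ ((t-a)^(2*k-1) * ∫ x in a..t, Z' x ^ (2*k)) * (t - a) ^ ((1:ℝ) - 2*k) :=
          mul_le_mul_of_nonneg_right hJ hre
      _ = ((t-a)^(2*k-1) * (t - a) ^ ((1:ℝ) - 2*k)) * ∫ x in a..t, Z' x ^ (2*k) := by ring
      _ = ∫ x in a..t, Z' x ^ (2*k) := by
          rw [← Real.rpow_natCast (t-a) (2*k-1), ← Real.rpow_add hrpos]
          have : ((2*k-1 : ℕ) : ℝ) + ((1:ℝ) - 2*k) = 0 := by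
            have h2 : ((2*k-1 : ℕ) : ℝ) = 2*(k:ℝ) - 1 := by
              push_cast [Nat.cast_sub (by omega : 1 ≤ 2*k)]; ring
            rw [h2]; ring
          rw [this, Real.rpow_zero, one_mul]

/-- One-sided pointwise bound from the right endpoint. -/
lemma right_bound (k : ℕ) (hk : 1 ≤ k) (Z Z' : ℝ → ℝ)
    (hderiv : ∀ t, HasDerivAt Z (Z' t) t) (hcont : Continuous Z')
    (t b : ℝ) (htb : t ≤ b) (hZb : Z b = 0) :
    Z t ^ (2*k) * (b - t) ^ ((1:ℝ) - 2*k) ≤ ∫ x in t..b, Z' x ^ (2*k) := by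
  rcases eq_or_lt_of_le htb with h | h
  · subst h
    simp [zero_pow (by omega : 2*k ≠ 0), hZb]
  · have hftc : ∫ x in t..b, Z' x = Z b - Z t :=
      intervalIntegral.integral_eq_sub_of_hasDerivAt (fun x _ => hderiv x)
        (hcont.intervalIntegrable _ _)
    have hZt : -Z t = ∫ x in t..b, Z' x := by rw [hftc, hZb, zero_sub]
    have hJ := jensen_pow_integral k hk Z' hcont t b h
    rw [← hZt] at hJ
    rw [(even_two_mul k).neg_pow (Z t)] at hJ
    have hrpos : (0:ℝ) < b - t := by linarith
    have hre : (0:ℝ) ≤ (b - t) ^ ((1:ℝ) - 2*k) := Real.rpow_nonneg hrpos.le _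
    calc Z t ^ (2*k) * (b - t) ^ ((1:ℝ) - 2*k)
        ≤ ((b-t)^(2*k-1) * ∫ x in t..b, Z' x ^ (2*k)) * (b - t) ^ ((1:ℝ) - 2*k) :=
          mul_le_mul_of_nonneg_right hJ hre
      _ = ((b-t)^(2*k-1) * (b - t) ^ ((1:ℝ) - 2*k)) * ∫ x in t..b, Z' x ^ (2*k) := by ring
      _ = ∫ x in t..b, Z' x ^ (2*k) := by
          rw [← Real.rpow_natCast (b-t) (2*k-1), ← Real.rpow_add hrpos]
          have : ((2*k-1 : ℕ) : ℝ) + ((1:ℝ) - 2*k) = 0 := by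
            have h2 : ((2*k-1 : ℕ) : ℝ) = 2*(k:ℝ) - 1 := by
              push_cast [Nat.cast_sub (by omega : 1 ≤ 2*k)]; ring
            rw [h2]; ring
          rw [this, Real.rpow_zero, one_mul]

/-- Lower bound for the denominator. -/
lemma denom_ge (k : ℕ) (hk : 1 ≤ k) (a b t : ℝ) (hab : a < b) (hta : a ≤ t) (htb : t ≤ b) :
    (b - a) ^ ((1:ℝ) - 2*k) ≤ (t - a) ^ ((1:ℝ) - 2*k) + (b - t) ^ ((1:ℝ) - 2*k) := by
  have h1k : (1:ℝ) ≤ (k:ℝ) := by exact_mod_cast hk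
  have he : (1:ℝ) - 2*k ≤ 0 := by linarith
  rcases eq_or_lt_of_le hta with h | h
  · subst h
    rw [sub_self, Real.zero_rpow (by intro hc; linarith), zero_add]
  · have h1 : (b - a) ^ ((1:ℝ) - 2*k) ≤ (t - a) ^ ((1:ℝ) - 2*k) :=
      Real.rpow_le_rpow_of_nonpos (by linarith) (by linarith) he
    have h2 : (0:ℝ) ≤ (b - t) ^ ((1:ℝ) - 2*k) := Real.rpow_nonneg (by linarith) _
    linarith

/-- Integrability of the weight function. -/
lemma weight_intervalIntegrable (k : ℕ) (hk : 1 ≤ k) (a b : ℝ) (hab : a < b) :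
    IntervalIntegrable
      (fun t => 1 / ((t - a) ^ ((1:ℝ) - 2*k) + (b - t) ^ ((1:ℝ) - 2*k))) volume a b := by
  have h1k : (1:ℝ) ≤ (k:ℝ) := by exact_mod_cast hk
  have hba : (0:ℝ) < (b - a) ^ ((1:ℝ) - 2*k) := Real.rpow_pos_of_pos (by linarith) _
  have hcont : ContinuousOn
      (fun t => 1 / ((t - a) ^ ((1:ℝ) - 2*k) + (b - t) ^ ((1:ℝ) - 2*k))) (Ioo a b) := by
    apply ContinuousOn.div continuousOn_const
    · apply ContinuousOn.add
      · exact ((continuous_id.sub continuous_const).continuousOn).rpow_const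
          (fun x hx => Or.inl (by have := hx.1; simp only [Pi.sub_apply, id]; intro hc; rw [sub_eq_zero] at hc; exact absurd hc.symm (ne_of_lt this)))
      · exact ((continuous_const.sub continuous_id).continuousOn).rpow_const
          (fun x hx => Or.inl (by have := hx.2; simp only [Pi.sub_apply, id]; intro hc; rw [sub_eq_zero] at hc; exact absurd hc (ne_of_gt this)))
    · intro x hx
      have := denom_ge k hk a b x hab hx.1.le hx.2.le
      exact ne_of_gt (lt_of_lt_of_le hba this)
  rw [intervalIntegrable_iff, uIoc_of_le hab.le]
  rw [integrableOn_Ioc_iff_integrableOn_Ioo]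
  refine ⟨hcont.aestronglyMeasurable measurableSet_Ioo,
    HasFiniteIntegral.restrict_of_bounded (C := ((b - a) ^ ((1:ℝ) - 2*k))⁻¹)
      measure_Ioo_lt_top ?_⟩
  filter_upwards [self_mem_ae_restrict measurableSet_Ioo] with x hx
  · have hD := denom_ge k hk a b x hab hx.1.le hx.2.le
    have hDpos : (0:ℝ) < (x - a) ^ ((1:ℝ) - 2*k) + (b - x) ^ ((1:ℝ) - 2*k) :=
      lt_of_lt_of_le hba hD
    rw [Real.norm_eq_abs, one_div, abs_of_nonneg (inv_nonneg.mpr hDpos.le)]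
    exact inv_anti₀ hba hD

/-- Change of variables for the weight integral. -/
lemma weight_integral_eq (k : ℕ) (hk : 1 ≤ k) (a b : ℝ) (hab : a < b) :
    ∫ t in a..b, 1 / ((t - a) ^ ((1:ℝ) - 2*k) + (b - t) ^ ((1:ℝ) - 2*k))
      = (b - a) ^ (2*k) *
        ∫ u in (0:ℝ)..1, 1 / (u ^ ((1:ℝ) - 2*k) + (1 - u) ^ ((1:ℝ) - 2*k)) := by
  have h1k : (1:ℝ) ≤ (k:ℝ) := by exact_mod_cast hk
  have hd : (0:ℝ) < b - a := by linarith
  set g : ℝ → ℝ := fun u => 1 / (u ^ ((1:ℝ) - 2*k) + (1 - u) ^ ((1:ℝ) - 2*k)) with hg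
  have hinv : ((b-a) ^ ((1:ℝ) - 2*k))⁻¹ = (b-a) ^ (2*k-1 : ℕ) := by
    rw [← Real.rpow_neg hd.le, ← Real.rpow_natCast (b-a) (2*k-1)]
    congr 1
    push_cast [Nat.cast_sub (by omega : 1 ≤ 2*k)]
    ring
  have hcongr : ∀ t ∈ uIcc a b,
      1 / ((t - a) ^ ((1:ℝ) - 2*k) + (b - t) ^ ((1:ℝ) - 2*k))
        = (b - a) ^ (2*k - 1 : ℕ) * g ((t - a) / (b - a)) := by
    intro t ht
    rw [uIcc_of_le hab.le] at ht
    have hu0 : (0:ℝ) ≤ (t - a) / (b - a) := div_nonneg (by linarith [ht.1]) hd.le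
    have hv0 : (0:ℝ) ≤ (b - t) / (b - a) := div_nonneg (by linarith [ht.2]) hd.le
    have h1u : 1 - (t - a) / (b - a) = (b - t) / (b - a) := by field_simp; ring
    have hta : t - a = (b - a) * ((t - a) / (b - a)) := by field_simp
    have hbt : b - t = (b - a) * ((b - t) / (b - a)) := by field_simp
    calc 1 / ((t - a) ^ ((1:ℝ) - 2*k) + (b - t) ^ ((1:ℝ) - 2*k))
        = 1 / ((b-a) ^ ((1:ℝ) - 2*k) *
            (((t-a)/(b-a)) ^ ((1:ℝ) - 2*k) + ((b-t)/(b-a)) ^ ((1:ℝ) - 2*k))) := by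
          rw [mul_add, ← Real.mul_rpow hd.le hu0, ← Real.mul_rpow hd.le hv0, ← hta, ← hbt]
      _ = ((b-a) ^ ((1:ℝ) - 2*k))⁻¹ * g ((t - a) / (b - a)) := by
          rw [hg]
          simp only [h1u]
          rw [one_div, mul_inv, one_div]
      _ = (b - a) ^ (2*k - 1 : ℕ) * g ((t - a) / (b - a)) := by rw [hinv]
  rw [intervalIntegral.integral_congr hcongr, intervalIntegral.integral_const_mul]
  have hsub : (∫ t in a..b, g ((t - a) / (b - a)))
      = ∫ x in (a-a)..(b-a), g (x / (b - a)) :=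
    intervalIntegral.integral_comp_sub_right (fun x => g (x / (b - a))) a
  rw [hsub, sub_self, intervalIntegral.integral_comp_div (fun u => g u) hd.ne',
    zero_div, div_self hd.ne', smul_eq_mul, ← mul_assoc, ← pow_succ]
  have h21 : 2*k - 1 + 1 = 2*k := by omega
  rw [h21]

/-- Positivity of the constant integral `I(k)`. -/
lemma Ik_pos (k : ℕ) (hk : 1 ≤ k) :
    0 < ∫ u in (0:ℝ)..1, 1 / (u ^ ((1:ℝ) - 2*k) + (1 - u) ^ ((1:ℝ) - 2*k)) := by
  have h1k : (1:ℝ) ≤ (k:ℝ) := by exact_mod_cast hk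
  have hfi : IntervalIntegrable
      (fun u => 1 / (u ^ ((1:ℝ) - 2*k) + (1 - u) ^ ((1:ℝ) - 2*k))) volume 0 1 := by
    have := weight_intervalIntegrable k hk 0 1 one_pos
    simpa using this
  apply intervalIntegral_pos_of_pos_on hfi _ one_pos
  intro x hx
  have h1 : (0:ℝ) < x ^ ((1:ℝ) - 2*k) := Real.rpow_pos_of_pos hx.1 _
  have h2 : (0:ℝ) < (1 - x) ^ ((1:ℝ) - 2*k) := Real.rpow_pos_of_pos (by linarith [hx.2]) _
  positivity

/-- The single-interval Wirtinger inequality. -/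
lemma interval_step (k : ℕ) (hk : 1 ≤ k) (L : ℝ) (hL : 0 < L) (Z Z' : ℝ → ℝ)
    (hderiv : ∀ t, HasDerivAt Z (Z' t) t) (hcont : Continuous Z')
    (a b : ℝ) (hab : a < b) (hgap : b - a ≤ L) (hZa : Z a = 0) (hZb : Z b = 0) :
    ∫ t in a..b, Z t ^ (2*k) ≤
      (L ^ (2*k) * ∫ u in (0:ℝ)..1, 1 / (u ^ ((1:ℝ) - 2*k) + (1 - u) ^ ((1:ℝ) - 2*k))) *
        ∫ t in a..b, Z' t ^ (2*k) := by
  have h1k : (1:ℝ) ≤ (k:ℝ) := by exact_mod_cast hk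
  have contZ : Continuous Z := by
    rw [continuous_iff_continuousAt]; exact fun t => (hderiv t).continuousAt
  set B := ∫ t in a..b, Z' t ^ (2*k) with hB
  have hB0 : 0 ≤ B :=
    intervalIntegral.integral_nonneg hab.le (fun t _ => (even_two_mul k).pow_nonneg _)
  set I := ∫ u in (0:ℝ)..1, 1 / (u ^ ((1:ℝ) - 2*k) + (1 - u) ^ ((1:ℝ) - 2*k)) with hI
  have hI0 : 0 ≤ I := (Ik_pos k hk).le
  have hpoint : ∀ t ∈ Icc a b,
      Z t ^ (2*k) ≤ B * (1 / ((t - a) ^ ((1:ℝ) - 2*k) + (b - t) ^ ((1:ℝ) - 2*k))) := by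
    intro t ht
    have hl := left_bound k hk Z Z' hderiv hcont a t ht.1 hZa
    have hr := right_bound k hk Z Z' hderiv hcont t b ht.2 hZb
    have hadd : (∫ x in a..t, Z' x ^ (2*k)) + (∫ x in t..b, Z' x ^ (2*k)) = B :=
      intervalIntegral.integral_add_adjacent_intervals
        ((hcont.pow _).intervalIntegrable _ _) ((hcont.pow _).intervalIntegrable _ _)
    have hmul : Z t ^ (2*k) * ((t - a) ^ ((1:ℝ) - 2*k) + (b - t) ^ ((1:ℝ) - 2*k)) ≤ B := by
      rw [mul_add]; rw [← hadd]; exact add_le_add hl hr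
    have hD : (0:ℝ) < (t - a) ^ ((1:ℝ) - 2*k) + (b - t) ^ ((1:ℝ) - 2*k) :=
      lt_of_lt_of_le (Real.rpow_pos_of_pos (by linarith) _) (denom_ge k hk a b t hab ht.1 ht.2)
    rw [mul_one_div, le_div_iff₀ hD]
    exact hmul
  have hwint := weight_intervalIntegrable k hk a b hab
  have hmono := intervalIntegral.integral_mono_on hab.le
    ((contZ.pow _).intervalIntegrable _ _) (hwint.const_mul B) hpoint
  calc ∫ t in a..b, Z t ^ (2*k)
      ≤ ∫ t in a..b, B * (1 / ((t - a) ^ ((1:ℝ) - 2*k) + (b - t) ^ ((1:ℝ) - 2*k))) := hmono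
    _ = B * ((b - a) ^ (2*k) * I) := by
        rw [intervalIntegral.integral_const_mul, weight_integral_eq k hk a b hab]
    _ ≤ B * (L ^ (2*k) * I) := by
        apply mul_le_mul_of_nonneg_left _ hB0
        exact mul_le_mul_of_nonneg_right
          (pow_le_pow_left₀ (by linarith) hgap _) hI0
    _ = (L ^ (2*k) * I) * B := by ring

/-- Summed Brnetić–Pečarić Wirtinger inequality over consecutive zeros of `Z`. -/
theorem wirtinger_brnetic_pecaric_summed (k : ℕ) (hk : 1 ≤ k)
    (L : ℝ) (hL : 0 < L) (Z Z' : ℝ → ℝ)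
    (hderiv : ∀ t, HasDerivAt Z (Z' t) t) (hcont : Continuous Z')
    (N : ℕ) (s : ℕ → ℝ)
    (hmono : ∀ i < N, s i < s (i + 1))
    (hzero : ∀ i ≤ N, Z (s i) = 0)
    (hgap : ∀ i < N, s (i + 1) - s i ≤ L) :
    (1 / (L ^ (2 * k) *
        ∫ t in (0:ℝ)..1, 1 / (t ^ ((1:ℝ) - 2 * k) + (1 - t) ^ ((1:ℝ) - 2 * k)))) *
      ∫ t in (s 0)..(s N), (Z t) ^ (2 * k) ≤ ∫ t in (s 0)..(s N), (Z' t) ^ (2 * k) := by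
  have contZ : Continuous Z := by
    rw [continuous_iff_continuousAt]; exact fun t => (hderiv t).continuousAt
  set I := ∫ u in (0:ℝ)..1, 1 / (u ^ ((1:ℝ) - 2*k) + (1 - u) ^ ((1:ℝ) - 2*k)) with hI
  have hC : 0 < L ^ (2*k) * I := mul_pos (pow_pos hL _) (Ik_pos k hk)
  have hZsum : (∑ i ∈ Finset.range N, ∫ t in (s i)..(s (i+1)), Z t ^ (2*k))
      = ∫ t in (s 0)..(s N), Z t ^ (2*k) :=
    intervalIntegral.sum_integral_adjacent_intervals
      (fun i _ => (contZ.pow _).intervalIntegrable _ _)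
  have hZ'sum : (∑ i ∈ Finset.range N, ∫ t in (s i)..(s (i+1)), Z' t ^ (2*k))
      = ∫ t in (s 0)..(s N), Z' t ^ (2*k) :=
    intervalIntegral.sum_integral_adjacent_intervals
      (fun i _ => (hcont.pow _).intervalIntegrable _ _)
  rw [← hZsum, ← hZ'sum, one_div, inv_mul_le_iff₀ hC, Finset.mul_sum]
  apply Finset.sum_le_sum
  intro i hi
  have hiN : i < N := Finset.mem_range.mp hi
  exact interval_step k hk L hL Z Z' hderiv hcont (s i) (s (i+1)) (hmono i hiN)
    (hgap i hiN) (hzero i hiN.le) (hzero (i+1) hiN)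
end

section
/- Let k ≥ 1 be an integer, let L > 0, let Z be a continuously differentiable real-valued function, and let s_0 < s_1 < ... < s_N be real numbers with Z(s_i) = 0 for all 0 ≤ i ≤ N and s_{i+1} - s_i ≤ L for all 0 ≤ i < N. Then ∫_{s_0}^{s_N} (Z'(t))^{2k} dt ≥ (2 · (2k)! / (L^{2k} · Γ((2k+1)/2)^2)) · ∫_{s_0}^{s_N} (Z(t))^{2k} dt, where Γ denotes the Gamma function. -/
open MeasureTheory intervalIntegral Set Real

lemma jensen_core (k : ℕ) (hk : 1 ≤ k) (f : ℝ → ℝ) (hf : Continuous f) {a b : ℝ} (hab : a < b) :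
    (∫ u in a..b, f u) ^ (2 * k) ≤ (b - a) ^ (2 * k - 1) * ∫ u in a..b, f u ^ (2 * k) := by
  set μ := volume.restrict (Ioc a b) with hμ
  have hpos : 0 < b - a := sub_pos.mpr hab
  have huniv : μ univ = ENNReal.ofReal (b - a) := by
    rw [hμ, Measure.restrict_apply_univ, Real.volume_Ioc]
  haveI : IsFiniteMeasure μ := ⟨by rw [huniv]; exact ENNReal.ofReal_lt_top⟩
  haveI : NeZero (volume (Ioc a b)) := ⟨by
    rw [Real.volume_Ioc]; exact (ENNReal.ofReal_pos.mpr hpos).ne'⟩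
  haveI : NeZero μ := by rw [hμ]; infer_instance
  have hconv : ConvexOn ℝ univ (fun x : ℝ => x ^ (2 * k)) := (even_two_mul k).convexOn_pow
  have hJ := hconv.map_average_le (μ := μ) (f := f) (continuous_pow _).continuousOn isClosed_univ
    (Filter.Eventually.of_forall fun _ => mem_univ _) (hf.integrableOn_Ioc)
    ((hf.pow _).integrableOn_Ioc)
  simp only [average_eq, smul_eq_mul, measureReal_def, huniv, ENNReal.toReal_ofReal hpos.le] at hJ
  have hIoc : ∀ g : ℝ → ℝ, ∫ x, g x ∂μ = ∫ u in a..b, g u := fun g => by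
    rw [hμ, intervalIntegral.integral_of_le hab.le]
  rw [hIoc f, hIoc (fun x => f x ^ (2 * k))] at hJ
  -- hJ : ((b-a)⁻¹ * ∫)^ (2k) ≤ (b-a)⁻¹ * ∫ pow
  have h2 := mul_le_mul_of_nonneg_left hJ (pow_nonneg hpos.le (2 * k))
  calc (∫ u in a..b, f u) ^ (2 * k)
      = (b - a) ^ (2 * k) * ((b - a)⁻¹ * ∫ u in a..b, f u) ^ (2 * k) := by
        rw [mul_pow, ← mul_assoc, ← mul_pow, mul_inv_cancel₀ hpos.ne', one_pow, one_mul]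
    _ ≤ (b - a) ^ (2 * k) * ((b - a)⁻¹ * ∫ u in a..b, f u ^ (2 * k)) := h2
    _ = (b - a) ^ (2 * k - 1) * ∫ u in a..b, f u ^ (2 * k) := by
        rw [← mul_assoc]
        congr 1
        have hm : 2 * k = (2 * k - 1) + 1 := by omega
        rw [hm, pow_succ]
        field_simp
        rw [Nat.add_sub_cancel]

lemma beta_eval (k : ℕ) (hk : 1 ≤ k) {c : ℝ} (hc : 0 < c) :
    ∫ u in (0:ℝ)..c, u ^ ((2*(k:ℝ)-1)/2) * (c - u) ^ ((2*(k:ℝ)-1)/2)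
      = c ^ (2*k) * Real.Gamma ((2*(k:ℝ)+1)/2) ^ 2 / (2*k).factorial := by
  set p : ℝ := (2*(k:ℝ)-1)/2 with hp
  set sr : ℝ := (2*(k:ℝ)+1)/2 with hsr
  set s : ℂ := (sr : ℂ) with hs
  have hs1 : (p : ℂ) = s - 1 := by rw [hs, hsr, hp]; push_cast; ring
  have hres : 0 < s.re := by
    rw [hs, Complex.ofReal_re, hsr]; positivity
  have h1 : ((∫ u in (0:ℝ)..c, u ^ p * (c - u) ^ p : ℝ) : ℂ)
      = ∫ u in (0:ℝ)..c, (u:ℂ) ^ (s-1) * ((c:ℂ) - u) ^ (s-1) := by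
    rw [← intervalIntegral.integral_ofReal]
    apply intervalIntegral.integral_congr
    intro u hu
    rw [Set.uIcc_of_le hc.le] at hu
    show ((u ^ p * (c - u) ^ p : ℝ) : ℂ) = _
    rw [Complex.ofReal_mul, Complex.ofReal_cpow hu.1 p,
      Complex.ofReal_cpow (sub_nonneg.mpr hu.2) p, hs1, Complex.ofReal_sub]
  rw [Complex.betaIntegral_scaled s s hc] at h1
  have hbeta : Complex.Gamma s * Complex.Gamma s
      = Complex.Gamma (s + s) * s.betaIntegral s :=
    Complex.Gamma_mul_Gamma_eq_betaIntegral hres hres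
  have hss : s + s = ((2*k : ℕ) : ℂ) + 1 := by rw [hs, hsr]; push_cast; ring
  have hGss : Complex.Gamma (s + s) = ((2*k).factorial : ℂ) := by
    rw [hss, Complex.Gamma_nat_eq_factorial]
  have hfac : ((2*k).factorial : ℂ) ≠ 0 := by
    exact_mod_cast (Nat.factorial_pos _).ne'
  have hbeta' : s.betaIntegral s = (Real.Gamma sr : ℂ)^2 / ((2*k).factorial : ℂ) := by
    rw [hGss, hs, Complex.Gamma_ofReal] at hbeta
    field_simp
    linear_combination (-1 : ℂ) * hbeta
  have hcpow : (c:ℂ) ^ (s + s - 1) = ((c ^ (2*k) : ℝ) : ℂ) := by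
    have : s + s - 1 = ((2*k : ℕ) : ℂ) := by rw [hss]; ring
    rw [this, Complex.cpow_natCast]
    push_cast
    ring
  rw [hcpow, hbeta'] at h1
  have : ((∫ u in (0:ℝ)..c, u ^ p * (c - u) ^ p : ℝ) : ℂ)
      = ((c ^ (2*k) * Real.Gamma sr ^ 2 / (2*k).factorial : ℝ) : ℂ) := by
    rw [h1]; push_cast; ring
  exact_mod_cast this

lemma key (k : ℕ) (hk : 1 ≤ k) (Z Z' : ℝ → ℝ) (hderiv : ∀ t, HasDerivAt Z (Z' t) t)
    (hcont : Continuous Z') {a b : ℝ} (hab : a < b) (ha0 : Z a = 0) (hb0 : Z b = 0) :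
    ∫ t in a..b, Z t ^ (2*k) ≤
      (b-a)^(2*k) * Real.Gamma ((2*(k:ℝ)+1)/2)^2 / (2*(2*k).factorial)
        * ∫ t in a..b, Z' t ^ (2*k) := by
  set p : ℝ := (2*(k:ℝ)-1)/2 with hp
  have hppos : 0 < p := by
    have h1k : (1:ℝ) ≤ k := by exact_mod_cast hk
    rw [hp]; linarith
  set I : ℝ := ∫ t in a..b, Z' t ^ (2*k) with hI
  have hInn : 0 ≤ I := intervalIntegral.integral_nonneg hab.le
    (fun u _ => (even_two_mul k).pow_nonneg (Z' u))
  have ftc : ∀ x y : ℝ, ∫ u in x..y, Z' u = Z y - Z x := fun x y =>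
    integral_eq_sub_of_hasDerivAt (fun u _ => hderiv u) (hcont.intervalIntegrable x y)
  have hZcont : Continuous Z :=
    continuous_iff_continuousAt.mpr fun t => (hderiv t).continuousAt
  -- pointwise bound
  have hpt : ∀ t ∈ Icc a b, Z t ^ (2*k) ≤ (t-a)^p * (b-t)^p * (I/2) := by
    intro t ht
    have h1 : 0 ≤ t - a := by linarith [ht.1]
    have h2 : 0 ≤ b - t := by linarith [ht.2]
    have hRnn : 0 ≤ (t-a)^p * (b-t)^p * (I/2) :=
      mul_nonneg (mul_nonneg (Real.rpow_nonneg h1 _) (Real.rpow_nonneg h2 _)) (by linarith)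
    rcases eq_or_lt_of_le ht.1 with h | h
    · rw [← h] at hRnn ⊢; rw [ha0, zero_pow (by omega)]; exact hRnn
    rcases eq_or_lt_of_le ht.2 with h' | h'
    · rw [h'] at hRnn ⊢; rw [hb0, zero_pow (by omega)]; exact hRnn
    -- main case a < t < b
    set X : ℝ := ∫ u in a..t, Z' u ^ (2*k) with hX
    set Y : ℝ := ∫ u in t..b, Z' u ^ (2*k) with hY
    have hXnn : 0 ≤ X := intervalIntegral.integral_nonneg h.le
      (fun u _ => (even_two_mul k).pow_nonneg (Z' u))
    have hYnn : 0 ≤ Y := intervalIntegral.integral_nonneg h'.le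
      (fun u _ => (even_two_mul k).pow_nonneg (Z' u))
    have hXY : X + Y = I := intervalIntegral.integral_add_adjacent_intervals
      ((hcont.pow _).intervalIntegrable _ _) ((hcont.pow _).intervalIntegrable _ _)
    have hj1 : Z t ^ (2*k) ≤ (t-a)^(2*k-1) * X := by
      have := jensen_core k hk Z' hcont h
      rwa [ftc a t, ha0, sub_zero] at this
    have hj2 : Z t ^ (2*k) ≤ (b-t)^(2*k-1) * Y := by
      have := jensen_core k hk Z' hcont h'
      rwa [ftc t b, hb0, zero_sub, Even.neg_pow (even_two_mul k)] at this
    have hprod : Z t ^ (2*k) * Z t ^ (2*k) ≤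
        ((t-a)^(2*k-1) * (b-t)^(2*k-1)) * (X * Y) := by
      have := mul_le_mul hj1 hj2 ((even_two_mul k).pow_nonneg (Z t))
        (mul_nonneg (pow_nonneg h1 _) hXnn)
      calc Z t ^ (2*k) * Z t ^ (2*k) ≤ ((t-a)^(2*k-1)*X) * ((b-t)^(2*k-1)*Y) := this
        _ = ((t-a)^(2*k-1) * (b-t)^(2*k-1)) * (X * Y) := by ring
    have hZnn : 0 ≤ Z t ^ (2*k) := (even_two_mul k).pow_nonneg (Z t)
    have hle : Z t ^ (2*k) ≤ Real.sqrt (((t-a)^(2*k-1) * (b-t)^(2*k-1)) * (X * Y)) := by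
      rw [show Z t ^ (2*k) = Real.sqrt (Z t ^ (2*k) * Z t ^ (2*k)) from
        (Real.sqrt_mul_self hZnn).symm]
      exact Real.sqrt_le_sqrt hprod
    have hsqrt_pow : ∀ x : ℝ, 0 ≤ x → Real.sqrt (x ^ (2*k-1)) = x ^ p := by
      intro x hx
      rw [Real.sqrt_eq_rpow, ← Real.rpow_natCast x (2*k-1), ← Real.rpow_mul hx]
      congr 1
      rw [hp]
      have : ((2*k-1 : ℕ) : ℝ) = 2*(k:ℝ) - 1 := by
        have h2k : (1:ℕ) ≤ 2*k := by omega
        push_cast [Nat.cast_sub h2k]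
        ring
      rw [this]; ring
    have hAMGM : Real.sqrt (X * Y) ≤ I / 2 := by
      have : Real.sqrt (X*Y) ≤ Real.sqrt (((X+Y)/2)^2) :=
        Real.sqrt_le_sqrt (by nlinarith [sq_nonneg (X - Y)])
      rwa [Real.sqrt_sq (by linarith), hXY] at this
    calc Z t ^ (2*k) ≤ Real.sqrt (((t-a)^(2*k-1) * (b-t)^(2*k-1)) * (X * Y)) := hle
      _ = Real.sqrt ((t-a)^(2*k-1)) * Real.sqrt ((b-t)^(2*k-1)) * Real.sqrt (X*Y) := by
          rw [Real.sqrt_mul (mul_nonneg (pow_nonneg h1 _) (pow_nonneg h2 _)),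
            Real.sqrt_mul (pow_nonneg h1 _)]
      _ ≤ (t-a)^p * (b-t)^p * (I/2) := by
          rw [hsqrt_pow _ h1, hsqrt_pow _ h2]
          exact mul_le_mul_of_nonneg_left hAMGM
            (mul_nonneg (Real.rpow_nonneg h1 _) (Real.rpow_nonneg h2 _))
  -- integrate the pointwise bound
  have hcont_g : Continuous fun t : ℝ => (t-a)^p * (b-t)^p * (I/2) := by
    apply Continuous.mul _ continuous_const
    exact ((continuous_id.sub continuous_const).rpow_const (fun _ => Or.inr hppos.le)).mul
      ((continuous_const.sub continuous_id).rpow_const (fun _ => Or.inr hppos.le))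
  have hmono := intervalIntegral.integral_mono_on (μ := volume) hab.le
    ((hZcont.pow _).intervalIntegrable a b) (hcont_g.intervalIntegrable a b) hpt
  -- evaluate ∫ (t-a)^p (b-t)^p
  have heval : ∫ t in a..b, (t-a)^p * (b-t)^p
      = (b-a)^(2*k) * Real.Gamma ((2*(k:ℝ)+1)/2)^2 / (2*k).factorial := by
    calc ∫ t in a..b, (t-a)^p * (b-t)^p
        = ∫ t in a..b, (fun u => u^p * ((b-a) - u)^p) (t + (-a)) := by
          apply intervalIntegral.integral_congr
          intro t _
          simp only
          rw [show t + -a = t - a by ring, show (b-a) - (t - a) = b - t by ring]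
      _ = ∫ u in a + (-a)..b + (-a), u^p * ((b-a)-u)^p :=
          intervalIntegral.integral_comp_add_right (fun u => u^p * ((b-a)-u)^p) (-a)
      _ = ∫ u in (0:ℝ)..(b-a), u^p * ((b-a)-u)^p := by norm_num [sub_eq_add_neg]
      _ = _ := beta_eval k hk (sub_pos.mpr hab)
  have hgI : ∫ t in a..b, (t-a)^p * (b-t)^p * (I/2)
      = (b-a)^(2*k) * Real.Gamma ((2*(k:ℝ)+1)/2)^2 / (2*(2*k).factorial) * I := by
    have hfac : ((2*k).factorial : ℝ) ≠ 0 := by exact_mod_cast (Nat.factorial_pos _).ne'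
    rw [intervalIntegral.integral_mul_const, heval, div_mul_eq_mul_div, div_mul_eq_mul_div,
      div_eq_div_iff hfac (mul_ne_zero two_ne_zero hfac)]
    ring
  calc ∫ t in a..b, Z t ^ (2*k) ≤ ∫ t in a..b, (t-a)^p * (b-t)^p * (I/2) := hmono
    _ = _ := hgI

lemma key2 (k : ℕ) (hk : 1 ≤ k) (L : ℝ) (hL : 0 < L) (Z Z' : ℝ → ℝ)
    (hderiv : ∀ t, HasDerivAt Z (Z' t) t) (hcont : Continuous Z')
    {a b : ℝ} (hab : a < b) (hba : b - a ≤ L) (ha0 : Z a = 0) (hb0 : Z b = 0) :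
    (2 * (Nat.factorial (2 * k)) / (L ^ (2 * k) * (Real.Gamma ((2 * k + 1) / 2)) ^ 2)) *
      ∫ t in a..b, Z t ^ (2 * k) ≤ ∫ t in a..b, Z' t ^ (2 * k) := by
  set G : ℝ := Real.Gamma ((2 * (k:ℝ) + 1) / 2) with hGdef
  have hG : 0 < G := Real.Gamma_pos_of_pos (by positivity)
  have hfac : (0:ℝ) < (Nat.factorial (2*k) : ℝ) := by exact_mod_cast Nat.factorial_pos _
  set C : ℝ := 2 * (Nat.factorial (2 * k)) / (L ^ (2 * k) * G ^ 2) with hCdef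
  have hCnn : 0 ≤ C := by positivity
  set I : ℝ := ∫ t in a..b, Z' t ^ (2*k) with hI
  have hInn : 0 ≤ I := intervalIntegral.integral_nonneg hab.le
    (fun u _ => (even_two_mul k).pow_nonneg (Z' u))
  have h1 := key k hk Z Z' hderiv hcont hab ha0 hb0
  have hcL : (b-a)^(2*k) ≤ L^(2*k) :=
    pow_le_pow_left₀ (by linarith [sub_pos.mpr hab]) hba _
  have h2 : ∫ t in a..b, Z t ^ (2*k) ≤ L^(2*k) * G^2 / (2*(Nat.factorial (2*k))) * I := by
    refine h1.trans ?_
    gcongr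
  calc C * ∫ t in a..b, Z t ^ (2*k)
      ≤ C * (L^(2*k) * G^2 / (2*(Nat.factorial (2*k))) * I) :=
        mul_le_mul_of_nonneg_left h2 hCnn
    _ = (C * (L^(2*k) * G^2 / (2*(Nat.factorial (2*k))))) * I := by ring
    _ = I := by
        rw [show C * (L^(2*k) * G^2 / (2*(Nat.factorial (2*k)))) = 1 by
          rw [hCdef]
          field_simp]
        exact one_mul I

/-- Summed Agarwal–Pang Wirtinger inequality over consecutive zeros of `Z`. -/
theorem wirtinger_agarwal_pang_summed (k : ℕ) (hk : 1 ≤ k)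
    (L : ℝ) (hL : 0 < L) (Z Z' : ℝ → ℝ)
    (hderiv : ∀ t, HasDerivAt Z (Z' t) t) (hcont : Continuous Z')
    (N : ℕ) (s : ℕ → ℝ)
    (hmono : ∀ i < N, s i < s (i + 1))
    (hzero : ∀ i ≤ N, Z (s i) = 0)
    (hgap : ∀ i < N, s (i + 1) - s i ≤ L) :
    (2 * (Nat.factorial (2 * k)) /
        (L ^ (2 * k) * (Real.Gamma ((2 * k + 1) / 2)) ^ 2)) *
      ∫ t in (s 0)..(s N), (Z t) ^ (2 * k) ≤ ∫ t in (s 0)..(s N), (Z' t) ^ (2 * k) := by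
  have hZcont : Continuous Z :=
    continuous_iff_continuousAt.mpr fun t => (hderiv t).continuousAt
  induction N with
  | zero => simp
  | succ n ih =>
    have ih' := ih (fun i hi => hmono i (by omega)) (fun i hi => hzero i (by omega))
      (fun i hi => hgap i (by omega))
    have hsplit : ∀ f : ℝ → ℝ, Continuous f →
        (∫ t in (s 0)..(s (n+1)), f t)
          = (∫ t in (s 0)..(s n), f t) + ∫ t in (s n)..(s (n+1)), f t := fun f hf =>
      (intervalIntegral.integral_add_adjacent_intervals (hf.intervalIntegrable _ _)
        (hf.intervalIntegrable _ _)).symm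
    rw [hsplit (fun t => Z t ^ (2*k)) (hZcont.pow _),
      hsplit (fun t => Z' t ^ (2*k)) (hcont.pow _), mul_add]
    exact add_le_add ih'
      (key2 k hk L hL Z Z' hderiv hcont (hmono n (by omega)) (hgap n (by omega))
        (hzero n (by omega)) (hzero (n+1) (by omega)))
end

section
/- Let m ≥ 0 and n ≥ 1 be real numbers, let L > 0, let Z be a continuously differentiable real-valued function, and let s_0 < s_1 < ... < s_N be real numbers with Z(s_i) = 0 for all 0 ≤ i ≤ N and s_{i+1} - s_i ≤ L for all 0 ≤ i < N. Then ∫_{s_0}^{s_N} |Z(t)|^m |Z'(t)|^n dt ≤ (n/(m+n)) · (L/2)^m · ∫_{s_0}^{s_N} |Z'(t)|^{m+n} dt. -/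
open MeasureTheory intervalIntegral Set ENNReal

lemma holder_step (p : ℝ) (hp : 1 < p) (g : ℝ → ℝ) (hg : Continuous g) (hg0 : ∀ x, 0 ≤ g x)
    (a t : ℝ) (hat : a ≤ t) :
    (∫ x in a..t, g x) ^ p ≤ (t - a) ^ (p - 1) * ∫ x in a..t, g x ^ p := by
  set μ := volume.restrict (Ioc a t) with hμ
  haveI : IsFiniteMeasure μ := ⟨by
    simp only [hμ, Measure.restrict_apply_univ]
    exact measure_Ioc_lt_top⟩
  have hpq : p.HolderConjugate (Real.conjExponent p) := Real.HolderConjugate.conjExponent hp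
  have hmemg : ∀ r : ℝ≥0∞, MemLp g r μ := by
    intro r
    obtain ⟨C, hC⟩ : ∃ C, ∀ x ∈ Icc a t, |g x| ≤ C := by
      obtain ⟨C, hC⟩ := (isCompact_Icc (a := a) (b := t)).exists_bound_of_continuousOn
        (hg.continuousOn (s := Icc a t))
      exact ⟨C, fun x hx => by simpa using hC x hx⟩
    have htop : MemLp g ⊤ μ := by
      apply memLp_top_of_bound hg.aestronglyMeasurable C
      refine (ae_restrict_iff' measurableSet_Ioc).2 (.of_forall fun x hx => ?_)
      simpa using hC x (Ioc_subset_Icc_self hx)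
    exact htop.mono_exponent le_top
  have h1 : ∫ x, g x * 1 ∂μ ≤ (∫ x, g x ^ p ∂μ) ^ (1 / p) * (∫ x, (1:ℝ) ^ (Real.conjExponent p) ∂μ) ^ (1 / Real.conjExponent p) :=
    integral_mul_le_Lp_mul_Lq_of_nonneg hpq (.of_forall hg0) (.of_forall fun _ => zero_le_one)
      (hmemg _) (memLp_const 1)
  have h2 : ∫ x, (1:ℝ) ^ (Real.conjExponent p) ∂μ = t - a := by
    simp [Real.one_rpow, hμ, Real.volume_Ioc, ENNReal.toReal_ofReal (sub_nonneg.2 hat), hat]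
  have h3 : ∫ x in a..t, g x = ∫ x, g x ∂μ := integral_of_le hat
  have h4 : ∫ x in a..t, g x ^ p = ∫ x, g x ^ p ∂μ := integral_of_le hat
  rw [h3, h4]
  have hint_nonneg : 0 ≤ ∫ x, g x ^ p ∂μ :=
    integral_nonneg fun x => Real.rpow_nonneg (hg0 x) p
  have hInonneg : 0 ≤ ∫ x, g x ∂μ := integral_nonneg hg0
  have h5 : ∫ x, g x ∂μ ≤ (∫ x, g x ^ p ∂μ) ^ (1 / p) * (t - a) ^ (1 / Real.conjExponent p) := by
    rw [h2] at h1; simpa only [mul_one] using h1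
  calc (∫ x, g x ∂μ) ^ p
      ≤ ((∫ x, g x ^ p ∂μ) ^ (1 / p) * (t - a) ^ (1 / Real.conjExponent p)) ^ p := by
        apply Real.rpow_le_rpow hInonneg h5 (by linarith)
    _ = (t - a) ^ (p - 1) * ∫ x, g x ^ p ∂μ := by
        rw [Real.mul_rpow (Real.rpow_nonneg hint_nonneg _) (Real.rpow_nonneg (sub_nonneg.2 hat) _),
          ← Real.rpow_mul hint_nonneg, ← Real.rpow_mul (sub_nonneg.2 hat)]
        have hp0 : p ≠ 0 := by positivity
        have hp1 : p - 1 ≠ 0 := by intro h; apply hp0; linarith [sub_eq_zero.1 h]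
        have e1 : 1 / p * p = 1 := by field_simp
        have e2 : 1 / Real.conjExponent p * p = p - 1 := by
          rw [Real.conjExponent]; field_simp
        rw [e1, e2, Real.rpow_one, mul_comm]

lemma opial_left (m n : ℝ) (hm : 0 < m) (hn : 1 ≤ n) (Z Z' : ℝ → ℝ)
    (hderiv : ∀ t, HasDerivAt Z (Z' t) t) (hcont : Continuous Z')
    (a c : ℝ) (hac : a ≤ c) (hZa : Z a = 0) :
    ∫ t in a..c, |Z t| ^ m * |Z' t| ^ n ≤
      n / (m + n) * ((c - a) ^ m * ∫ t in a..c, |Z' t| ^ (m + n)) := by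
  set p := m + n with hpdef
  have hp1 : 1 < p := by simp only [hpdef]; linarith
  have hp0 : (0:ℝ) < p := by linarith
  set g : ℝ → ℝ := fun t => |Z' t| with hgdef
  have hgc : Continuous g := hcont.abs
  have hg0 : ∀ x, 0 ≤ g x := fun x => abs_nonneg _
  have hZc : Continuous Z := by
    rw [continuous_iff_continuousAt]; exact fun t => (hderiv t).continuousAt
  have hgp_cont : Continuous (fun t => g t ^ p) :=
    hgc.rpow_const fun x => Or.inr hp0.le
  have hF_cont : Continuous (fun t => |Z t| ^ m * g t ^ n) :=
    ((hZc.abs.rpow_const fun x => Or.inr hm.le).mul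
      (hgc.rpow_const fun x => Or.inr (by linarith : (0:ℝ) ≤ n)))
  set y : ℝ → ℝ := fun t => ∫ x in a..t, g x ^ p with hydef
  set I : ℝ → ℝ := fun t => ∫ x in a..t, |Z x| ^ m * g x ^ n with hIdef
  have hy_deriv : ∀ t, HasDerivAt y (g t ^ p) t := fun t =>
    integral_hasDerivAt_right (hgp_cont.intervalIntegrable a t)
      hgp_cont.aestronglyMeasurable.stronglyMeasurableAtFilter hgp_cont.continuousAt
  have hI_deriv : ∀ t, HasDerivAt I (|Z t| ^ m * g t ^ n) t := fun t =>
    integral_hasDerivAt_right (hF_cont.intervalIntegrable a t)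
      hF_cont.aestronglyMeasurable.stronglyMeasurableAtFilter hF_cont.continuousAt
  set Φ : ℝ → ℝ := fun t => n / p * ((t - a) ^ m * y t) - I t with hΦdef
  -- derivative of Φ on the open interval
  have hΦ_deriv : ∀ x ∈ Ioo a c, HasDerivAt Φ
      (n / p * ((m * (x - a) ^ (m - 1)) * y x + (x - a) ^ m * g x ^ p)
        - |Z x| ^ m * g x ^ n) x := by
    intro x hx
    have hxa : (0:ℝ) < x - a := sub_pos.2 hx.1
    have h1 : HasDerivAt (fun t : ℝ => (t - a) ^ m) (m * (x - a) ^ (m - 1)) x := by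
      have := (Real.hasDerivAt_rpow_const (x := x - a) (p := m) (Or.inl hxa.ne')).comp x
        ((hasDerivAt_id x).sub_const a)
      simp only [mul_one] at this; exact this
    exact ((h1.mul (hy_deriv x)).const_mul (n / p)).sub (hI_deriv x)
  -- pointwise inequality making the derivative nonnegative
  have hkey : ∀ x ∈ Ioo a c, |Z x| ^ m * g x ^ n ≤
      n / p * ((m * (x - a) ^ (m - 1)) * y x + (x - a) ^ m * g x ^ p) := by
    intro x hx
    have hxa : (0:ℝ) < x - a := sub_pos.2 hx.1
    have hax : a ≤ x := hx.1.le
    have hy_nonneg : 0 ≤ y x :=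
      intervalIntegral.integral_nonneg hax fun u _ => Real.rpow_nonneg (hg0 u) p
    -- |Z x| ≤ ∫ g
    have hZbound : |Z x| ≤ ∫ u in a..x, g u := by
      have hfc : ∫ u in a..x, Z' u = Z x - Z a :=
        integral_eq_sub_of_hasDerivAt (fun u _ => hderiv u) (hcont.intervalIntegrable a x)
      have : |Z x| = |∫ u in a..x, Z' u| := by rw [hfc, hZa, sub_zero]
      rw [this]
      exact intervalIntegral.abs_integral_le_integral_abs hax
    -- Hölder
    have hhold : (∫ u in a..x, g u) ^ p ≤ (x - a) ^ (p - 1) * y x :=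
      holder_step p hp1 g hgc hg0 a x hax
    have hZm : |Z x| ^ m ≤ ((x - a) ^ (p - 1) * y x) ^ (m / p) := by
      have h1 : |Z x| ^ m = (|Z x| ^ p) ^ (m / p) := by
        rw [← Real.rpow_mul (abs_nonneg _)]
        congr 1
        field_simp
      rw [h1]
      apply Real.rpow_le_rpow (Real.rpow_nonneg (abs_nonneg _) _)
        (le_trans (Real.rpow_le_rpow (abs_nonneg _) hZbound hp0.le) hhold)
        (by positivity)
    set A : ℝ := (x - a) ^ (m - 1) * y x with hA
    set B : ℝ := (x - a) ^ m * g x ^ p with hB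
    have hA0 : 0 ≤ A := mul_nonneg (Real.rpow_nonneg hxa.le _) hy_nonneg
    have hB0 : 0 ≤ B := mul_nonneg (Real.rpow_nonneg hxa.le _) (Real.rpow_nonneg (hg0 x) _)
    have hprod : ((x - a) ^ (p - 1) * y x) ^ (m / p) * g x ^ n = A ^ (m / p) * B ^ (n / p) := by
      rw [hA, hB, Real.mul_rpow (Real.rpow_nonneg hxa.le _) hy_nonneg,
        Real.mul_rpow (Real.rpow_nonneg hxa.le _) hy_nonneg,
        Real.mul_rpow (Real.rpow_nonneg hxa.le _) (Real.rpow_nonneg (hg0 x) _),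
        ← Real.rpow_mul hxa.le, ← Real.rpow_mul hxa.le, ← Real.rpow_mul hxa.le,
        ← Real.rpow_mul (hg0 x)]
      have e1 : p * (n / p) = n := by field_simp
      have e2 : (p - 1) * (m / p) = (m - 1) * (m / p) + m * (n / p) := by
        field_simp; ring
      rw [e1, e2, Real.rpow_add hxa]
      ring
    have hgm : A ^ (m / p) * B ^ (n / p) ≤ (m / p) * A + (n / p) * B :=
      Real.geom_mean_le_arith_mean2_weighted (by positivity) (by positivity) hA0 hB0
        (by field_simp; exact hpdef.symm)
    calc |Z x| ^ m * g x ^ n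
        ≤ ((x - a) ^ (p - 1) * y x) ^ (m / p) * g x ^ n := by
          apply mul_le_mul_of_nonneg_right hZm (Real.rpow_nonneg (hg0 x) _)
      _ = A ^ (m / p) * B ^ (n / p) := hprod
      _ ≤ (m / p) * A + (n / p) * B := hgm
      _ ≤ n / p * ((m * (x - a) ^ (m - 1)) * y x + (x - a) ^ m * g x ^ p) := by
          have h1 : n / p * ((m * (x - a) ^ (m - 1)) * y x + (x - a) ^ m * g x ^ p)
              = n / p * (m * A + B) := by rw [hA, hB]; ring
          rw [h1]
          have h2 : 0 ≤ m / p * A * (n - 1) :=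
            mul_nonneg (mul_nonneg (div_nonneg hm.le hp0.le) hA0) (sub_nonneg.2 hn)
          have h3 : n / p * (m * A + B) = m / p * A * (n - 1) + (m / p * A + n / p * B) := by
            ring
          rw [h3]
          linarith
  -- monotonicity of Φ
  have hyc : Continuous y := continuous_iff_continuousAt.2 fun t => (hy_deriv t).continuousAt
  have hIc : Continuous I := continuous_iff_continuousAt.2 fun t => (hI_deriv t).continuousAt
  have hc1 : Continuous fun t : ℝ => (t - a) ^ m :=
    (continuous_id.sub continuous_const).rpow_const fun x => Or.inr hm.le
  have hΦc : Continuous Φ := (continuous_const.mul (hc1.mul hyc)).sub hIc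
  have hmono : MonotoneOn Φ (Icc a c) := by
    apply monotoneOn_of_deriv_nonneg (convex_Icc a c) hΦc.continuousOn
    · rw [interior_Icc]
      exact fun x hx => ((hΦ_deriv x hx).differentiableAt).differentiableWithinAt
    · rw [interior_Icc]
      intro x hx
      rw [(hΦ_deriv x hx).deriv]
      exact sub_nonneg.2 (hkey x hx)
  have h0 : Φ a ≤ Φ c := hmono (left_mem_Icc.2 hac) (right_mem_Icc.2 hac) hac
  have hΦa : Φ a = 0 := by
    simp [hΦdef, hydef, hIdef, intervalIntegral.integral_same]
  have hfinal : I c ≤ n / p * ((c - a) ^ m * y c) := by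
    have := h0
    rw [hΦa] at this
    simp only [hΦdef] at this
    linarith
  exact hfinal

lemma opial_right (m n : ℝ) (hm : 0 < m) (hn : 1 ≤ n) (Z Z' : ℝ → ℝ)
    (hderiv : ∀ t, HasDerivAt Z (Z' t) t) (hcont : Continuous Z')
    (a c : ℝ) (hac : a ≤ c) (hZc : Z c = 0) :
    ∫ t in a..c, |Z t| ^ m * |Z' t| ^ n ≤
      n / (m + n) * ((c - a) ^ m * ∫ t in a..c, |Z' t| ^ (m + n)) := by
  set W : ℝ → ℝ := fun t => Z (a + c - t) with hWdef
  set W' : ℝ → ℝ := fun t => -Z' (a + c - t) with hW'def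
  have hderivW : ∀ t, HasDerivAt W (W' t) t := by
    intro t
    have h1 : HasDerivAt (fun u : ℝ => a + c - u) (-1) t := by
      simpa using (hasDerivAt_id t).const_sub (a + c)
    have := (hderiv (a + c - t)).comp t h1
    simp only [mul_neg, mul_one] at this; exact this
  have hcontW : Continuous W' := (hcont.comp (continuous_const.sub continuous_id)).neg
  have hWa : W a = 0 := by simp [hWdef, hZc]
  have key := opial_left m n hm hn W W' hderivW hcontW a c hac hWa
  have e1 : ∫ t in a..c, |W t| ^ m * |W' t| ^ n = ∫ t in a..c, |Z t| ^ m * |Z' t| ^ n := by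
    have := intervalIntegral.integral_comp_sub_left (a := a) (b := c)
      (fun t => |Z t| ^ m * |Z' t| ^ n) (a + c)
    simp only [add_sub_cancel_left, add_sub_cancel_right] at this
    rw [← this]
    simp [hWdef, hW'def, abs_neg]
  have e2 : ∫ t in a..c, |W' t| ^ (m + n) = ∫ t in a..c, |Z' t| ^ (m + n) := by
    have := intervalIntegral.integral_comp_sub_left (a := a) (b := c)
      (fun t => |Z' t| ^ (m + n)) (a + c)
    simp only [add_sub_cancel_left, add_sub_cancel_right] at this
    rw [← this]
    simp [hW'def, abs_neg]
  rw [e1, e2] at key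
  exact key

lemma opial_interval (m n : ℝ) (hm : 0 < m) (hn : 1 ≤ n) (L : ℝ) (hL : 0 < L)
    (Z Z' : ℝ → ℝ)
    (hderiv : ∀ t, HasDerivAt Z (Z' t) t) (hcont : Continuous Z')
    (a b : ℝ) (hab : a ≤ b) (hZa : Z a = 0) (hZb : Z b = 0) (hgap : b - a ≤ L) :
    ∫ t in a..b, |Z t| ^ m * |Z' t| ^ n ≤
      n / (m + n) * ((L / 2) ^ m) * ∫ t in a..b, |Z' t| ^ (m + n) := by
  have hZcont : Continuous Z :=
    continuous_iff_continuousAt.2 fun t => (hderiv t).continuousAt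
  have hF_cont : Continuous (fun t => |Z t| ^ m * |Z' t| ^ n) :=
    ((hZcont.abs.rpow_const fun x => Or.inr hm.le).mul
      (hcont.abs.rpow_const fun x => Or.inr (by linarith : (0:ℝ) ≤ n)))
  have hG_cont : Continuous (fun t => |Z' t| ^ (m + n)) :=
    hcont.abs.rpow_const fun x => Or.inr (by linarith)
  set c : ℝ := (a + b) / 2 with hc
  have hac : a ≤ c := by rw [hc]; linarith
  have hcb : c ≤ b := by rw [hc]; linarith
  have hsplitF : ∫ t in a..b, |Z t| ^ m * |Z' t| ^ n =
      (∫ t in a..c, |Z t| ^ m * |Z' t| ^ n) + ∫ t in c..b, |Z t| ^ m * |Z' t| ^ n :=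
    (integral_add_adjacent_intervals (hF_cont.intervalIntegrable a c)
      (hF_cont.intervalIntegrable c b)).symm
  have hsplitG : ∫ t in a..b, |Z' t| ^ (m + n) =
      (∫ t in a..c, |Z' t| ^ (m + n)) + ∫ t in c..b, |Z' t| ^ (m + n) :=
    (integral_add_adjacent_intervals (hG_cont.intervalIntegrable a c)
      (hG_cont.intervalIntegrable c b)).symm
  have hleft := opial_left m n hm hn Z Z' hderiv hcont a c hac hZa
  have hright := opial_right m n hm hn Z Z' hderiv hcont c b hcb hZb
  have hca : c - a ≤ L / 2 := by rw [hc]; linarith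
  have hbc : b - c ≤ L / 2 := by rw [hc]; linarith
  have hG1 : 0 ≤ ∫ t in a..c, |Z' t| ^ (m + n) :=
    intervalIntegral.integral_nonneg hac fun u _ => Real.rpow_nonneg (abs_nonneg _) _
  have hG2 : 0 ≤ ∫ t in c..b, |Z' t| ^ (m + n) :=
    intervalIntegral.integral_nonneg hcb fun u _ => Real.rpow_nonneg (abs_nonneg _) _
  have hnp : 0 ≤ n / (m + n) := by positivity
  have hca' : (c - a) ^ m ≤ (L / 2) ^ m :=
    Real.rpow_le_rpow (sub_nonneg.2 hac) hca hm.le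
  have hbc' : (b - c) ^ m ≤ (L / 2) ^ m :=
    Real.rpow_le_rpow (sub_nonneg.2 hcb) hbc hm.le
  have h1 : n / (m + n) * ((c - a) ^ m * ∫ t in a..c, |Z' t| ^ (m + n)) ≤
      n / (m + n) * ((L / 2) ^ m * ∫ t in a..c, |Z' t| ^ (m + n)) := by
    apply mul_le_mul_of_nonneg_left (mul_le_mul_of_nonneg_right hca' hG1) hnp
  have h2 : n / (m + n) * ((b - c) ^ m * ∫ t in c..b, |Z' t| ^ (m + n)) ≤
      n / (m + n) * ((L / 2) ^ m * ∫ t in c..b, |Z' t| ^ (m + n)) := by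
    apply mul_le_mul_of_nonneg_left (mul_le_mul_of_nonneg_right hbc' hG2) hnp
  rw [hsplitF, hsplitG]
  calc (∫ t in a..c, |Z t| ^ m * |Z' t| ^ n) + ∫ t in c..b, |Z t| ^ m * |Z' t| ^ n
      ≤ n / (m + n) * ((L / 2) ^ m * ∫ t in a..c, |Z' t| ^ (m + n)) +
        n / (m + n) * ((L / 2) ^ m * ∫ t in c..b, |Z' t| ^ (m + n)) := by
        exact add_le_add (le_trans hleft h1) (le_trans hright h2)
    _ = n / (m + n) * (L / 2) ^ m *
        ((∫ t in a..c, |Z' t| ^ (m + n)) + ∫ t in c..b, |Z' t| ^ (m + n)) := by ring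

/-- Summed two-endpoint Opial-type (Yang) inequality over consecutive zeros of `Z`. -/
theorem opial_two_endpoint_summed (m n : ℝ) (hm : 0 ≤ m) (hn : 1 ≤ n)
    (L : ℝ) (hL : 0 < L) (Z Z' : ℝ → ℝ)
    (hderiv : ∀ t, HasDerivAt Z (Z' t) t) (hcont : Continuous Z')
    (N : ℕ) (s : ℕ → ℝ)
    (hmono : ∀ i < N, s i < s (i + 1))
    (hzero : ∀ i ≤ N, Z (s i) = 0)
    (hgap : ∀ i < N, s (i + 1) - s i ≤ L) :
    ∫ t in (s 0)..(s N), |Z t| ^ m * |Z' t| ^ n ≤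
      n / (m + n) * ((L / 2) ^ m) * ∫ t in (s 0)..(s N), |Z' t| ^ (m + n) := by
  have hn0 : (0:ℝ) < n := by linarith
  rcases eq_or_lt_of_le hm with hm0 | hmpos
  · -- m = 0 : both sides equal
    rw [← hm0]
    simp only [Real.rpow_zero, one_mul, zero_add, div_self hn0.ne']
    exact le_rfl
  · -- m > 0 : sum the per-interval inequality
    have hZcont : Continuous Z :=
      continuous_iff_continuousAt.2 fun t => (hderiv t).continuousAt
    have hF_cont : Continuous (fun t => |Z t| ^ m * |Z' t| ^ n) :=
      ((hZcont.abs.rpow_const fun x => Or.inr hmpos.le).mul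
        (hcont.abs.rpow_const fun x => Or.inr hn0.le))
    have hG_cont : Continuous (fun t => |Z' t| ^ (m + n)) :=
      hcont.abs.rpow_const fun x => Or.inr (by linarith)
    induction N with
    | zero => simp
    | succ k ih =>
      have e1 : ∫ t in (s 0)..(s (k+1)), |Z t| ^ m * |Z' t| ^ n =
          (∫ t in (s 0)..(s k), |Z t| ^ m * |Z' t| ^ n) +
            ∫ t in (s k)..(s (k+1)), |Z t| ^ m * |Z' t| ^ n :=
        (integral_add_adjacent_intervals (hF_cont.intervalIntegrable _ _)
          (hF_cont.intervalIntegrable _ _)).symm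
      have e2 : ∫ t in (s 0)..(s (k+1)), |Z' t| ^ (m + n) =
          (∫ t in (s 0)..(s k), |Z' t| ^ (m + n)) +
            ∫ t in (s k)..(s (k+1)), |Z' t| ^ (m + n) :=
        (integral_add_adjacent_intervals (hG_cont.intervalIntegrable _ _)
          (hG_cont.intervalIntegrable _ _)).symm
      have hk := opial_interval m n hmpos hn L hL Z Z' hderiv hcont (s k) (s (k+1))
        (hmono k (Nat.lt_succ_self k)).le (hzero k (Nat.le_succ k)) (hzero (k+1) le_rfl)
        (hgap k (Nat.lt_succ_self k))
      have ih' := ih (fun i hi => hmono i (hi.trans (Nat.lt_succ_self k)))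
        (fun i hi => hzero i (hi.trans (Nat.le_succ k)))
        (fun i hi => hgap i (hi.trans (Nat.lt_succ_self k)))
      rw [e1, e2, mul_add]
      exact add_le_add ih' hk
end

section
/- Let k ≥ 2 be an integer and let h be an integer with 1 ≤ h ≤ k-1. Let Z : ℝ → ℝ be a continuously differentiable function and let A > 0 and B > 0 be real constants such that, as T → ∞, (∫_0^T |Z(t)|^{2k-2h} |Z'(t)|^{2h} dt)/(T (log T)^{k²+2h}) → A and (∫_0^T (Z'(t))^{2k} dt)/(T (log T)^{k²+2k}) → B. Then for every real c with 0 < c < (1/π) · ((k/h) · (A/B))^{1/(2k-2h)}, and for every real T₀, there exists a > T₀ such that the open interval (a, a + c · (2π/log a)) contains no zero of Z. -/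
open MeasureTheory intervalIntegral Set Filter Real

lemma holder_cont (f g : ℝ → ℝ) (a b : ℝ) (hab : a ≤ b)
    (hf : ContinuousOn f (Icc a b)) (hg : ContinuousOn g (Icc a b))
    (hf0 : ∀ t ∈ Icc a b, 0 ≤ f t) (hg0 : ∀ t ∈ Icc a b, 0 ≤ g t)
    (α β : ℝ) (hα : 0 < α) (hβ : 0 < β) (hαβ : α + β = 1) :
    ∫ t in a..b, (f t) ^ α * (g t) ^ β ≤
      (∫ t in a..b, f t) ^ α * (∫ t in a..b, g t) ^ β := by
  have huIcc : uIcc a b = Icc a b := uIcc_of_le hab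
  have huIoc : uIoc a b = Ioc a b := uIoc_of_le hab
  have hIocIcc : Ioc a b ⊆ Icc a b := Ioc_subset_Icc_self
  have hfint : IntervalIntegrable f volume a b := (hf.mono (by rw [huIcc])).intervalIntegrable
  have hgint : IntervalIntegrable g volume a b := (hg.mono (by rw [huIcc])).intervalIntegrable
  have hfc : ContinuousOn (fun t => (f t) ^ α) (Icc a b) :=
    hf.rpow_const (fun t _ => Or.inr hα.le)
  have hgc : ContinuousOn (fun t => (g t) ^ β) (Icc a b) :=
    hg.rpow_const (fun t _ => Or.inr hβ.le)
  have hprodint : IntervalIntegrable (fun t => (f t) ^ α * (g t) ^ β) volume a b :=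
    ((hfc.mul hgc).mono (by rw [huIcc])).intervalIntegrable
  set F := ∫ t in a..b, f t with hF
  set G := ∫ t in a..b, g t with hG
  have hF0 : 0 ≤ F := intervalIntegral.integral_nonneg hab (fun t ht => hf0 t ht)
  have hG0 : 0 ≤ G := intervalIntegral.integral_nonneg hab (fun t ht => hg0 t ht)
  rcases eq_or_lt_of_le hF0 with hFz | hFpos
  · -- F = 0 : f ae zero on Ioc a b
    have hae : f =ᵐ[volume.restrict (Ioc a b ∪ Ioc b a)] 0 := by
      have := (intervalIntegral.integral_eq_zero_iff_of_nonneg_ae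
        (f := f) (a := a) (b := b) (μ := volume) ?_ hfint).1 hFz.symm
      · exact this
      · rw [show Ioc b a = (∅ : Set ℝ) from Ioc_eq_empty (not_lt.2 hab), union_empty]
        exact ae_restrict_of_forall_mem measurableSet_Ioc (fun t ht => hf0 t (hIocIcc ht))
    rw [show Ioc b a = (∅ : Set ℝ) from Ioc_eq_empty (not_lt.2 hab), union_empty] at hae
    have hae' : ∀ᵐ x ∂(volume : Measure ℝ), x ∈ Ioc a b → f x = 0 :=
      (ae_restrict_iff' measurableSet_Ioc).1 hae
    have hz : ∫ t in a..b, (f t) ^ α * (g t) ^ β = ∫ t in a..b, (0:ℝ) := by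
      apply intervalIntegral.integral_congr_ae
      filter_upwards [hae'] with t ht hmem
      rw [huIoc] at hmem
      rw [ht hmem, Real.zero_rpow hα.ne', zero_mul]
    rw [hz, intervalIntegral.integral_zero, ← hFz, Real.zero_rpow hα.ne', zero_mul]
  · rcases eq_or_lt_of_le hG0 with hGz | hGpos
    · have hae : g =ᵐ[volume.restrict (Ioc a b ∪ Ioc b a)] 0 := by
        have := (intervalIntegral.integral_eq_zero_iff_of_nonneg_ae
          (f := g) (a := a) (b := b) (μ := volume) ?_ hgint).1 hGz.symm
        · exact this
        · rw [show Ioc b a = (∅ : Set ℝ) from Ioc_eq_empty (not_lt.2 hab), union_empty]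
          exact ae_restrict_of_forall_mem measurableSet_Ioc (fun t ht => hg0 t (hIocIcc ht))
      rw [show Ioc b a = (∅ : Set ℝ) from Ioc_eq_empty (not_lt.2 hab), union_empty] at hae
      have hae' : ∀ᵐ x ∂(volume : Measure ℝ), x ∈ Ioc a b → g x = 0 :=
        (ae_restrict_iff' measurableSet_Ioc).1 hae
      have hz : ∫ t in a..b, (f t) ^ α * (g t) ^ β = ∫ t in a..b, (0:ℝ) := by
        apply intervalIntegral.integral_congr_ae
        filter_upwards [hae'] with t ht hmem
        rw [huIoc] at hmem
        rw [ht hmem, Real.zero_rpow hβ.ne', mul_zero]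
      rw [hz, intervalIntegral.integral_zero, ← hGz, Real.zero_rpow hβ.ne', mul_zero]
    · -- main case
      have key : ∀ t ∈ Icc a b, (f t) ^ α * (g t) ^ β ≤
          F ^ α * G ^ β * (α * (f t / F) + β * (g t / G)) := by
        intro t ht
        have h1 : (f t / F) ^ α * (g t / G) ^ β ≤ α * (f t / F) + β * (g t / G) :=
          Real.geom_mean_le_arith_mean2_weighted hα.le hβ.le
            (div_nonneg (hf0 t ht) hF0) (div_nonneg (hg0 t ht) hG0) hαβ
        have h2 : (f t / F) ^ α * (g t / G) ^ β
            = (f t) ^ α * (g t) ^ β / (F ^ α * G ^ β) := by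
          rw [Real.div_rpow (hf0 t ht) hF0, Real.div_rpow (hg0 t ht) hG0]
          ring
        rw [h2] at h1
        have hFG : 0 < F ^ α * G ^ β :=
          mul_pos (Real.rpow_pos_of_pos hFpos α) (Real.rpow_pos_of_pos hGpos β)
        calc (f t) ^ α * (g t) ^ β
            = F ^ α * G ^ β * ((f t) ^ α * (g t) ^ β / (F ^ α * G ^ β)) := by
              field_simp
          _ ≤ F ^ α * G ^ β * (α * (f t / F) + β * (g t / G)) := by
              exact mul_le_mul_of_nonneg_left h1 hFG.le
      have hrint : IntervalIntegrable
          (fun t => F ^ α * G ^ β * (α * (f t / F) + β * (g t / G))) volume a b := by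
        apply IntervalIntegrable.const_mul
        exact ((hfint.div_const F).const_mul α).add ((hgint.div_const G).const_mul β)
      have hmono := intervalIntegral.integral_mono_on hab hprodint hrint key
      calc ∫ t in a..b, (f t) ^ α * (g t) ^ β
          ≤ ∫ t in a..b, F ^ α * G ^ β * (α * (f t / F) + β * (g t / G)) := hmono
        _ = F ^ α * G ^ β * (α * (F / F) + β * (G / G)) := by
            rw [intervalIntegral.integral_const_mul]
            congr 1
            rw [intervalIntegral.integral_add ((hfint.div_const F).const_mul α)
              ((hgint.div_const G).const_mul β), intervalIntegral.integral_const_mul,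
              intervalIntegral.integral_const_mul, intervalIntegral.integral_div,
              intervalIntegral.integral_div]
        _ = F ^ α * G ^ β := by
            rw [div_self hFpos.ne', div_self hGpos.ne']
            rw [mul_one, mul_one, hαβ, mul_one]

lemma pow_rpow_cancel {x : ℝ} (hx : 0 ≤ x) {n m : ℕ} {R : ℝ}
    (h : ((n:ℕ):ℝ) * ((m:ℝ)/R) = (m:ℝ)) : (x ^ n) ^ ((m:ℝ)/R) = x ^ m := by
  rw [← Real.rpow_natCast x n, ← Real.rpow_mul hx, h, Real.rpow_natCast]

lemma yang_left (f f' : ℝ → ℝ) (hd : ∀ t, HasDerivAt f (f' t) t) (hc : Continuous f')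
    (p q : ℕ) (hp : 1 ≤ p) (hq : 1 ≤ q) (a b : ℝ) (hab : a ≤ b) (hfa : f a = 0) :
    ∫ t in a..b, |f t| ^ p * |f' t| ^ q ≤
      ((q : ℝ)/((p:ℝ)+(q:ℝ))) * (b - a) ^ p * ∫ t in a..b, |f' t| ^ (p+q) := by
  set r : ℕ := p + q with hr
  have hr1 : 1 ≤ r := le_trans hp (Nat.le_add_right p q)
  set R : ℝ := (p:ℝ) + (q:ℝ) with hR
  have hp1 : (1:ℝ) ≤ (p:ℝ) := by exact_mod_cast hp
  have hq1 : (1:ℝ) ≤ (q:ℝ) := by exact_mod_cast hq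
  have hqpos : (0:ℝ) < q := lt_of_lt_of_le one_pos hq1
  have hRr : ((r:ℕ):ℝ) = R := by rw [hr, hR]; push_cast; ring
  have hRpos : (0:ℝ) < R := by rw [hR]; linarith
  have hqR : (q:ℝ) ≤ R := by rw [hR]; linarith
  have hg : Continuous (fun s => |f' s| ^ r) := (hc.abs).pow r
  set z : ℝ → ℝ := fun t => ∫ s in a..t, |f' s| ^ r with hzdef
  have hz' : ∀ t, HasDerivAt z (|f' t| ^ r) t := fun t =>
    intervalIntegral.integral_hasDerivAt_right (hg.intervalIntegrable a t)
      hg.aestronglyMeasurable.stronglyMeasurableAtFilter hg.continuousAt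
  have hzc : Continuous z := continuous_iff_continuousAt.2 fun t =>
    (hz' t).differentiableAt.continuousAt
  have hz0 : ∀ t, a ≤ t → 0 ≤ z t := fun t ht =>
    intervalIntegral.integral_nonneg ht (fun s _ => by positivity)
  have hza : z a = 0 := intervalIntegral.integral_same
  have hfcont : Continuous f := continuous_iff_continuousAt.2 fun t =>
    (hd t).differentiableAt.continuousAt
  -- Step A: pointwise bound on |f t| ^ p
  have keyA : ∀ t ∈ Icc a b, |f t| ^ p ≤ ((t - a) ^ (r-1) * z t) ^ ((p:ℝ)/R) := by
    intro t ht
    have hx0 : (0:ℝ) ≤ t - a := sub_nonneg.2 ht.1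
    have hy0 : 0 ≤ z t := hz0 t ht.1
    have h1 : |f t| ≤ ∫ s in a..t, |f' s| := by
      have hft : f t = ∫ s in a..t, f' s := by
        rw [intervalIntegral.integral_eq_sub_of_hasDerivAt (fun s _ => hd s)
          (hc.intervalIntegrable a t), hfa, sub_zero]
      rw [hft]
      exact intervalIntegral.abs_integral_le_integral_abs ht.1
    have h2 : ∫ s in a..t, |f' s| ≤ (t - a) ^ ((R-1)/R) * (z t) ^ (1/R) := by
      have hα : (0:ℝ) < (R-1)/R := by
        apply div_pos _ hRpos; linarith
      have hβ : (0:ℝ) < 1/R := by positivity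
      have hαβ : (R-1)/R + 1/R = 1 := by field_simp; ring
      have := holder_cont (fun _ => (1:ℝ)) (fun s => |f' s| ^ r) a t ht.1
        continuousOn_const hg.continuousOn (fun _ _ => zero_le_one)
        (fun s _ => by positivity) _ _ hα hβ hαβ
      rw [intervalIntegral.integral_const, smul_eq_mul, mul_one] at this
      calc ∫ s in a..t, |f' s|
          = ∫ s in a..t, (1:ℝ) ^ ((R-1)/R) * (|f' s| ^ r) ^ (1/R) := by
            apply intervalIntegral.integral_congr
            intro s _
            simp only [Real.one_rpow, one_mul]
            rw [← Real.rpow_natCast |f' s| r, ← Real.rpow_mul (abs_nonneg _),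
              hRr, mul_one_div, div_self hRpos.ne', Real.rpow_one]
        _ ≤ (t - a) ^ ((R-1)/R) * (z t) ^ (1/R) := this
    calc |f t| ^ p ≤ ((t - a) ^ ((R-1)/R) * (z t) ^ (1/R)) ^ p :=
          pow_le_pow_left₀ (abs_nonneg _) (h1.trans h2) p
      _ = ((t - a) ^ (r-1) * z t) ^ ((p:ℝ)/R) := by
          have er1 : ((r-1:ℕ):ℝ) = R - 1 := by
            rw [Nat.cast_sub hr1, hRr]; norm_num
          rw [Real.mul_rpow (pow_nonneg hx0 _) hy0, mul_pow,
            ← Real.rpow_natCast ((t-a) ^ ((R-1)/R)) p, ← Real.rpow_natCast ((z t) ^ (1/R)) p,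
            ← Real.rpow_mul hx0, ← Real.rpow_mul hy0,
            ← Real.rpow_natCast (t-a) (r-1), ← Real.rpow_mul hx0, er1,
            show (R-1)/R * (p:ℝ) = (R-1) * ((p:ℝ)/R) by ring,
            show 1/R * (p:ℝ) = (p:ℝ)/R by ring]
  -- Step B
  set Fw : ℝ → ℝ := fun t => (t - a) ^ (r-1) with hFw
  set Gg : ℝ → ℝ := fun t => (z t) ^ ((p:ℝ)/(q:ℝ)) * |f' t| ^ r with hGg
  have keyB : ∀ t ∈ Icc a b, |f t| ^ p * |f' t| ^ q ≤
      (Fw t) ^ ((p:ℝ)/R) * (Gg t) ^ ((q:ℝ)/R) := by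
    intro t ht
    have hx0 : (0:ℝ) ≤ t - a := sub_nonneg.2 ht.1
    have hy0 : 0 ≤ z t := hz0 t ht.1
    have hqne : (q:ℝ) ≠ 0 := hqpos.ne'
    have hGeq : (Gg t) ^ ((q:ℝ)/R) = (z t) ^ ((p:ℝ)/R) * |f' t| ^ q := by
      rw [hGg, Real.mul_rpow (Real.rpow_nonneg hy0 _) (by positivity),
        ← Real.rpow_mul hy0,
        show (p:ℝ)/(q:ℝ) * ((q:ℝ)/R) = (p:ℝ)/R by field_simp,
        pow_rpow_cancel (abs_nonneg (f' t)) (by rw [hRr]; field_simp)]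
    rw [hGeq]
    have := mul_le_mul_of_nonneg_right (keyA t ht) (pow_nonneg (abs_nonneg (f' t)) q)
    refine this.trans (le_of_eq ?_)
    rw [Real.mul_rpow (pow_nonneg hx0 _) hy0]
    ring
  -- Step C: integrate and apply Hölder
  have hzpow_cont : Continuous (fun t => (z t) ^ ((p:ℝ)/(q:ℝ))) := by
    apply Continuous.rpow_const hzc
    intro t; right; positivity
  have hGg_cont : Continuous Gg := hzpow_cont.mul hg
  have hFw_cont : Continuous Fw := by
    apply Continuous.pow
    exact continuous_id.sub continuous_const
  have hint1 : IntervalIntegrable (fun t => |f t| ^ p * |f' t| ^ q) volume a b :=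
    (((hfcont.abs).pow p).mul ((hc.abs).pow q)).intervalIntegrable a b
  have hint2 : IntervalIntegrable (fun t => (Fw t) ^ ((p:ℝ)/R) * (Gg t) ^ ((q:ℝ)/R)) volume a b := by
    apply Continuous.intervalIntegrable
    exact (hFw_cont.rpow_const (fun t => Or.inr (by positivity))).mul
      (hGg_cont.rpow_const (fun t => Or.inr (by positivity)))
  have stepC : ∫ t in a..b, |f t| ^ p * |f' t| ^ q ≤
      (∫ t in a..b, Fw t) ^ ((p:ℝ)/R) * (∫ t in a..b, Gg t) ^ ((q:ℝ)/R) := by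
    refine (intervalIntegral.integral_mono_on hab hint1 hint2 keyB).trans ?_
    apply holder_cont Fw Gg a b hab hFw_cont.continuousOn hGg_cont.continuousOn
      (fun t ht => pow_nonneg (sub_nonneg.2 ht.1) _)
      (fun t ht => mul_nonneg (Real.rpow_nonneg (hz0 t ht.1) _) (by positivity))
      _ _ (by positivity) (by positivity) (by rw [hR]; field_simp)
  -- Step D
  have stepD : ∫ t in a..b, Fw t = (b-a) ^ r / (r:ℝ) := by
    rw [hFw]
    have := intervalIntegral.integral_comp_sub_right (fun u => u ^ (r-1)) a (a := a) (b := b)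
    rw [this, sub_self, integral_pow, Nat.sub_add_cancel hr1, zero_pow (by omega), sub_zero]
    rw [Nat.cast_sub hr1]
    norm_num
  -- Step E
  have h1Rq : (1:ℝ) ≤ R/(q:ℝ) := (one_le_div hqpos).2 hqR
  have stepE : ∫ t in a..b, Gg t = ((q:ℝ)/R) * (z b) ^ (R/(q:ℝ)) := by
    have hΦ : ∀ t, HasDerivAt (fun u => ((q:ℝ)/R) * (z u) ^ (R/(q:ℝ))) (Gg t) t := by
      intro t
      have h := ((hz' t).rpow_const (p := R/(q:ℝ)) (Or.inr h1Rq)).const_mul ((q:ℝ)/R)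
      refine h.congr_deriv ?_
      rw [hGg]
      have he : R/(q:ℝ) - 1 = (p:ℝ)/(q:ℝ) := by rw [hR]; field_simp; ring
      rw [he]
      field_simp
    rw [intervalIntegral.integral_eq_sub_of_hasDerivAt (fun t _ => hΦ t)
      (hGg_cont.intervalIntegrable a b), hza, Real.zero_rpow (by positivity), mul_zero, sub_zero]
  -- Step F : combine
  have hzb0 : 0 ≤ z b := hz0 b hab
  have hba0 : (0:ℝ) ≤ b - a := sub_nonneg.2 hab
  have final : ((b-a) ^ r / (r:ℝ)) ^ ((p:ℝ)/R) * (((q:ℝ)/R) * (z b) ^ (R/(q:ℝ))) ^ ((q:ℝ)/R)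
      ≤ ((q:ℝ)/R) * (b - a) ^ p * z b := by
    have e1 : ((b-a) ^ r / (r:ℝ)) ^ ((p:ℝ)/R)
        = (b-a) ^ p * ((1:ℝ)/R) ^ ((p:ℝ)/R) := by
      rw [div_eq_mul_one_div ((b-a)^r) (r:ℝ), Real.mul_rpow (pow_nonneg hba0 _) (by positivity),
        pow_rpow_cancel hba0 (by rw [hRr]; field_simp), hRr]
    have e2 : (((q:ℝ)/R) * (z b) ^ (R/(q:ℝ))) ^ ((q:ℝ)/R)
        = ((q:ℝ)/R) ^ ((q:ℝ)/R) * z b ^ ((q:ℝ)/R * (R/(q:ℝ))) := by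
      rw [Real.mul_rpow (by positivity) (Real.rpow_nonneg hzb0 _), ← Real.rpow_mul hzb0]
      ring_nf
    have e3 : z b ^ ((q:ℝ)/R * (R/(q:ℝ))) = z b := by
      rw [show (q:ℝ)/R * (R/(q:ℝ)) = 1 by field_simp, Real.rpow_one]
    have e4 : ((1:ℝ)/R) ^ ((p:ℝ)/R) * ((q:ℝ)/R) ^ ((q:ℝ)/R) ≤ (q:ℝ)/R := by
      have h5 : ((1:ℝ)/R) ^ ((p:ℝ)/R) ≤ ((q:ℝ)/R) ^ ((p:ℝ)/R) :=
        Real.rpow_le_rpow (by positivity) ((div_le_div_iff_of_pos_right hRpos).2 hq1) (by positivity)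
      have h6 : ((q:ℝ)/R) ^ ((p:ℝ)/R) * ((q:ℝ)/R) ^ ((q:ℝ)/R) = (q:ℝ)/R := by
        rw [← Real.rpow_add (by positivity), ← add_div,
          show (p:ℝ) + (q:ℝ) = R from hR.symm, div_self hRpos.ne', Real.rpow_one]
      calc ((1:ℝ)/R) ^ ((p:ℝ)/R) * ((q:ℝ)/R) ^ ((q:ℝ)/R)
          ≤ ((q:ℝ)/R) ^ ((p:ℝ)/R) * ((q:ℝ)/R) ^ ((q:ℝ)/R) :=
            mul_le_mul_of_nonneg_right h5 (Real.rpow_nonneg (by positivity) _)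
        _ = (q:ℝ)/R := h6
    calc ((b-a) ^ r / (r:ℝ)) ^ ((p:ℝ)/R) * (((q:ℝ)/R) * (z b) ^ (R/(q:ℝ))) ^ ((q:ℝ)/R)
        = (((1:ℝ)/R) ^ ((p:ℝ)/R) * ((q:ℝ)/R) ^ ((q:ℝ)/R)) * ((b-a) ^ p * z b) := by
          rw [e1, e2, e3]; ring
      _ ≤ ((q:ℝ)/R) * ((b-a) ^ p * z b) :=
          mul_le_mul_of_nonneg_right e4 (by positivity)
      _ = ((q:ℝ)/R) * (b - a) ^ p * z b := by ring
  exact stepC.trans (by rw [stepD, stepE]; exact final)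

lemma yang_right (f f' : ℝ → ℝ) (hd : ∀ t, HasDerivAt f (f' t) t) (hc : Continuous f')
    (p q : ℕ) (hp : 1 ≤ p) (hq : 1 ≤ q) (a b : ℝ) (hab : a ≤ b) (hfb : f b = 0) :
    ∫ t in a..b, |f t| ^ p * |f' t| ^ q ≤
      ((q : ℝ)/((p:ℝ)+(q:ℝ))) * (b - a) ^ p * ∫ t in a..b, |f' t| ^ (p+q) := by
  set g : ℝ → ℝ := fun t => f (a + b - t) with hgdef
  set g' : ℝ → ℝ := fun t => -f' (a + b - t) with hg'def
  have hdg : ∀ t, HasDerivAt g (g' t) t := by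
    intro t
    have h1 : HasDerivAt (fun t : ℝ => a + b - t) (-1) t := by
      simpa using (hasDerivAt_id t).const_sub (a + b)
    have := (hd (a + b - t)).comp t h1
    simpa [hgdef, hg'def, mul_comm, Function.comp_def] using this
  have hcg : Continuous g' := (hc.comp (continuous_const.sub continuous_id)).neg
  have hga : g a = 0 := by simp [hgdef, hfb]
  have h := yang_left g g' hdg hcg p q hp hq a b hab hga
  have e1 : ∫ t in a..b, |g t| ^ p * |g' t| ^ q = ∫ t in a..b, |f t| ^ p * |f' t| ^ q := by
    have := intervalIntegral.integral_comp_sub_left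
      (fun s => |f s| ^ p * |f' s| ^ q) (a + b) (a := a) (b := b)
    simp only [add_sub_cancel_right, add_sub_cancel_left] at this
    calc ∫ t in a..b, |g t| ^ p * |g' t| ^ q
        = ∫ t in a..b, |f (a + b - t)| ^ p * |f' (a + b - t)| ^ q := by
          apply intervalIntegral.integral_congr
          intro s _
          simp [hgdef, hg'def, abs_neg]
      _ = ∫ t in a..b, |f t| ^ p * |f' t| ^ q := this
  have e2 : ∫ t in a..b, |g' t| ^ (p+q) = ∫ t in a..b, |f' t| ^ (p+q) := by
    have := intervalIntegral.integral_comp_sub_left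
      (fun s => |f' s| ^ (p+q)) (a + b) (a := a) (b := b)
    simp only [add_sub_cancel_right, add_sub_cancel_left] at this
    calc ∫ t in a..b, |g' t| ^ (p+q)
        = ∫ t in a..b, |f' (a + b - t)| ^ (p+q) := by
          apply intervalIntegral.integral_congr
          intro s _
          simp [hg'def, abs_neg]
      _ = ∫ t in a..b, |f' t| ^ (p+q) := this
  rw [e1, e2] at h
  exact h

lemma yang_gap (f f' : ℝ → ℝ) (hd : ∀ t, HasDerivAt f (f' t) t) (hc : Continuous f')
    (p q : ℕ) (hp : 1 ≤ p) (hq : 1 ≤ q) (a b L : ℝ) (hab : a ≤ b)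
    (hfa : f a = 0) (hfb : f b = 0) (hL : b - a ≤ L) :
    ∫ t in a..b, |f t| ^ p * |f' t| ^ q ≤
      ((q : ℝ)/((p:ℝ)+(q:ℝ))) * (L/2) ^ p * ∫ t in a..b, |f' t| ^ (p+q) := by
  have hL0 : 0 ≤ L := le_trans (sub_nonneg.2 hab) hL
  set m : ℝ := (a + b)/2 with hm
  have ham : a ≤ m := by rw [hm]; linarith
  have hmb : m ≤ b := by rw [hm]; linarith
  have hfi : ∀ x y : ℝ, IntervalIntegrable (fun t => |f t| ^ p * |f' t| ^ q) volume x y := by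
    intro x y
    have hfcont : Continuous f := continuous_iff_continuousAt.2 fun t =>
      (hd t).differentiableAt.continuousAt
    exact (((hfcont.abs).pow p).mul ((hc.abs).pow q)).intervalIntegrable x y
  have hri : ∀ x y : ℝ, IntervalIntegrable (fun t => |f' t| ^ (p+q)) volume x y :=
    fun x y => ((hc.abs).pow (p+q)).intervalIntegrable x y
  have hcoeff : (0:ℝ) ≤ (q : ℝ)/((p:ℝ)+(q:ℝ)) := by positivity
  have hpow : (m - a) ^ p ≤ (L/2) ^ p := by
    apply pow_le_pow_left₀ (by linarith) _ p
    rw [hm]; linarith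
  have hpow2 : (b - m) ^ p ≤ (L/2) ^ p := by
    apply pow_le_pow_left₀ (by linarith) _ p
    rw [hm]; linarith
  have h1 := yang_left f f' hd hc p q hp hq a m ham hfa
  have h2 := yang_right f f' hd hc p q hp hq m b hmb hfb
  have hI1nn : 0 ≤ ∫ t in a..m, |f' t| ^ (p+q) :=
    intervalIntegral.integral_nonneg ham (fun t _ => by positivity)
  have hI2nn : 0 ≤ ∫ t in m..b, |f' t| ^ (p+q) :=
    intervalIntegral.integral_nonneg hmb (fun t _ => by positivity)
  have h1' : ∫ t in a..m, |f t| ^ p * |f' t| ^ q ≤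
      ((q : ℝ)/((p:ℝ)+(q:ℝ))) * (L/2) ^ p * ∫ t in a..m, |f' t| ^ (p+q) := by
    refine h1.trans ?_
    apply mul_le_mul_of_nonneg_right _ hI1nn
    exact mul_le_mul_of_nonneg_left hpow hcoeff
  have h2' : ∫ t in m..b, |f t| ^ p * |f' t| ^ q ≤
      ((q : ℝ)/((p:ℝ)+(q:ℝ))) * (L/2) ^ p * ∫ t in m..b, |f' t| ^ (p+q) := by
    refine h2.trans ?_
    apply mul_le_mul_of_nonneg_right _ hI2nn
    exact mul_le_mul_of_nonneg_left hpow2 hcoeff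
  have hsplit1 : ∫ t in a..b, |f t| ^ p * |f' t| ^ q
      = (∫ t in a..m, |f t| ^ p * |f' t| ^ q) + ∫ t in m..b, |f t| ^ p * |f' t| ^ q :=
    (intervalIntegral.integral_add_adjacent_intervals (hfi a m) (hfi m b)).symm
  have hsplit2 : ∫ t in a..b, |f' t| ^ (p+q)
      = (∫ t in a..m, |f' t| ^ (p+q)) + ∫ t in m..b, |f' t| ^ (p+q) :=
    (intervalIntegral.integral_add_adjacent_intervals (hri a m) (hri m b)).symm
  rw [hsplit1, hsplit2, mul_add]
  exact add_le_add h1' h2'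

lemma chain_lemma (Z Z' : ℝ → ℝ) (hderiv : ∀ t, HasDerivAt Z (Z' t) t) (hcont : Continuous Z')
    (p q : ℕ) (hp : 1 ≤ p) (hq : 1 ≤ q)
    (G T X₀ : ℝ) (hG : 0 < G)
    (Hz : ∀ x, X₀ ≤ x → x ≤ T + G → ∃ w, x < w ∧ w ≤ x + G ∧ Z w = 0) :
    ∀ n : ℕ, ∀ a₀, X₀ ≤ a₀ → Z a₀ = 0 → a₀ ≤ T + G → T - a₀ ≤ n * G →
    ∃ v, Z v = 0 ∧ a₀ ≤ v ∧ T ≤ v ∧ v ≤ T + G ∧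
      ∫ t in a₀..v, |Z t| ^ p * |Z' t| ^ q ≤
        ((q : ℝ)/((p:ℝ)+(q:ℝ))) * (G/2) ^ p * ∫ t in a₀..v, |Z' t| ^ (p+q) := by
  have hZc : Continuous Z := continuous_iff_continuousAt.2 fun t =>
    (hderiv t).differentiableAt.continuousAt
  have hfi : ∀ x y : ℝ, IntervalIntegrable (fun t => |Z t| ^ p * |Z' t| ^ q) volume x y :=
    fun x y => (((hZc.abs).pow p).mul ((hcont.abs).pow q)).intervalIntegrable x y
  have hri : ∀ x y : ℝ, IntervalIntegrable (fun t => |Z' t| ^ (p+q)) volume x y :=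
    fun x y => ((hcont.abs).pow (p+q)).intervalIntegrable x y
  have triv : ∀ v₀, Z v₀ = 0 → T ≤ v₀ → v₀ ≤ T + G →
      (∃ v, Z v = 0 ∧ v₀ ≤ v ∧ T ≤ v ∧ v ≤ T + G ∧
      ∫ t in v₀..v, |Z t| ^ p * |Z' t| ^ q ≤
        ((q : ℝ)/((p:ℝ)+(q:ℝ))) * (G/2) ^ p * ∫ t in v₀..v, |Z' t| ^ (p+q)) := by
    intro v₀ h0 h1 h2
    refine ⟨v₀, h0, le_refl _, h1, h2, ?_⟩
    rw [intervalIntegral.integral_same, intervalIntegral.integral_same, mul_zero]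
  have lastzero : ∀ x, X₀ ≤ x → x ≤ T + G → Z x = 0 →
      ∃ y, Z y = 0 ∧ x < y ∧ y ≤ x + G ∧
        (∀ w, x ≤ w → w ≤ x + G → Z w = 0 → w ≤ y) := by
    intro x hX hxT hZx
    set S : Set ℝ := Icc x (x + G) ∩ Z ⁻¹' {0} with hS
    have hScomp : IsCompact S :=
      isCompact_Icc.inter_right (isClosed_singleton.preimage hZc)
    obtain ⟨w, hw1, hw2, hw3⟩ := Hz x hX hxT
    have hwS : w ∈ S := ⟨⟨hw1.le, hw2⟩, by simp [hw3]⟩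
    have hSne : S.Nonempty := ⟨w, hwS⟩
    have hymem : sSup S ∈ S := hScomp.sSup_mem hSne
    refine ⟨sSup S, by simpa using hymem.2, lt_of_lt_of_le hw1 (le_csSup hScomp.bddAbove hwS),
      hymem.1.2, fun w' h1 h2 h3 => le_csSup hScomp.bddAbove ⟨⟨h1, h2⟩, by simp [h3]⟩⟩
  intro n
  induction n with
  | zero =>
    intro a₀ hX ha0 haTG hb
    simp only [Nat.cast_zero, zero_mul] at hb
    exact triv a₀ ha0 (by linarith) haTG
  | succ m ih =>
    intro a₀ hX ha0 haTG hb
    by_cases hTa : T ≤ a₀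
    · exact triv a₀ ha0 hTa haTG
    push_neg at hTa
    obtain ⟨z₁, hz₁0, ha₀z₁, hz₁le, hmax₁⟩ :=
      lastzero a₀ hX (by linarith) ha0
    by_cases hTz₁ : T ≤ z₁
    · refine ⟨z₁, hz₁0, ha₀z₁.le, hTz₁, by linarith, ?_⟩
      exact yang_gap Z Z' hderiv hcont p q hp hq a₀ z₁ G ha₀z₁.le ha0 hz₁0 (by linarith)
    push_neg at hTz₁
    obtain ⟨w₂, hw₂1, hw₂2, hw₂0⟩ := Hz z₁ (by linarith) (by linarith)
    have hw₂gt : a₀ + G < w₂ := by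
      by_contra hle
      push_neg at hle
      exact absurd (hmax₁ w₂ (by linarith) hle hw₂0) (not_le.2 hw₂1)
    obtain ⟨z₂, hz₂0, hz₁z₂, hz₂le, hmax₂⟩ :=
      lastzero z₁ (by linarith) (by linarith) hz₁0
    have hz₂w₂ : w₂ ≤ z₂ := hmax₂ w₂ hw₂1.le hw₂2 hw₂0
    obtain ⟨v, hv0, hz₂v, hTv, hvle, hvint⟩ :=
      ih z₂ (by linarith) hz₂0 (by linarith)
        (by push_cast at hb ⊢; linarith)
    refine ⟨v, hv0, by linarith, hTv, hvle, ?_⟩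
    have gap1 := yang_gap Z Z' hderiv hcont p q hp hq a₀ z₁ G ha₀z₁.le ha0 hz₁0 (by linarith)
    have gap2 := yang_gap Z Z' hderiv hcont p q hp hq z₁ z₂ G hz₁z₂.le hz₁0 hz₂0 (by linarith)
    have s1 : ∫ t in a₀..v, |Z t| ^ p * |Z' t| ^ q =
        ((∫ t in a₀..z₁, |Z t| ^ p * |Z' t| ^ q) + ∫ t in z₁..z₂, |Z t| ^ p * |Z' t| ^ q)
          + ∫ t in z₂..v, |Z t| ^ p * |Z' t| ^ q := by
      rw [intervalIntegral.integral_add_adjacent_intervals (hfi a₀ z₁) (hfi z₁ z₂),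
        intervalIntegral.integral_add_adjacent_intervals (hfi a₀ z₂) (hfi z₂ v)]
    have s2 : ∫ t in a₀..v, |Z' t| ^ (p+q) =
        ((∫ t in a₀..z₁, |Z' t| ^ (p+q)) + ∫ t in z₁..z₂, |Z' t| ^ (p+q))
          + ∫ t in z₂..v, |Z' t| ^ (p+q) := by
      rw [intervalIntegral.integral_add_adjacent_intervals (hri a₀ z₁) (hri z₁ z₂),
        intervalIntegral.integral_add_adjacent_intervals (hri a₀ z₂) (hri z₂ v)]
    rw [s1, s2, mul_add, mul_add]
    exact add_le_add (add_le_add gap1 gap2) hvint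

lemma tendsto_log_linear_div_log (θ b : ℝ) (hθ : 0 < θ) :
    Tendsto (fun T : ℝ => Real.log (θ*T + b) / Real.log T) atTop (nhds 1) := by
  have h1 : Tendsto (fun T : ℝ => Real.log (θ*T + b) - Real.log T) atTop
      (nhds (Real.log θ)) := by
    have h2 : Tendsto (fun T : ℝ => θ + b/T) atTop (nhds θ) := by
      have := tendsto_const_nhds (x := θ) (f := atTop (α := ℝ))
      have hb : Tendsto (fun T : ℝ => b/T) atTop (nhds 0) :=
        Tendsto.div_atTop tendsto_const_nhds tendsto_id
      simpa using this.add hb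
    have h3 : Tendsto (fun T : ℝ => Real.log (θ + b/T)) atTop (nhds (Real.log θ)) :=
      ((Real.continuousAt_log hθ.ne').tendsto).comp h2
    apply h3.congr'
    filter_upwards [eventually_gt_atTop (max 1 ((1 + |b|)/θ))] with T hT
    have hT1 : 1 < T := lt_of_le_of_lt (le_max_left _ _) hT
    have hT0 : 0 < T := by linarith
    have hTb : (1 + |b|)/θ < T := lt_of_le_of_lt (le_max_right _ _) hT
    have hpos : 0 < θ*T + b := by
      have : 1 + |b| < θ*T := (div_lt_iff₀' hθ).1 hTb
      have := neg_abs_le b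
      linarith
    rw [show θ + b/T = (θ*T + b)/T by field_simp, Real.log_div hpos.ne' hT0.ne']
  have h4 : Tendsto (fun T : ℝ =>
      (Real.log (θ*T + b) - Real.log T) * (Real.log T)⁻¹ + 1) atTop (nhds 1) := by
    have hinv : Tendsto (fun T : ℝ => (Real.log T)⁻¹) atTop (nhds 0) :=
      Real.tendsto_log_atTop.inv_tendsto_atTop
    have := (h1.mul hinv).add_const 1
    simpa using this
  apply h4.congr'
  filter_upwards [eventually_gt_atTop (1:ℝ)] with T hT1
  have : Real.log T ≠ 0 := (Real.log_pos hT1).ne'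
  field_simp
  ring

set_option maxHeartbeats 2000000 in
/-- Theorem 2.2 of the paper: conditional large gaps from mixed moments. -/
theorem large_gap_mixed_moments (k h : ℕ) (hk : 2 ≤ k) (hh1 : 1 ≤ h) (hhk : h ≤ k - 1)
    (Z Z' : ℝ → ℝ)
    (hderiv : ∀ t, HasDerivAt Z (Z' t) t) (hcont : Continuous Z')
    (A B : ℝ) (hA : 0 < A) (hB : 0 < B)
    (hmixed : Tendsto (fun T : ℝ =>
        (∫ t in (0:ℝ)..T, |Z t| ^ (2 * k - 2 * h) * |Z' t| ^ (2 * h)) /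
          (T * (Real.log T) ^ (k ^ 2 + 2 * h))) atTop (nhds A))
    (hder : Tendsto (fun T : ℝ =>
        (∫ t in (0:ℝ)..T, (Z' t) ^ (2 * k)) /
          (T * (Real.log T) ^ (k ^ 2 + 2 * k))) atTop (nhds B))
    (c : ℝ) (hc0 : 0 < c)
    (hc : c < (1 / Real.pi) *
        (((k : ℝ) / h) * (A / B)) ^ ((1:ℝ) / (2 * (k : ℝ) - 2 * h))) :
    ∀ T₀ : ℝ, ∃ a : ℝ, T₀ < a ∧
      ∀ t ∈ Set.Ioo a (a + c * (2 * Real.pi / Real.log a)), Z t ≠ 0 := by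
  by_contra hcon
  push_neg at hcon
  obtain ⟨T₀, H⟩ := hcon
  -- numerical setup
  have hhk' : h < k := by omega
  set p : ℕ := 2 * k - 2 * h with hp_def
  set q : ℕ := 2 * h with hq_def
  have hp : 1 ≤ p := by omega
  have hq : 1 ≤ q := by omega
  have hpq : p + q = 2 * k := by omega
  set e₁ : ℕ := k ^ 2 + 2 * h with he₁_def
  set e₂ : ℕ := k ^ 2 + 2 * k with he₂_def
  have he : e₂ = e₁ + p := by omega
  have hπ : (0:ℝ) < Real.pi := Real.pi_pos
  have hkR : (0:ℝ) < (k:ℝ) := by exact_mod_cast (by omega : 0 < k)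
  have hhR : (0:ℝ) < (h:ℝ) := by exact_mod_cast (by omega : 0 < h)
  have hpR : ((p:ℕ):ℝ) = 2*(k:ℝ) - 2*(h:ℝ) := by
    rw [hp_def, Nat.cast_sub (by omega : 2*h ≤ 2*k)]
    push_cast; ring
  have hpqR : ((p:ℕ):ℝ) + ((q:ℕ):ℝ) = 2*(k:ℝ) := by
    rw [hpR, hq_def]; push_cast; ring
  -- the key constant inequality
  set X : ℝ := ((k:ℝ)/h) * (A/B) with hX_def
  have hXpos : 0 < X := by
    apply mul_pos (div_pos hkR hhR) (div_pos hA hB)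
  have hcπ : c * Real.pi < X ^ ((1:ℝ)/(2*(k:ℝ) - 2*(h:ℝ))) := by
    have := mul_lt_mul_of_pos_right hc hπ
    rw [one_div, inv_mul_eq_div] at this
    calc c * Real.pi < X ^ ((1:ℝ)/(2*(k:ℝ) - 2*(h:ℝ))) / Real.pi * Real.pi := this
      _ = X ^ ((1:ℝ)/(2*(k:ℝ) - 2*(h:ℝ))) := div_mul_cancel₀ _ hπ.ne'
  have hkh2 : (0:ℝ) < 2*(k:ℝ) - 2*(h:ℝ) := by
    have : (h:ℝ) < (k:ℝ) := by exact_mod_cast hhk'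
    linarith
  have hcp : (c * Real.pi) ^ p < X := by
    have hYpos : (0:ℝ) < X ^ ((1:ℝ)/(2*(k:ℝ) - 2*(h:ℝ))) := Real.rpow_pos_of_pos hXpos _
    have h1 : (c * Real.pi) ^ p < (X ^ ((1:ℝ)/(2*(k:ℝ) - 2*(h:ℝ)))) ^ p :=
      pow_lt_pow_left₀ hcπ (by positivity) (by omega)
    have h2 : (X ^ ((1:ℝ)/(2*(k:ℝ) - 2*(h:ℝ)))) ^ p = X := by
      rw [← Real.rpow_natCast (X ^ ((1:ℝ)/(2*(k:ℝ) - 2*(h:ℝ)))) p, ← Real.rpow_mul hXpos.le,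
        hpR, one_div, inv_mul_cancel₀ hkh2.ne', Real.rpow_one]
    linarith
  set R₀ : ℝ := ((h:ℝ)/k) * (c*Real.pi)^p * B with hR₀_def
  have hR₀A : R₀ < A := by
    have h1 : ((h:ℝ)/k) * B * ((c*Real.pi)^p) < ((h:ℝ)/k) * B * X :=
      mul_lt_mul_of_pos_left hcp (by positivity)
    have h2 : ((h:ℝ)/k) * B * X = A := by
      rw [hX_def]; field_simp
    calc R₀ = ((h:ℝ)/k) * B * ((c*Real.pi)^p) := by rw [hR₀_def]; ring
      _ < ((h:ℝ)/k) * B * X := h1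
      _ = A := h2
  set θ : ℝ := min (1/2) ((A - R₀)/(2*A)) with hθ_def
  have hθ0 : 0 < θ := lt_min (by norm_num) (div_pos (by linarith) (by linarith))
  have hθhalf : θ ≤ 1/2 := min_le_left _ _
  have hθA : R₀ < A - θ*A := by
    have h1 : θ ≤ (A - R₀)/(2*A) := min_le_right _ _
    have h2 : θ*A ≤ ((A - R₀)/(2*A))*A := mul_le_mul_of_nonneg_right h1 hA.le
    have h3 : ((A - R₀)/(2*A))*A = (A - R₀)/2 := by field_simp
    rw [h3] at h2
    linarith
  -- limit claims
  have hcompθ : Tendsto (fun T : ℝ => θ*T) atTop atTop :=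
    Tendsto.const_mul_atTop hθ0 tendsto_id
  have hlogθT : Tendsto (fun T : ℝ => Real.log (θ*T) / Real.log T) atTop (nhds 1) := by
    have := tendsto_log_linear_div_log θ 0 hθ0
    simpa using this
  have hlogT1 : Tendsto (fun T : ℝ => Real.log (T+1) / Real.log T) atTop (nhds 1) := by
    have := tendsto_log_linear_div_log 1 1 one_pos
    simpa [add_comm] using this
  have hlogθT1 : Tendsto (fun T : ℝ => Real.log (θ*T - 1) / Real.log T) atTop (nhds 1) := by
    have := tendsto_log_linear_div_log θ (-1) hθ0
    simpa [sub_eq_add_neg] using this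
  have hlogswap : Tendsto (fun T : ℝ => Real.log T / Real.log (θ*T - 1)) atTop (nhds 1) := by
    have := hlogθT1.inv₀ one_ne_zero
    simp only [inv_div, inv_one] at this
    exact this
  have hlogmix : Tendsto (fun T : ℝ => Real.log (T+1) / Real.log (θ*T - 1)) atTop (nhds 1) := by
    have hprod := hlogT1.mul hlogswap
    rw [mul_one] at hprod
    apply hprod.congr'
    filter_upwards [eventually_gt_atTop (1:ℝ)] with T hT1
    have : Real.log T ≠ 0 := (Real.log_pos hT1).ne'
    field_simp
  -- Claim 1
  have claim1 : Tendsto (fun T : ℝ =>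
      (∫ t in (0:ℝ)..(θ*T), |Z t| ^ p * |Z' t| ^ q) / (T * (Real.log T) ^ e₁))
      atTop (nhds (θ*A)) := by
    have h2 := hmixed.comp hcompθ
    have h3 : Tendsto (fun T : ℝ => θ * (Real.log (θ*T) / Real.log T) ^ e₁)
        atTop (nhds θ) := by
      have := (hlogθT.pow e₁).const_mul θ
      simpa using this
    have h4 := h2.mul h3
    rw [mul_comm A θ] at h4
    apply h4.congr'
    filter_upwards [eventually_gt_atTop (max 1 (2/θ))] with T hT
    have hT1 : 1 < T := lt_of_le_of_lt (le_max_left _ _) hT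
    have hθT1 : 1 < θ*T := by
      have : 2/θ < T := lt_of_le_of_lt (le_max_right _ _) hT
      have := (div_lt_iff₀' hθ0).1 this
      linarith
    have hT0 : (0:ℝ) < T := by linarith
    have hθT0 : (0:ℝ) < θ*T := by linarith
    have hlT : Real.log T ≠ 0 := (Real.log_pos hT1).ne'
    have hlθT : Real.log (θ*T) ≠ 0 := (Real.log_pos hθT1).ne'
    simp only [Function.comp]
    rw [div_pow]
    field_simp
  -- Claim 2
  have claim2 : Tendsto (fun T : ℝ =>
      (c*Real.pi/Real.log (θ*T - 1)) ^ p *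
        ((∫ t in (0:ℝ)..(T+1), (Z' t) ^ (2*k)) / (T * (Real.log T) ^ e₁)))
      atTop (nhds ((c*Real.pi)^p * B)) := by
    have hcomp1 : Tendsto (fun T : ℝ => T + 1) atTop atTop :=
      tendsto_atTop_add_const_right atTop 1 tendsto_id
    have h4 := hder.comp hcomp1
    have hone : Tendsto (fun T : ℝ => 1 + 1/T) atTop (nhds 1) := by
      have hb : Tendsto (fun T : ℝ => 1/T) atTop (nhds 0) :=
        Tendsto.div_atTop tendsto_const_nhds tendsto_id
      simpa using (tendsto_const_nhds (x := (1:ℝ)) (f := atTop (α := ℝ))).add hb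
    have hg : Tendsto (fun T : ℝ => (c*Real.pi)^p * ((1 + 1/T) *
        ((Real.log (T+1) / Real.log T) ^ e₁ *
         (Real.log (T+1) / Real.log (θ*T - 1)) ^ p)))
        atTop (nhds ((c*Real.pi)^p)) := by
      have := (hone.mul ((hlogT1.pow e₁).mul (hlogmix.pow p))).const_mul ((c*Real.pi)^p)
      simpa using this
    have h5 := h4.mul hg
    rw [mul_comm B ((c*Real.pi)^p)] at h5
    apply h5.congr'
    filter_upwards [eventually_gt_atTop (max 1 (3/θ))] with T hT
    have hT1 : 1 < T := lt_of_le_of_lt (le_max_left _ _) hT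
    have hT0 : (0:ℝ) < T := by linarith
    have hθT3 : 3 < θ*T := by
      have : 3/θ < T := lt_of_le_of_lt (le_max_right _ _) hT
      have := (div_lt_iff₀' hθ0).1 this
      linarith
    have hθT1 : 1 < θ*T - 1 := by linarith
    have hlT : Real.log T ≠ 0 := (Real.log_pos hT1).ne'
    have hlT1 : Real.log (T+1) ≠ 0 := (Real.log_pos (by linarith)).ne'
    have hlθT : Real.log (θ*T - 1) ≠ 0 := (Real.log_pos hθT1).ne'
    simp only [Function.comp]
    rw [he, pow_add, div_pow, div_pow, div_pow]
    field_simp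
  -- The eventual inequality
  have evineq : ∀ᶠ T in (atTop : Filter ℝ),
      (∫ t in (0:ℝ)..T, |Z t| ^ p * |Z' t| ^ q) / (T * (Real.log T) ^ e₁) -
      (∫ t in (0:ℝ)..(θ*T), |Z t| ^ p * |Z' t| ^ q) / (T * (Real.log T) ^ e₁) ≤
      ((h:ℝ)/k) * ((c*Real.pi/Real.log (θ*T - 1)) ^ p *
        ((∫ t in (0:ℝ)..(T+1), (Z' t) ^ (2*k)) / (T * (Real.log T) ^ e₁))) := by
    have hZc : Continuous Z := continuous_iff_continuousAt.2 fun t =>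
      (hderiv t).differentiableAt.continuousAt
    have hfi : ∀ x y : ℝ, IntervalIntegrable (fun t => |Z t| ^ p * |Z' t| ^ q) volume x y :=
      fun x y => (((hZc.abs).pow p).mul ((hcont.abs).pow q)).intervalIntegrable x y
    have hri : ∀ x y : ℝ, IntervalIntegrable (fun t => |Z' t| ^ (p+q)) volume x y :=
      fun x y => ((hcont.abs).pow (p+q)).intervalIntegrable x y
    have hqR : ((q:ℕ):ℝ) = 2*(h:ℝ) := by rw [hq_def]; push_cast; ring
    filter_upwards [eventually_gt_atTop
      (max 1 (max ((Real.exp (2*Real.pi*c) + 2)/θ) ((max T₀ 2 + 2)/θ)))] with T hT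
    have hT1 : 1 < T := lt_of_le_of_lt (le_max_left _ _) hT
    have hT0 : (0:ℝ) < T := by linarith
    have hθTexp : Real.exp (2*Real.pi*c) + 2 < θ*T := by
      have h1 : (Real.exp (2*Real.pi*c) + 2)/θ < T :=
        lt_of_le_of_lt ((le_max_left _ _).trans (le_max_right _ _)) hT
      exact (div_lt_iff₀' hθ0).1 h1
    have hθTT₀ : max T₀ 2 + 2 < θ*T := by
      have h1 : (max T₀ 2 + 2)/θ < T :=
        lt_of_le_of_lt ((le_max_right _ _).trans (le_max_right _ _)) hT
      exact (div_lt_iff₀' hθ0).1 h1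
    have hexp1 : (1:ℝ) ≤ Real.exp (2*Real.pi*c) := Real.one_le_exp (by positivity)
    have hθT1gt : 1 < θ*T - 1 := by linarith
    have hT₀θT : T₀ < θ*T - 1 := by
      have := le_max_left T₀ 2
      linarith
    have h2θT : (2:ℝ) < θ*T - 1 := by
      have := le_max_right T₀ 2
      linarith
    have hlogpos : 0 < Real.log (θ*T - 1) := Real.log_pos hθT1gt
    have hlogge : 2*Real.pi*c ≤ Real.log (θ*T - 1) :=
      (Real.le_log_iff_exp_le (by linarith)).2 (by linarith)
    set G : ℝ := c * (2*Real.pi/Real.log (θ*T - 1)) with hG_def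
    have hGpos : 0 < G := mul_pos hc0 (div_pos (by positivity) hlogpos)
    have hG1 : G ≤ 1 := by
      rw [hG_def, show c * (2*Real.pi/Real.log (θ*T-1)) = (2*Real.pi*c)/Real.log (θ*T-1) by ring,
        div_le_one hlogpos]
      exact hlogge
    have hθTleT : θ*T ≤ T := by
      have h1 : θ*T ≤ (1/2)*T := mul_le_mul_of_nonneg_right hθhalf hT0.le
      linarith
    obtain ⟨u, humem, hu0⟩ := H (θ*T - 1) hT₀θT
    obtain ⟨hu1, hu2⟩ := humem
    have huθT : u ≤ θ*T := by
      have : u < θ*T - 1 + G := by rw [hG_def]; exact hu2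
      linarith
    have Hz : ∀ x, u ≤ x → x ≤ T + G → ∃ w, x < w ∧ w ≤ x + G ∧ Z w = 0 := by
      intro x hx1 hx2
      have hxθ : θ*T - 1 ≤ x := by linarith
      obtain ⟨w, hwmem, hw0⟩ := H x (by linarith)
      refine ⟨w, hwmem.1, ?_, hw0⟩
      have hlx : Real.log (θ*T-1) ≤ Real.log x := Real.log_le_log (by linarith) hxθ
      have hb : c * (2*Real.pi/Real.log x) ≤ G := by
        rw [hG_def]
        refine mul_le_mul_of_nonneg_left ?_ hc0.le
        exact div_le_div_of_nonneg_left (by positivity) hlogpos hlx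
      have := hwmem.2
      linarith
    have hbound : T - u ≤ ((Nat.ceil ((T - u)/G) : ℕ) : ℝ) * G := by
      calc T - u = ((T-u)/G)*G := (div_mul_cancel₀ _ hGpos.ne').symm
        _ ≤ ((Nat.ceil ((T - u)/G) : ℕ) : ℝ)*G :=
            mul_le_mul_of_nonneg_right (Nat.le_ceil _) hGpos.le
    obtain ⟨v, hv0, huv, hTv, hvle, hint⟩ := chain_lemma Z Z' hderiv hcont p q hp hq
      G T u hGpos Hz (Nat.ceil ((T - u)/G)) u le_rfl hu0 (by linarith) hbound
    -- integral comparisons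
    have hu0' : (0:ℝ) < u := by linarith
    have hvT1 : v ≤ T + 1 := by linarith
    have e1 := intervalIntegral.integral_add_adjacent_intervals (hfi 0 (θ*T)) (hfi (θ*T) T)
    have e2 := intervalIntegral.integral_add_adjacent_intervals (hfi u (θ*T)) (hfi (θ*T) T)
    have e3 := intervalIntegral.integral_add_adjacent_intervals (hfi u T) (hfi T v)
    have e4 := intervalIntegral.integral_add_adjacent_intervals (hri 0 u) (hri u v)
    have e5 := intervalIntegral.integral_add_adjacent_intervals (hri 0 v) (hri v (T+1))
    have nn1 : 0 ≤ ∫ t in u..(θ*T), |Z t| ^ p * |Z' t| ^ q :=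
      intervalIntegral.integral_nonneg huθT (fun t _ => by positivity)
    have nn2 : 0 ≤ ∫ t in T..v, |Z t| ^ p * |Z' t| ^ q :=
      intervalIntegral.integral_nonneg hTv (fun t _ => by positivity)
    have nn3 : 0 ≤ ∫ t in (0:ℝ)..u, |Z' t| ^ (p+q) :=
      intervalIntegral.integral_nonneg hu0'.le (fun t _ => by positivity)
    have nn4 : 0 ≤ ∫ t in v..(T+1), |Z' t| ^ (p+q) :=
      intervalIntegral.integral_nonneg hvT1 (fun t _ => by positivity)
    have ineq1 : ∫ t in (θ*T)..T, |Z t| ^ p * |Z' t| ^ q ≤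
        ∫ t in u..v, |Z t| ^ p * |Z' t| ^ q := by linarith
    have ineq2 : ∫ t in u..v, |Z' t| ^ (p+q) ≤ ∫ t in (0:ℝ)..(T+1), |Z' t| ^ (p+q) := by
      linarith
    have eqR : ∫ t in (0:ℝ)..(T+1), |Z' t| ^ (p+q) =
        ∫ t in (0:ℝ)..(T+1), (Z' t) ^ (2*k) := by
      apply intervalIntegral.integral_congr
      intro s _
      simp only
      rw [hpq, pow_mul, pow_mul, sq_abs]
    have hKeq : ((q:ℝ)/((p:ℝ)+(q:ℝ))) * (G/2)^p =
        ((h:ℝ)/k) * (c*Real.pi/Real.log (θ*T-1))^p := by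
      rw [hpqR, hqR, hG_def,
        show c * (2*Real.pi/Real.log (θ*T-1)) / 2 = c*Real.pi/Real.log (θ*T-1) by ring,
        mul_div_mul_left _ _ (two_ne_zero)]
    have hKnn : 0 ≤ ((h:ℝ)/k) * (c*Real.pi/Real.log (θ*T-1))^p := by positivity
    have main1 : ∫ t in (θ*T)..T, |Z t| ^ p * |Z' t| ^ q ≤
        ((h:ℝ)/k) * (c*Real.pi/Real.log (θ*T-1))^p *
          ∫ t in (0:ℝ)..(T+1), (Z' t) ^ (2*k) := by
      calc ∫ t in (θ*T)..T, |Z t| ^ p * |Z' t| ^ q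
          ≤ ∫ t in u..v, |Z t| ^ p * |Z' t| ^ q := ineq1
        _ ≤ ((q:ℝ)/((p:ℝ)+(q:ℝ))) * (G/2)^p * ∫ t in u..v, |Z' t| ^ (p+q) := hint
        _ = ((h:ℝ)/k) * (c*Real.pi/Real.log (θ*T-1))^p * ∫ t in u..v, |Z' t| ^ (p+q) := by
            rw [hKeq]
        _ ≤ ((h:ℝ)/k) * (c*Real.pi/Real.log (θ*T-1))^p *
              ∫ t in (0:ℝ)..(T+1), |Z' t| ^ (p+q) :=
            mul_le_mul_of_nonneg_left ineq2 hKnn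
        _ = ((h:ℝ)/k) * (c*Real.pi/Real.log (θ*T-1))^p *
              ∫ t in (0:ℝ)..(T+1), (Z' t) ^ (2*k) := by rw [eqR]
    have hDpos : 0 < T * (Real.log T)^e₁ := by
      have hlT : 0 < Real.log T := Real.log_pos hT1
      positivity
    rw [div_sub_div_same]
    have heq : (∫ t in (0:ℝ)..T, |Z t| ^ p * |Z' t| ^ q) -
        (∫ t in (0:ℝ)..(θ*T), |Z t| ^ p * |Z' t| ^ q) =
        ∫ t in (θ*T)..T, |Z t| ^ p * |Z' t| ^ q := by linarith
    rw [heq]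
    calc (∫ t in (θ*T)..T, |Z t| ^ p * |Z' t| ^ q) / (T * (Real.log T)^e₁)
        ≤ (((h:ℝ)/k) * (c*Real.pi/Real.log (θ*T-1))^p *
            ∫ t in (0:ℝ)..(T+1), (Z' t) ^ (2*k)) / (T * (Real.log T)^e₁) :=
          (div_le_div_iff_of_pos_right hDpos).2 main1
      _ = ((h:ℝ)/k) * ((c*Real.pi/Real.log (θ*T - 1)) ^ p *
            ((∫ t in (0:ℝ)..(T+1), (Z' t) ^ (2*k)) / (T * (Real.log T) ^ e₁))) := by
          ring
  -- conclusion
  have lhs_lim : Tendsto (fun T : ℝ =>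
      (∫ t in (0:ℝ)..T, |Z t| ^ p * |Z' t| ^ q) / (T * (Real.log T) ^ e₁) -
      (∫ t in (0:ℝ)..(θ*T), |Z t| ^ p * |Z' t| ^ q) / (T * (Real.log T) ^ e₁))
      atTop (nhds (A - θ*A)) := hmixed.sub claim1
  have rhs_lim : Tendsto (fun T : ℝ =>
      ((h:ℝ)/k) * ((c*Real.pi/Real.log (θ*T - 1)) ^ p *
        ((∫ t in (0:ℝ)..(T+1), (Z' t) ^ (2*k)) / (T * (Real.log T) ^ e₁))))
      atTop (nhds (((h:ℝ)/k) * ((c*Real.pi)^p * B))) := claim2.const_mul _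
  have hfinal : A - θ*A ≤ ((h:ℝ)/k) * ((c*Real.pi)^p * B) :=
    le_of_tendsto_of_tendsto lhs_lim rhs_lim evineq
  have : ((h:ℝ)/k) * ((c*Real.pi)^p * B) = R₀ := by rw [hR₀_def]; ring
  rw [this] at hfinal
  linarith
end

section
/- Let k ≥ 1 be an integer. Let Z : ℝ → ℝ be a continuously differentiable function and let A > 0 and B > 0 be real constants such that, as T → ∞, (∫_0^T (Z(t))^{2k} dt)/(T (log T)^{k²}) → A and (∫_0^T (Z'(t))^{2k} dt)/(T (log T)^{k²+2k}) → B. Then for every real c with 0 < c < (1/(2π)) · ((A/B) · 2 · (2k)! / Γ((2k+1)/2)²)^{1/(2k)}, and for every real T₀, there exists a > T₀ such that the open interval (a, a + c · (2π/log a)) contains no zero of Z. -/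
open MeasureTheory intervalIntegral Set Filter Real

private lemma gamma_half_formula (k : ℕ) :
    Real.Gamma ((k : ℝ) + 1 / 2) = Real.sqrt π * (2 * k).factorial / (4 ^ k * k.factorial) := by
  induction k with
  | zero =>
      rw [show ((0:ℕ):ℝ) + 1/2 = 1/2 by norm_num, Real.Gamma_one_half_eq]
      norm_num
  | succ n ih =>
      have hne : ((n : ℝ) + 1 / 2) ≠ 0 := by positivity
      have h1 : ((n + 1 : ℕ) : ℝ) + 1 / 2 = ((n : ℝ) + 1 / 2) + 1 := by push_cast; ring
      rw [h1, Real.Gamma_add_one hne, ih]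
      have h2 : (2 * (n + 1)) = (2 * n + 1) + 1 := by ring
      rw [h2, Nat.factorial_succ, Nat.factorial_succ, Nat.factorial_succ]
      have hfac : (0:ℝ) < n.factorial := by positivity
      push_cast
      field_simp
      ring

private lemma arith_binom (k : ℕ) (hk : 1 ≤ k) :
    (4:ℝ) ^ k * (k.factorial : ℝ) ^ 2 ≤ π * k * (2 * k).factorial := by
  induction k with
  | zero => omega
  | succ n ih =>
      rcases Nat.eq_or_lt_of_le hk with h | h
      · have : n = 0 := by omega
        subst this
        norm_num [Nat.factorial]
        nlinarith [Real.pi_gt_three]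
      · have hn : 1 ≤ n := by omega
        have ih' := ih hn
        have h2 : (2 * (n + 1)) = (2 * n + 1) + 1 := by ring
        rw [h2, Nat.factorial_succ, Nat.factorial_succ, Nat.factorial_succ]
        have hpi : (0:ℝ) < π := Real.pi_pos
        have hfac : (0:ℝ) ≤ (2 * n).factorial := by positivity
        have hn' : (1:ℝ) ≤ n := by exact_mod_cast hn
        have key := mul_le_mul_of_nonneg_left ih'
          (by positivity : (0:ℝ) ≤ 4 * ((n:ℝ) + 1) ^ 2)
        push_cast
        push_cast at key
        rw [pow_succ]
        nlinarith [key, mul_nonneg (mul_nonneg hpi.le hfac) (sq_nonneg ((n:ℝ) + 1))]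

private lemma jensen_pow_s9 (f : ℝ → ℝ) (hf : Continuous f) (n : ℕ) (hn : Even n) (hn0 : n ≠ 0)
    {a b : ℝ} (hab : a ≤ b) :
    (∫ t in a..b, f t) ^ n ≤ (b - a) ^ (n - 1) * ∫ t in a..b, (f t) ^ n := by
  rcases eq_or_lt_of_le hab with rfl | hlt
  · simp [zero_pow hn0]
  · set μ : Measure ℝ := volume.restrict (Set.Ioc a b) with hμ
    have hμuniv : μ Set.univ = ENNReal.ofReal (b - a) := by
      simp [hμ, Real.volume_Ioc]
    haveI : IsFiniteMeasure μ := ⟨by simp [hμuniv]⟩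
    haveI : NeZero μ := by
      refine ⟨fun h => ?_⟩
      rw [h] at hμuniv
      simp only [Measure.coe_zero, Pi.zero_apply] at hμuniv
      have : (0:ℝ) < b - a := sub_pos.2 hlt
      rw [eq_comm, ENNReal.ofReal_eq_zero] at hμuniv
      linarith
    have hfi : Integrable f μ := by
      exact (hf.integrableOn_Icc).mono_set Set.Ioc_subset_Icc_self
    have hgi : Integrable (fun x => (f x) ^ n) μ := by
      exact ((hf.pow n).integrableOn_Icc).mono_set Set.Ioc_subset_Icc_self
    have hj := (hn.convexOn_pow (𝕜 := ℝ)).map_average_le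
      (continuous_pow n).continuousOn isClosed_univ
      (Filter.Eventually.of_forall fun x => Set.mem_univ (f x)) hfi hgi
    rw [average_eq, average_eq, measureReal_def, hμuniv, ENNReal.toReal_ofReal (by linarith : (0:ℝ) ≤ b - a)] at hj
    have hI : ∫ x, f x ∂μ = ∫ t in a..b, f t := by
      rw [intervalIntegral.integral_of_le hab]
    have hJ : ∫ x, (f x) ^ n ∂μ = ∫ t in a..b, (f t) ^ n := by
      rw [intervalIntegral.integral_of_le hab]
    rw [hI, hJ] at hj
    set I := ∫ t in a..b, f t
    set J := ∫ t in a..b, (f t) ^ n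
    obtain ⟨m, rfl⟩ : ∃ m, n = m + 1 := ⟨n - 1, by omega⟩
    have hba : (0:ℝ) < b - a := sub_pos.2 hlt
    have hsmul : ((b - a)⁻¹ • I) = (b - a)⁻¹ * I := rfl
    have hsmul2 : ((b - a)⁻¹ • J) = (b - a)⁻¹ * J := rfl
    rw [hsmul, hsmul2] at hj
    have := mul_le_mul_of_nonneg_left hj (by positivity : (0:ℝ) ≤ (b - a) ^ (m + 1))
    calc I ^ (m + 1) = (b - a) ^ (m + 1) * (((b - a)⁻¹ * I) ^ (m + 1)) := by
            rw [mul_pow]; field_simp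
            rw [one_div, mul_assoc, ← mul_pow, mul_inv_cancel₀ hba.ne', one_pow, mul_one]
      _ ≤ (b - a) ^ (m + 1) * ((b - a)⁻¹ * J) := this
      _ = (b - a) ^ (m + 1 - 1) * J := by
            simp only [Nat.add_sub_cancel]
            rw [pow_succ]
            field_simp

private lemma intmono (f : ℝ → ℝ) (hf : Continuous f) (h0 : ∀ x, 0 ≤ f x) {a u v : ℝ}
    (huv : u ≤ v) : (∫ t in a..u, f t) ≤ ∫ t in a..v, f t := by
  rw [← intervalIntegral.integral_add_adjacent_intervals
    (hf.intervalIntegrable a u) (hf.intervalIntegrable u v)]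
  have : 0 ≤ ∫ t in u..v, f t := intervalIntegral.integral_nonneg huv fun x _ => h0 x
  linarith

private lemma ftc_zero (Z Z' : ℝ → ℝ) (hderiv : ∀ t, HasDerivAt Z (Z' t) t)
    (hcont : Continuous Z') {u : ℝ} (t : ℝ) (hu : Z u = 0) : Z t = ∫ s in u..t, Z' s := by
  rw [intervalIntegral.integral_eq_sub_of_hasDerivAt (fun x _ => hderiv x)
    (hcont.intervalIntegrable u t), hu, sub_zero]

private lemma half_left (Z Z' : ℝ → ℝ) (hderiv : ∀ t, HasDerivAt Z (Z' t) t)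
    (hcont : Continuous Z') (k : ℕ) (hk : 1 ≤ k) {u m : ℝ} (hu : Z u = 0) (hum : u ≤ m) :
    (∫ t in u..m, (Z t) ^ (2 * k)) ≤
      (m - u) ^ (2 * k) / (2 * k) * ∫ t in u..m, (Z' t) ^ (2 * k) := by
  have hZc : Continuous Z := by
    rw [continuous_iff_continuousAt]; exact fun t => (hderiv t).continuousAt
  have hn0 : 2 * k ≠ 0 := by omega
  set J := ∫ t in u..m, (Z' t) ^ (2 * k) with hJ
  have hpt : ∀ t ∈ Set.Icc u m, (Z t) ^ (2 * k) ≤ (t - u) ^ (2 * k - 1) * J := by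
    intro t ht
    have h1 : Z t = ∫ s in u..t, Z' s := ftc_zero Z Z' hderiv hcont t hu
    rw [h1]
    calc (∫ s in u..t, Z' s) ^ (2 * k)
        ≤ (t - u) ^ (2 * k - 1) * ∫ s in u..t, (Z' s) ^ (2 * k) :=
          jensen_pow_s9 Z' hcont (2 * k) (even_two_mul k) hn0 ht.1
      _ ≤ (t - u) ^ (2 * k - 1) * J := by
          apply mul_le_mul_of_nonneg_left _ (pow_nonneg (sub_nonneg.2 ht.1) _)
          exact intmono _ (hcont.pow _) (fun x => Even.pow_nonneg (even_two_mul k) _) ht.2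
  calc (∫ t in u..m, (Z t) ^ (2 * k))
      ≤ ∫ t in u..m, (t - u) ^ (2 * k - 1) * J :=
        intervalIntegral.integral_mono_on hum ((hZc.pow _).intervalIntegrable u m)
          ((((continuous_id.sub continuous_const).pow _).mul continuous_const).intervalIntegrable u m)
          hpt
    _ = (m - u) ^ (2 * k) / (2 * k) * J := by
        rw [intervalIntegral.integral_mul_const]
        congr 1
        rw [intervalIntegral.integral_comp_sub_right (fun s => s ^ (2 * k - 1)) u
          (a := u) (b := m), sub_self, integral_pow]
        have h1 : 2 * k - 1 + 1 = 2 * k := by omega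
        have h2 : ((2 * k - 1 : ℕ) : ℝ) + 1 = (2 * k : ℕ) := by
          rw [Nat.cast_sub (by omega)]; push_cast; ring
        rw [h1, zero_pow hn0, sub_zero, h2]
        norm_num

private lemma half_right (Z Z' : ℝ → ℝ) (hderiv : ∀ t, HasDerivAt Z (Z' t) t)
    (hcont : Continuous Z') (k : ℕ) (hk : 1 ≤ k) {m v : ℝ} (hv : Z v = 0) (hmv : m ≤ v) :
    (∫ t in m..v, (Z t) ^ (2 * k)) ≤
      (v - m) ^ (2 * k) / (2 * k) * ∫ t in m..v, (Z' t) ^ (2 * k) := by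
  have hZc : Continuous Z := by
    rw [continuous_iff_continuousAt]; exact fun t => (hderiv t).continuousAt
  have hn0 : 2 * k ≠ 0 := by omega
  set J := ∫ t in m..v, (Z' t) ^ (2 * k) with hJ
  have hpt : ∀ t ∈ Set.Icc m v, (Z t) ^ (2 * k) ≤ (v - t) ^ (2 * k - 1) * J := by
    intro t ht
    have h1 : Z t = -∫ s in t..v, Z' s := by
      rw [← intervalIntegral.integral_symm]
      exact ftc_zero Z Z' hderiv hcont t hv
    have h2 : (Z t) ^ (2 * k) = (∫ s in t..v, Z' s) ^ (2 * k) := by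
      rw [h1, Even.neg_pow (even_two_mul k)]
    rw [h2]
    calc (∫ s in t..v, Z' s) ^ (2 * k)
        ≤ (v - t) ^ (2 * k - 1) * ∫ s in t..v, (Z' s) ^ (2 * k) :=
          jensen_pow_s9 Z' hcont (2 * k) (even_two_mul k) hn0 ht.2
      _ ≤ (v - t) ^ (2 * k - 1) * J := by
          apply mul_le_mul_of_nonneg_left _ (pow_nonneg (sub_nonneg.2 ht.2) _)
          -- ∫ t..v ≤ ∫ m..v  : extend to the left
          rw [hJ, ← intervalIntegral.integral_add_adjacent_intervals (f := fun s => Z' s ^ (2 * k))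
            ((hcont.pow _).intervalIntegrable m t) ((hcont.pow _).intervalIntegrable t v)]
          have : 0 ≤ ∫ s in m..t, (Z' s) ^ (2 * k) :=
            intervalIntegral.integral_nonneg ht.1 fun x _ => Even.pow_nonneg (even_two_mul k) _
          linarith
  calc (∫ t in m..v, (Z t) ^ (2 * k))
      ≤ ∫ t in m..v, (v - t) ^ (2 * k - 1) * J :=
        intervalIntegral.integral_mono_on hmv ((hZc.pow _).intervalIntegrable m v)
          ((((continuous_const.sub continuous_id).pow _).mul continuous_const).intervalIntegrable m v)
          hpt
    _ = (v - m) ^ (2 * k) / (2 * k) * J := by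
        rw [intervalIntegral.integral_mul_const]
        congr 1
        rw [intervalIntegral.integral_comp_sub_left (fun s => s ^ (2 * k - 1)) v
          (a := m) (b := v), sub_self, integral_pow]
        have h1 : 2 * k - 1 + 1 = 2 * k := by omega
        have h2 : ((2 * k - 1 : ℕ) : ℝ) + 1 = (2 * k : ℕ) := by
          rw [Nat.cast_sub (by omega)]; push_cast; ring
        rw [h1, zero_pow hn0, h2]
        norm_num

private lemma fold (Z Z' : ℝ → ℝ) (hderiv : ∀ t, HasDerivAt Z (Z' t) t)
    (hcont : Continuous Z') (k : ℕ) (hk : 1 ≤ k) {u v g : ℝ} (hu : Z u = 0) (hv : Z v = 0)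
    (huv : u ≤ v) (hgap : v - u ≤ g) :
    (∫ t in u..v, (Z t) ^ (2 * k)) ≤
      (g / 2) ^ (2 * k) / (2 * k) * ∫ t in u..v, (Z' t) ^ (2 * k) := by
  have hg0 : 0 ≤ g := le_trans (by linarith) hgap
  set m := (u + v) / 2 with hm
  have hum : u ≤ m := by rw [hm]; linarith
  have hmv : m ≤ v := by rw [hm]; linarith
  have h1 := half_left Z Z' hderiv hcont k hk hu hum
  have h2 := half_right Z Z' hderiv hcont k hk hv hmv
  have hnn : ∀ x, (0:ℝ) ≤ (Z' x) ^ (2 * k) := fun x => Even.pow_nonneg (even_two_mul k) _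
  have hc1 : (m - u) ^ (2 * k) ≤ (g / 2) ^ (2 * k) :=
    pow_le_pow_left₀ (by linarith) (by rw [hm]; linarith) _
  have hc2 : (v - m) ^ (2 * k) ≤ (g / 2) ^ (2 * k) :=
    pow_le_pow_left₀ (by linarith) (by rw [hm]; linarith) _
  have hpos : (0:ℝ) < 2 * k := by positivity
  have hJ1 : (0:ℝ) ≤ ∫ t in u..m, (Z' t) ^ (2 * k) :=
    intervalIntegral.integral_nonneg hum fun x _ => hnn x
  have hJ2 : (0:ℝ) ≤ ∫ t in m..v, (Z' t) ^ (2 * k) :=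
    intervalIntegral.integral_nonneg hmv fun x _ => hnn x
  have hsplitZ : (∫ t in u..v, (Z t) ^ (2 * k)) =
      (∫ t in u..m, (Z t) ^ (2 * k)) + ∫ t in m..v, (Z t) ^ (2 * k) := by
    have hZc : Continuous Z := by
      rw [continuous_iff_continuousAt]; exact fun t => (hderiv t).continuousAt
    rw [intervalIntegral.integral_add_adjacent_intervals (f := fun t => Z t ^ (2 * k))
      ((hZc.pow _).intervalIntegrable u m) ((hZc.pow _).intervalIntegrable m v)]
  have hsplitZ' : (∫ t in u..v, (Z' t) ^ (2 * k)) =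
      (∫ t in u..m, (Z' t) ^ (2 * k)) + ∫ t in m..v, (Z' t) ^ (2 * k) := by
    rw [intervalIntegral.integral_add_adjacent_intervals (f := fun t => Z' t ^ (2 * k))
      ((hcont.pow _).intervalIntegrable u m) ((hcont.pow _).intervalIntegrable m v)]
  rw [hsplitZ, hsplitZ', mul_add]
  have b1 : (m - u) ^ (2 * k) / (2 * k) * (∫ t in u..m, (Z' t) ^ (2 * k)) ≤
      (g / 2) ^ (2 * k) / (2 * k) * ∫ t in u..m, (Z' t) ^ (2 * k) :=
    mul_le_mul_of_nonneg_right (div_le_div_of_nonneg_right hc1 hpos.le) hJ1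
  have b2 : (v - m) ^ (2 * k) / (2 * k) * (∫ t in m..v, (Z' t) ^ (2 * k)) ≤
      (g / 2) ^ (2 * k) / (2 * k) * ∫ t in m..v, (Z' t) ^ (2 * k) :=
    mul_le_mul_of_nonneg_right (div_le_div_of_nonneg_right hc2 hpos.le) hJ2
  linarith

private lemma chain (Z Z' : ℝ → ℝ) (hderiv : ∀ t, HasDerivAt Z (Z' t) t)
    (hcont : Continuous Z') (k : ℕ) (hk : 1 ≤ k) (g : ℝ) (hg : 0 < g)
    (z₀ X : ℝ) (hz₀ : Z z₀ = 0) (hzX : z₀ ≤ X)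
    (next : ∀ z, z₀ ≤ z → z ≤ X → Z z = 0 → ∃ w, z < w ∧ w ≤ z + g ∧ Z w = 0) :
    ∃ w, X ≤ w ∧ w ≤ X + g ∧
      (∫ t in z₀..w, (Z t) ^ (2 * k)) ≤
        (g / 2) ^ (2 * k) / (2 * k) * ∫ t in z₀..w, (Z' t) ^ (2 * k) := by
  have hZc : Continuous Z := by
    rw [continuous_iff_continuousAt]; exact fun t => (hderiv t).continuousAt
  set C := (g / 2) ^ (2 * k) / (2 * k) with hC
  set S : Set ℝ := {x | x ∈ Set.Icc z₀ (X + g) ∧ Z x = 0 ∧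
      (∫ t in z₀..x, (Z t) ^ (2 * k)) ≤ C * ∫ t in z₀..x, (Z' t) ^ (2 * k)} with hS
  have hSclosed : IsClosed S := by
    have : S = Set.Icc z₀ (X + g) ∩ ({x | Z x = 0} ∩
        {x | (∫ t in z₀..x, (Z t) ^ (2 * k)) ≤ C * ∫ t in z₀..x, (Z' t) ^ (2 * k)}) := by
      ext x; simp [hS, Set.mem_Icc, and_assoc]
    rw [this]
    exact isClosed_Icc.inter ((isClosed_eq hZc continuous_const).inter
      (isClosed_le
        (intervalIntegral.continuous_primitive (fun a b => (hZc.pow _).intervalIntegrable a b) z₀)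
        (continuous_const.mul
          (intervalIntegral.continuous_primitive (fun a b => (hcont.pow _).intervalIntegrable a b) z₀))))
  have hz₀S : z₀ ∈ S := by
    refine ⟨⟨le_refl _, by linarith⟩, hz₀, by simp⟩
  have hSbdd : BddAbove S := ⟨X + g, fun x hx => hx.1.2⟩
  set s := sSup S with hs
  have hsS : s ∈ S := hSclosed.csSup_mem ⟨z₀, hz₀S⟩ hSbdd
  by_cases hsX : X ≤ s
  · exact ⟨s, hsX, hsS.1.2, hsS.2.2⟩
  · push_neg at hsX
    obtain ⟨w, hsw, hwg, hwz⟩ := next s hsS.1.1 hsX.le hsS.2.1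
    have hwS : w ∈ S := by
      refine ⟨⟨by linarith [hsS.1.1], by linarith⟩, hwz, ?_⟩
      have hadd : (∫ t in z₀..w, (Z t) ^ (2 * k)) =
          (∫ t in z₀..s, (Z t) ^ (2 * k)) + ∫ t in s..w, (Z t) ^ (2 * k) := by
        rw [intervalIntegral.integral_add_adjacent_intervals (f := fun t => Z t ^ (2 * k))
          ((hZc.pow _).intervalIntegrable _ _) ((hZc.pow _).intervalIntegrable _ _)]
      have hadd' : (∫ t in z₀..w, (Z' t) ^ (2 * k)) =
          (∫ t in z₀..s, (Z' t) ^ (2 * k)) + ∫ t in s..w, (Z' t) ^ (2 * k) := by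
        rw [intervalIntegral.integral_add_adjacent_intervals (f := fun t => Z' t ^ (2 * k))
          ((hcont.pow _).intervalIntegrable _ _) ((hcont.pow _).intervalIntegrable _ _)]
      have hstep := fold Z Z' hderiv hcont k hk (g := g) hsS.2.1 hwz hsw.le (by linarith)
      rw [hadd, hadd', mul_add]
      have := hsS.2.2
      linarith
    have : w ≤ s := le_csSup hSbdd hwS
    linarith

private lemma logratio (a b : ℝ) (ha : 0 < a) :
    Tendsto (fun T => Real.log (a * T + b) / Real.log T) atTop (nhds 1) := by
  have h1 : Tendsto (fun T : ℝ => Real.log (a + b / T)) atTop (nhds (Real.log a)) := by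
    have : Tendsto (fun T : ℝ => a + b / T) atTop (nhds a) := by
      simpa using tendsto_const_nhds.add ((tendsto_const_nhds (x := b)).div_atTop tendsto_id)
    exact ((Real.continuousAt_log ha.ne').tendsto.comp this)
  have h2 : Tendsto (fun T : ℝ => Real.log (a + b / T) / Real.log T + 1) atTop (nhds 1) := by
    have := (h1.div_atTop Real.tendsto_log_atTop)
    simpa using this.add (tendsto_const_nhds (x := (1:ℝ)))
  apply h2.congr'
  filter_upwards [eventually_gt_atTop (max 1 (2 * |b| / a + 1))] with T hT
  have hT1 : 1 < T := lt_of_le_of_lt (le_max_left _ _) hT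
  have hT0 : 0 < T := by linarith
  have hTb : 2 * |b| / a + 1 < T := lt_of_le_of_lt (le_max_right _ _) hT
  have habs : |b| / T < a := by
    rw [div_lt_iff₀ hT0]
    have h3 : 2 * |b| / a < T := by linarith
    rw [div_lt_iff₀ ha] at h3
    nlinarith [abs_nonneg b]
  have hpos : 0 < a + b / T := by
    have : -(|b| / T) ≤ b / T := by
      rw [neg_le, ← neg_div]
      exact div_le_div_of_nonneg_right (neg_le_abs b) hT0.le
    linarith
  have hlogT : Real.log T ≠ 0 := ne_of_gt (Real.log_pos hT1)
  have key : Real.log (a * T + b) = Real.log (a + b / T) + Real.log T := by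
    rw [← Real.log_mul hpos.ne' hT0.ne']
    congr 1
    field_simp
  rw [key, add_div, div_self hlogT]

private lemma logratio2 (a b a' b' : ℝ) (ha : 0 < a) (ha' : 0 < a') :
    Tendsto (fun T => Real.log (a * T + b) / Real.log (a' * T + b')) atTop (nhds 1) := by
  have h1 := logratio a b ha
  have h2 := logratio a' b' ha'
  have h3 := h1.div h2 one_ne_zero
  rw [div_one] at h3
  apply h3.congr'
  filter_upwards [eventually_gt_atTop (1:ℝ), eventually_gt_atTop ((1 - b') / a')]
    with T hT1 hT2
  have hlogT : Real.log T ≠ 0 := ne_of_gt (Real.log_pos hT1)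
  have hy : (1:ℝ) < a' * T + b' := by
    rw [div_lt_iff₀ ha'] at hT2
    nlinarith
  have hylog : Real.log (a' * T + b') ≠ 0 := ne_of_gt (Real.log_pos hy)
  rw [Pi.div_apply]
  field_simp

private lemma theta_lt_A (k : ℕ) (hk : 1 ≤ k) (A B c : ℝ) (hA : 0 < A) (hB : 0 < B)
    (hc0 : 0 < c)
    (hc : c < (1 / (2 * Real.pi)) *
        ((A / B) * 2 * (Nat.factorial (2 * k)) /
          (Real.Gamma ((2 * k + 1) / 2)) ^ 2) ^ ((1:ℝ) / (2 * k))) :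
    (π * c) ^ (2 * k) / (2 * k) * B < A := by
  have hπ : (0:ℝ) < π := Real.pi_pos
  have hΓ : Real.Gamma ((2 * (k:ℝ) + 1) / 2) =
      Real.sqrt π * (2 * k).factorial / (4 ^ k * k.factorial) := by
    rw [show (2 * (k:ℝ) + 1) / 2 = (k:ℝ) + 1 / 2 by ring]
    exact gamma_half_formula k
  set Γv := Real.Gamma ((2 * (k:ℝ) + 1) / 2) with hΓv
  have hfacpos : (0:ℝ) < (2 * k).factorial := by positivity
  have hkfacpos : (0:ℝ) < (k.factorial : ℝ) := by positivity
  have hΓpos : 0 < Γv := by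
    rw [hΓ]; positivity
  set R := A / B * 2 * ((2 * k).factorial : ℝ) / Γv ^ 2 with hR
  have hRpos : 0 < R := by positivity
  have step1 : 2 * π * c < R ^ ((1:ℝ) / (2 * k)) := by
    have h := mul_lt_mul_of_pos_left hc (by positivity : (0:ℝ) < 2 * π)
    calc 2 * π * c < 2 * π * (1 / (2 * π) * R ^ ((1:ℝ) / (2 * (k:ℝ)))) := h
      _ = R ^ ((1:ℝ) / (2 * (k:ℝ))) := by field_simp
  have step2 : (2 * π * c) ^ (2 * k) < R := by
    have h1 : (2 * π * c) ^ (2 * k) < (R ^ ((1:ℝ) / (2 * k))) ^ (2 * k) :=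
      pow_lt_pow_left₀ step1 (by positivity) (by omega)
    have h2 : (R ^ ((1:ℝ) / (2 * (k:ℝ)))) ^ (2 * k) = R := by
      rw [← Real.rpow_natCast (R ^ ((1:ℝ) / (2 * (k:ℝ)))) (2 * k), ← Real.rpow_mul hRpos.le]
      have : (1:ℝ) / (2 * (k:ℝ)) * ((2 * k : ℕ) : ℝ) = 1 := by
        have : ((2 * k : ℕ) : ℝ) = 2 * (k:ℝ) := by push_cast; ring
        rw [this]
        field_simp
      rw [this, Real.rpow_one]
    rw [h2] at h1
    exact h1
  -- now convert
  have hpow4 : (2 * π * c) ^ (2 * k) = 4 ^ k * (π * c) ^ (2 * k) := by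
    rw [show 2 * π * c = 2 * (π * c) by ring, mul_pow, pow_mul]
    norm_num
  have h4k : (0:ℝ) < 4 ^ k * (2 * k) := by positivity
  have h16 : (16:ℝ) ^ k = 4 ^ k * 4 ^ k := by rw [← mul_pow]; norm_num
  have hΓsq : Γv ^ 2 = π * ((2 * k).factorial : ℝ) ^ 2 / (16 ^ k * (k.factorial : ℝ) ^ 2) := by
    rw [hΓ, div_pow, mul_pow, Real.sq_sqrt hπ.le, mul_pow, h16]
    ring
  have hq : 2 * ((2 * k).factorial : ℝ) ≤ Γv ^ 2 * (4 ^ k * (2 * k)) := by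
    rw [hΓsq]
    rw [div_mul_eq_mul_div, le_div_iff₀ (by positivity)]
    have hab := arith_binom k hk
    have := mul_le_mul_of_nonneg_left hab
      (by positivity : (0:ℝ) ≤ 2 * ((2 * k).factorial : ℝ) * 4 ^ k)
    rw [h16]
    push_cast at this ⊢
    nlinarith [this]
  have hθR : (π * c) ^ (2 * k) / (2 * k) * B < R * B / (4 ^ k * (2 * k)) := by
    have key : (2 * π * c) ^ (2 * k) * B < R * B := mul_lt_mul_of_pos_right step2 hB
    rw [hpow4] at key
    have heq : (π * c) ^ (2 * k) / (2 * k) * B =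
        4 ^ k * (π * c) ^ (2 * k) * B / (4 ^ k * (2 * k)) := by
      rw [eq_div_iff h4k.ne']
      field_simp
    rw [heq]
    exact div_lt_div_of_pos_right key h4k
  have hRB : R * B = A * (2 * ((2 * k).factorial : ℝ)) / Γv ^ 2 := by
    rw [hR]; field_simp
  have hfin : R * B / (4 ^ k * (2 * k)) ≤ A := by
    rw [hRB]
    have heq2 : A * (2 * ((2 * k).factorial : ℝ)) / Γv ^ 2 / (4 ^ k * (2 * k)) =
        A * (2 * ((2 * k).factorial : ℝ) / (Γv ^ 2 * (4 ^ k * (2 * k)))) := by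
      field_simp
    rw [heq2]
    nth_rewrite 2 [← mul_one A]
    apply mul_le_mul_of_nonneg_left _ hA.le
    rw [div_le_one (by positivity)]
    exact hq
  linarith

private lemma lim_scale (F : ℝ → ℝ) (p : ℕ) (A : ℝ)
    (hF : Tendsto (fun T => F T / (T * Real.log T ^ p)) atTop (nhds A))
    (a : ℝ) (ha : 0 < a) :
    Tendsto (fun T => F (a * T) / (T * Real.log T ^ p)) atTop (nhds (a * A)) := by
  have hcomp : Tendsto (fun T : ℝ => a * T) atTop atTop :=
    Tendsto.const_mul_atTop ha tendsto_id
  have h1 : Tendsto (fun T => F (a * T) / ((a * T) * Real.log (a * T) ^ p)) atTop (nhds A) :=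
    hF.comp hcomp
  have h2 : Tendsto (fun T =>
      F (a * T) / ((a * T) * Real.log (a * T) ^ p) * a * (Real.log (a * T) / Real.log T) ^ p)
      atTop (nhds (A * a * 1 ^ p)) := by
    exact (h1.mul_const a).mul (((by simpa using logratio a 0 ha : Tendsto (fun T => Real.log (a * T) / Real.log T) atTop (nhds 1)).pow p))
  rw [show A * a * 1 ^ p = a * A by ring] at h2
  apply h2.congr'
  filter_upwards [eventually_gt_atTop (max 1 (1 / a))] with T hT
  have hT1 : 1 < T := lt_of_le_of_lt (le_max_left _ _) hT
  have hTa : 1 / a < T := lt_of_le_of_lt (le_max_right _ _) hT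
  have haT : 1 < a * T := by rw [div_lt_iff₀ ha] at hTa; linarith [mul_comm a T]
  have h0T : (0:ℝ) < T := by linarith
  have hlogT : Real.log T ≠ 0 := ne_of_gt (Real.log_pos hT1)
  have hlogaT : Real.log (a * T) ≠ 0 := ne_of_gt (Real.log_pos haT)
  field_simp
  rw [div_pow, mul_assoc, div_mul_cancel₀ _ (pow_ne_zero _ hlogT)]

private lemma lim_G2 (F : ℝ → ℝ) (p q : ℕ) (B : ℝ)
    (hF : Tendsto (fun T => F T / (T * Real.log T ^ (p + q))) atTop (nhds B))
    (ε D : ℝ) (hε : 0 < ε) :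
    Tendsto (fun T => D / (Real.log (ε * T)) ^ q * F (T + 1) / (T * Real.log T ^ p))
      atTop (nhds (D * B)) := by
  have h1 : Tendsto (fun T => F (T + 1) / ((T + 1) * Real.log (T + 1) ^ (p + q)))
      atTop (nhds B) := hF.comp (tendsto_atTop_add_const_right atTop 1 tendsto_id)
  have f3 : Tendsto (fun T : ℝ => (T + 1) / T) atTop (nhds 1) := by
    have h := (tendsto_const_nhds (x := (1:ℝ))).add tendsto_inv_atTop_zero
    rw [add_zero] at h
    apply h.congr'
    filter_upwards [eventually_gt_atTop (0:ℝ)] with T hT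
    field_simp
  have f4 : Tendsto (fun T : ℝ => (Real.log (T + 1) / Real.log T) ^ p) atTop (nhds 1) := by
    have := (logratio 1 1 one_pos).pow p
    rw [one_pow] at this
    simpa using this
  have f5 : Tendsto (fun T : ℝ => (Real.log (T + 1) / Real.log (ε * T)) ^ q) atTop (nhds 1) := by
    have := (logratio2 1 1 ε 0 one_pos hε).pow q
    rw [one_pow] at this
    simpa using this
  have h2 := ((((h1.const_mul D).mul f3).mul f4).mul f5)
  rw [show D * B * 1 * 1 * 1 = D * B by ring] at h2
  apply h2.congr'
  filter_upwards [eventually_gt_atTop (max 1 (1 / ε))] with T hT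
  have hT1 : 1 < T := lt_of_le_of_lt (le_max_left _ _) hT
  have hTe : 1 / ε < T := lt_of_le_of_lt (le_max_right _ _) hT
  have heT : 1 < ε * T := by rw [div_lt_iff₀ hε] at hTe; linarith [mul_comm ε T]
  have h0T : (0:ℝ) < T := by linarith
  have hlogT : Real.log T ≠ 0 := ne_of_gt (Real.log_pos hT1)
  have hlogT1 : Real.log (T + 1) ≠ 0 := ne_of_gt (Real.log_pos (by linarith))
  have hlogeT : Real.log (ε * T) ≠ 0 := ne_of_gt (Real.log_pos heT)
  field_simp
  rw [div_pow, div_pow, mul_right_comm _ _ (Real.log T ^ p), mul_assoc _ (_ / _) (Real.log T ^ p),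
    div_mul_cancel₀ _ (pow_ne_zero _ hlogT), pow_add]
  ring

/-- Theorem 2.3 of the paper: conditional large gaps via the Agarwal–Pang inequality. -/
theorem large_gap_agarwal_pang (k : ℕ) (hk : 1 ≤ k)
    (Z Z' : ℝ → ℝ)
    (hderiv : ∀ t, HasDerivAt Z (Z' t) t) (hcont : Continuous Z')
    (A B : ℝ) (hA : 0 < A) (hB : 0 < B)
    (hmom : Tendsto (fun T : ℝ =>
        (∫ t in (0:ℝ)..T, (Z t) ^ (2 * k)) /
          (T * (Real.log T) ^ (k ^ 2))) atTop (nhds A))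
    (hder : Tendsto (fun T : ℝ =>
        (∫ t in (0:ℝ)..T, (Z' t) ^ (2 * k)) /
          (T * (Real.log T) ^ (k ^ 2 + 2 * k))) atTop (nhds B))
    (c : ℝ) (hc0 : 0 < c)
    (hc : c < (1 / (2 * Real.pi)) *
        ((A / B) * 2 * (Nat.factorial (2 * k)) /
          (Real.Gamma ((2 * k + 1) / 2)) ^ 2) ^ ((1:ℝ) / (2 * k))) :
    ∀ T₀ : ℝ, ∃ a : ℝ, T₀ < a ∧
      ∀ t ∈ Set.Ioo a (a + c * (2 * Real.pi / Real.log a)), Z t ≠ 0 := by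
  intro T₀
  by_contra hcon
  push_neg at hcon
  have hZc : Continuous Z := by
    rw [continuous_iff_continuousAt]; exact fun t => (hderiv t).continuousAt
  have hPc : Continuous fun t => (Z t) ^ (2 * k) := hZc.pow _
  have hQc : Continuous fun t => (Z' t) ^ (2 * k) := hcont.pow _
  have hPnn : ∀ x, (0:ℝ) ≤ (Z x) ^ (2 * k) := fun x => Even.pow_nonneg (even_two_mul k) _
  have hQnn : ∀ x, (0:ℝ) ≤ (Z' x) ^ (2 * k) := fun x => Even.pow_nonneg (even_two_mul k) _
  have hθA : (π * c) ^ (2 * k) / (2 * k) * B < A := theta_lt_A k hk A B c hA hB hc0 hc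
  set D : ℝ := (π * c) ^ (2 * k) / (2 * k) with hD
  set θ : ℝ := D * B with hθ
  have hθ0 : 0 ≤ θ := by
    have : (0:ℝ) ≤ D := by positivity
    exact mul_nonneg this hB.le
  set ε : ℝ := (A - θ) / (4 * A) with hεdef
  have hε0 : 0 < ε := div_pos (by linarith) (by linarith)
  have hε14 : ε ≤ 1 / 4 := by
    rw [hεdef, div_le_div_iff₀ (by linarith) (by norm_num)]
    linarith
  have hεA : 2 * ε * A + θ < A := by
    have h1 : 2 * ε * A = (A - θ) / 2 := by
      rw [hεdef]; field_simp; ring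
    linarith
  -- limits
  have lim1 : Tendsto (fun T => (∫ t in (0:ℝ)..(2 * ε * T), (Z t) ^ (2 * k)) /
      (T * Real.log T ^ (k ^ 2))) atTop (nhds (2 * ε * A)) :=
    lim_scale (fun S => ∫ t in (0:ℝ)..S, (Z t) ^ (2 * k)) (k ^ 2) A hmom (2 * ε)
      (by linarith)
  have lim2 : Tendsto (fun T => D / (Real.log (ε * T)) ^ (2 * k) *
      (∫ t in (0:ℝ)..(T + 1), (Z' t) ^ (2 * k)) / (T * Real.log T ^ (k ^ 2)))
      atTop (nhds θ) :=
    lim_G2 (fun S => ∫ t in (0:ℝ)..S, (Z' t) ^ (2 * k)) (k ^ 2) (2 * k) B hder ε D hε0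
  -- eventual inequality
  have hineq : ∀ᶠ T in atTop,
      (∫ t in (0:ℝ)..T, (Z t) ^ (2 * k)) / (T * Real.log T ^ (k ^ 2)) ≤
      (∫ t in (0:ℝ)..(2 * ε * T), (Z t) ^ (2 * k)) / (T * Real.log T ^ (k ^ 2)) +
      D / (Real.log (ε * T)) ^ (2 * k) *
        (∫ t in (0:ℝ)..(T + 1), (Z' t) ^ (2 * k)) / (T * Real.log T ^ (k ^ 2)) := by
    have hεT : Tendsto (fun T : ℝ => ε * T) atTop atTop :=
      Tendsto.const_mul_atTop hε0 tendsto_id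
    filter_upwards [hεT.eventually_gt_atTop (max T₀ 1),
      (Real.tendsto_log_atTop.comp hεT).eventually_ge_atTop (2 * π * c),
      eventually_ge_atTop (0:ℝ)] with T hT1 hT2 hT0
    have hLT₀ : T₀ < ε * T := lt_of_le_of_lt (le_max_left _ _) hT1
    have hL1 : 1 < ε * T := lt_of_le_of_lt (le_max_right _ _) hT1
    have hlogL : 0 < Real.log (ε * T) := Real.log_pos hL1
    have hT4 : 4 < T := by nlinarith [hε14, hε0]
    have hgb : 2 * π * c ≤ Real.log (ε * T) := hT2
    set L : ℝ := ε * T with hLdef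
    set g : ℝ := c * (2 * π / Real.log L) with hgdef
    have hgpos : 0 < g := by
      rw [hgdef]; positivity
    have hg1 : g ≤ 1 := by
      rw [hgdef, mul_div_assoc' , div_le_one hlogL]
      linarith [hgb]
    have h2εT : 2 * ε * T ≤ T := by nlinarith
    have hεT1 : 1 ≤ ε * T := hL1.le
    -- get z₀
    obtain ⟨z₀, hz₀mem, hz₀zero⟩ := hcon L hLT₀
    have hz₀L : L < z₀ := hz₀mem.1
    have hz₀ub : z₀ < L + g := hz₀mem.2
    have hz₀2εT : z₀ ≤ 2 * ε * T := by
      have : L + g ≤ L + L := by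
        have : g ≤ 1 := hg1
        linarith [hεT1]
      calc z₀ ≤ L + g := hz₀ub.le
        _ ≤ 2 * ε * T := by rw [hLdef] at *; linarith
    have hz₀T : z₀ ≤ T := le_trans hz₀2εT h2εT
    -- next-zero property
    have next : ∀ z, z₀ ≤ z → z ≤ T → Z z = 0 → ∃ w, z < w ∧ w ≤ z + g ∧ Z w = 0 := by
      intro z hz1 hz2 hz
      obtain ⟨w, hwmem, hwzero⟩ := hcon z (by linarith)
      refine ⟨w, hwmem.1, ?_, hwzero⟩
      have hlz : Real.log L ≤ Real.log z := by
        apply Real.log_le_log (by linarith)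
        linarith
      have : c * (2 * π / Real.log z) ≤ g := by
        rw [hgdef]
        apply mul_le_mul_of_nonneg_left _ hc0.le
        apply div_le_div_of_nonneg_left (by positivity) hlogL hlz
      linarith [hwmem.2]
    obtain ⟨w, hTw, hwT, hineqC⟩ :=
      chain Z Z' hderiv hcont k hk g hgpos z₀ T hz₀zero hz₀T next
    -- numerator estimate
    have hz₀0 : (0:ℝ) ≤ z₀ := by linarith
    have add1 : (∫ t in (0:ℝ)..T, (Z t) ^ (2 * k)) =
        (∫ t in (0:ℝ)..z₀, (Z t) ^ (2 * k)) + ∫ t in z₀..T, (Z t) ^ (2 * k) := by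
      rw [intervalIntegral.integral_add_adjacent_intervals
        (hPc.intervalIntegrable _ _) (hPc.intervalIntegrable _ _)]
    have m1 : (∫ t in (0:ℝ)..z₀, (Z t) ^ (2 * k)) ≤
        ∫ t in (0:ℝ)..(2 * ε * T), (Z t) ^ (2 * k) := intmono _ hPc hPnn hz₀2εT
    have m2 : (∫ t in z₀..T, (Z t) ^ (2 * k)) ≤ ∫ t in z₀..w, (Z t) ^ (2 * k) :=
      intmono _ hPc hPnn hTw
    have m3 : (∫ t in z₀..w, (Z' t) ^ (2 * k)) ≤ ∫ t in (0:ℝ)..(T + 1), (Z' t) ^ (2 * k) := by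
      have s1 : (∫ t in z₀..w, (Z' t) ^ (2 * k)) ≤ ∫ t in z₀..(T + 1), (Z' t) ^ (2 * k) :=
        intmono _ hQc hQnn (by linarith)
      have s2 : (∫ t in (0:ℝ)..(T + 1), (Z' t) ^ (2 * k)) =
          (∫ t in (0:ℝ)..z₀, (Z' t) ^ (2 * k)) + ∫ t in z₀..(T + 1), (Z' t) ^ (2 * k) := by
        rw [intervalIntegral.integral_add_adjacent_intervals
          (hQc.intervalIntegrable _ _) (hQc.intervalIntegrable _ _)]
      have s3 : (0:ℝ) ≤ ∫ t in (0:ℝ)..z₀, (Z' t) ^ (2 * k) :=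
        intervalIntegral.integral_nonneg hz₀0 fun x _ => hQnn x
      linarith
    have hCnn : (0:ℝ) ≤ (g / 2) ^ (2 * k) / (2 * k) := by positivity
    have num : (∫ t in (0:ℝ)..T, (Z t) ^ (2 * k)) ≤
        (∫ t in (0:ℝ)..(2 * ε * T), (Z t) ^ (2 * k)) +
          (g / 2) ^ (2 * k) / (2 * k) * ∫ t in (0:ℝ)..(T + 1), (Z' t) ^ (2 * k) := by
      have := mul_le_mul_of_nonneg_left m3 hCnn
      linarith
    -- convert constant
    have hCD : (g / 2) ^ (2 * k) / (2 * k) = D / (Real.log L) ^ (2 * k) := by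
      rw [hgdef, hD]
      rw [show c * (2 * π / Real.log L) / 2 = π * c / Real.log L by field_simp,
        div_pow]
      field_simp
    rw [hCD] at num
    -- divide
    have hdpos : (0:ℝ) < T * Real.log T ^ (k ^ 2) := by
      have hT1' : (1:ℝ) < T := by linarith
      have := Real.log_pos hT1'
      positivity
    calc (∫ t in (0:ℝ)..T, (Z t) ^ (2 * k)) / (T * Real.log T ^ (k ^ 2))
        ≤ ((∫ t in (0:ℝ)..(2 * ε * T), (Z t) ^ (2 * k)) +
            D / (Real.log L) ^ (2 * k) * ∫ t in (0:ℝ)..(T + 1), (Z' t) ^ (2 * k)) /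
            (T * Real.log T ^ (k ^ 2)) := div_le_div_of_nonneg_right num hdpos.le
      _ = (∫ t in (0:ℝ)..(2 * ε * T), (Z t) ^ (2 * k)) / (T * Real.log T ^ (k ^ 2)) +
          D / (Real.log (ε * T)) ^ (2 * k) *
            (∫ t in (0:ℝ)..(T + 1), (Z' t) ^ (2 * k)) / (T * Real.log T ^ (k ^ 2)) := by
          rw [add_div]
  have hfinal : A ≤ 2 * ε * A + θ :=
    le_of_tendsto_of_tendsto hmom (lim1.add lim2) hineq
  linarith
end
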